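/- arXiv:2503.21462 — 9 statements merged into one kernel-verified Lean document; each statement's English description precedes it below -/
import Mathlib

section
/- Let $(V,e)$ be a finite-dimensional symplectic space over $\mathbb{F}_2$, let $U$ and $W$ be two Lagrangian subspaces, and let $\phi:V\to\mathbb{F}_2$ satisfy $e(x,y)=\phi(x+y)+\phi(x)+\phi(y)$ for all $x,y\in V$ and $\phi(U)=\phi(W)=0$. Then there exists a Lagrangian subspace $K$ of $V$ such that $V=U\oplus K$, $\phi(K)=0$, and $W=(U\cap W)\oplus(K\cap W)$. -/
open LinearMap.BilinForm Module Submodule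
set_option maxHeartbeats 1000000

section Aux

variable {V : Type*} [AddCommGroup V] [Module (ZMod 2) V]
  [FiniteDimensional (ZMod 2) V]
  (e : LinearMap.BilinForm (ZMod 2) V)

lemma z2cases : ∀ c : ZMod 2, c = 0 ∨ c = 1 := by decide

lemma z2add : ∀ a b : ZMod 2, a + b = 0 → a = b := by decide

lemma symm_of_alt (halt : ∀ x, e x x = 0) : ∀ x y, e x y = e y x := by
  intro x y
  have h := halt (x + y)
  simp only [map_add, LinearMap.add_apply, halt, zero_add, add_zero] at h
  rw [add_comm] at h
  exact z2add _ _ h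

lemma refl_of_alt (halt : ∀ x, e x x = 0) : e.IsRefl := by
  intro x y h
  rw [← symm_of_alt e halt]; exact h

lemma orth_sup (p q : Submodule (ZMod 2) V) :
    e.orthogonal (p ⊔ q) = e.orthogonal p ⊓ e.orthogonal q := by
  apply le_antisymm
  · exact le_inf (LinearMap.BilinForm.orthogonal_le le_sup_left)
      (LinearMap.BilinForm.orthogonal_le le_sup_right)
  · intro x hx
    rw [Submodule.mem_inf] at hx
    obtain ⟨h1, h2⟩ := hx
    rw [mem_orthogonal_iff]
    intro y hy
    rcases mem_sup.mp hy with ⟨a, ha, b, hb, rfl⟩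
    have ha' : e a x = 0 := mem_orthogonal_iff.mp h1 a ha
    have hb' : e b x = 0 := mem_orthogonal_iff.mp h2 b hb
    show e (a + b) x = 0
    simp [map_add, LinearMap.add_apply, ha', hb']

lemma finrank_sup_span (S : Submodule (ZMod 2) V) (v : V) (hv : v ∉ S) :
    finrank (ZMod 2) ↥(S ⊔ span (ZMod 2) {v}) = finrank (ZMod 2) S + 1 ∧
    S ⊓ span (ZMod 2) {v} = ⊥ := by
  have hv0 : v ≠ 0 := fun h => hv (h ▸ S.zero_mem)
  have hinf : S ⊓ span (ZMod 2) {v} = ⊥ := by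
    rw [eq_bot_iff]
    intro x hx
    rw [Submodule.mem_inf] at hx
    obtain ⟨hxS, hxs⟩ := hx
    rcases mem_span_singleton.mp hxs with ⟨c, rfl⟩
    rcases z2cases c with rfl | rfl
    · simp
    · rw [one_smul] at hxS; exact absurd hxS hv
  refine ⟨?_, hinf⟩
  have h := Submodule.finrank_sup_add_finrank_inf_eq S (span (ZMod 2) {v})
  rw [hinf, finrank_bot, finrank_span_singleton hv0] at h
  omega

lemma extend_lemma
    (hnd : e.Nondegenerate) (halt : ∀ x, e x x = 0)
    (U : Submodule (ZMod 2) V) (hU : e.orthogonal U = U)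
    (φ : V → ZMod 2)
    (hφ : ∀ x y, e x y = φ (x + y) + φ x + φ y)
    (hφU : ∀ x ∈ U, φ x = 0) :
    ∀ (k : ℕ) (T : Submodule (ZMod 2) V),
      finrank (ZMod 2) V - finrank (ZMod 2) T ≤ k →
      T ≤ e.orthogonal T → T ⊓ U = ⊥ → (∀ x ∈ T, φ x = 0) →
      ∃ K : Submodule (ZMod 2) V,
        e.orthogonal K = K ∧ K ⊓ U = ⊥ ∧ T ≤ K ∧ ∀ x ∈ K, φ x = 0 := by
  have hrefl := refl_of_alt e halt
  have hsym := symm_of_alt e halt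
  have hN : finrank (ZMod 2) V = 2 * finrank (ZMod 2) U := by
    have h := LinearMap.BilinForm.finrank_orthogonal hnd U
    rw [hU] at h
    have := Submodule.finrank_le U
    omega
  intro k
  induction k with
  | zero =>
    intro T hk hiso hTU hφT
    have ht : finrank (ZMod 2) T = finrank (ZMod 2) V := by
      have := Submodule.finrank_le T
      omega
    have hTtop : T = ⊤ := Submodule.eq_top_of_finrank_eq ht
    have horthT : e.orthogonal T = ⊥ := by
      rw [hTtop]; exact LinearMap.BilinForm.orthogonal_top_eq_bot hnd
    have hbot : T = ⊥ := le_bot_iff.mp (horthT ▸ hiso)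
    exact ⟨T, horthT.trans hbot.symm, hTU, le_refl _, hφT⟩
  | succ k ih =>
    intro T hk hiso hTU hφT
    by_cases horth : e.orthogonal T = T
    · exact ⟨T, horth, hTU, le_refl _, hφT⟩
    have horthrank : finrank (ZMod 2) (e.orthogonal T)
        = finrank (ZMod 2) V - finrank (ZMod 2) T :=
      LinearMap.BilinForm.finrank_orthogonal hnd T
    have htlt : finrank (ZMod 2) T < finrank (ZMod 2) (e.orthogonal T) := by
      rcases lt_or_eq_of_le (Submodule.finrank_mono hiso) with h | h
      · exact h
      · exact absurd (Submodule.eq_of_le_of_finrank_eq hiso h).symm horth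
    have htn : finrank (ZMod 2) T < finrank (ZMod 2) U := by omega
    have hTUsup : finrank (ZMod 2) ↥(T ⊔ U)
        = finrank (ZMod 2) T + finrank (ZMod 2) U := by
      have h := Submodule.finrank_sup_add_finrank_inf_eq T U
      rw [hTU, finrank_bot] at h
      omega
    have hoTU : e.orthogonal T ⊓ U = e.orthogonal (T ⊔ U) := by
      rw [orth_sup, hU]
    have hoTUrank : finrank (ZMod 2) ↥(e.orthogonal T ⊓ U)
        = finrank (ZMod 2) U - finrank (ZMod 2) T := by
      rw [hoTU, LinearMap.BilinForm.finrank_orthogonal hnd, hTUsup]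
      omega
    have hAle : e.orthogonal T ⊓ (T ⊔ U) ≤ T ⊔ (e.orthogonal T ⊓ U) := by
      intro x hx
      rw [Submodule.mem_inf] at hx
      obtain ⟨hx1, hx2⟩ := hx
      rcases Submodule.mem_sup.mp hx2 with ⟨s, hs, u, hu, rfl⟩
      have hso : s ∈ e.orthogonal T := hiso hs
      have huo : u ∈ e.orthogonal T := by
        have h : u = (s + u) - s := by abel
        rw [h]
        exact Submodule.sub_mem _ hx1 hso
      exact Submodule.mem_sup.mpr
        ⟨s, hs, u, Submodule.mem_inf.mpr ⟨huo, hu⟩, rfl⟩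
    have hArank : finrank (ZMod 2) ↥(e.orthogonal T ⊓ (T ⊔ U))
        ≤ finrank (ZMod 2) U := by
      have h1 := Submodule.finrank_mono hAle
      have h2 := Submodule.finrank_sup_add_finrank_inf_eq T (e.orthogonal T ⊓ U)
      omega
    have hex : ∃ v0, v0 ∈ e.orthogonal T ∧ v0 ∉ T ⊔ U := by
      by_contra hcon
      push_neg at hcon
      have hle : e.orthogonal T ≤ T ⊔ U := fun x hx => hcon x hx
      have heq : e.orthogonal T ⊓ (T ⊔ U) = e.orthogonal T := inf_eq_left.mpr hle
      rw [heq] at hArank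
      omega
    obtain ⟨v0, hv0o, hv0TU⟩ := hex
    have hexv : ∃ v, v ∈ e.orthogonal T ∧ v ∉ T ⊔ U ∧ φ v = 0 := by
      rcases z2cases (φ v0) with h0 | h1
      · exact ⟨v0, hv0o, hv0TU, h0⟩
      · have hexu : ∃ u ∈ e.orthogonal T ⊓ U, e v0 u ≠ 0 := by
          by_contra hcon
          push_neg at hcon
          obtain ⟨hrank1, _⟩ := finrank_sup_span (T ⊔ U) v0 hv0TU
          have hle : e.orthogonal T ⊓ U
              ≤ e.orthogonal ((T ⊔ U) ⊔ span (ZMod 2) {v0}) := by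
            intro x hx
            have hx' := hx
            rw [Submodule.mem_inf] at hx'
            obtain ⟨hx1, hx2⟩ := hx'
            rw [LinearMap.BilinForm.mem_orthogonal_iff]
            intro y hy
            rcases Submodule.mem_sup.mp hy with ⟨a, ha, b, hb, rfl⟩
            rcases Submodule.mem_sup.mp ha with ⟨s, hs, u', hu', rfl⟩
            rcases Submodule.mem_span_singleton.mp hb with ⟨c, rfl⟩
            show e (s + u' + c • v0) x = 0
            have h1' : e s x = 0 :=
              LinearMap.BilinForm.mem_orthogonal_iff.mp hx1 s hs
            have hx2' : x ∈ e.orthogonal U := by rw [hU]; exact hx2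
            have h2' : e u' x = 0 :=
              LinearMap.BilinForm.mem_orthogonal_iff.mp hx2' u' hu'
            have h3' : e v0 x = 0 := hcon x hx
            simp [map_add, LinearMap.add_apply, map_smul, LinearMap.smul_apply,
              h1', h2', h3']
          have hr2 := LinearMap.BilinForm.finrank_orthogonal hnd
            ((T ⊔ U) ⊔ span (ZMod 2) {v0})
          have h1 := Submodule.finrank_mono hle
          rw [hoTUrank, hr2, hrank1, hTUsup] at h1
          omega
        obtain ⟨u, hu, hvu⟩ := hexu
        have hu' := hu
        rw [Submodule.mem_inf] at hu'
        obtain ⟨hu1, hu2⟩ := hu'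
        have hevu : e v0 u = 1 := by
          rcases z2cases (e v0 u) with h | h
          · exact absurd h hvu
          · exact h
        refine ⟨v0 + u, Submodule.add_mem _ hv0o hu1, ?_, ?_⟩
        · intro hmem
          apply hv0TU
          have h : v0 = (v0 + u) - u := by abel
          rw [h]
          exact Submodule.sub_mem _ hmem (Submodule.mem_sup_right hu2)
        · have h := hφ v0 u
          rw [h1, hφU u hu2, hevu, add_zero] at h
          exact right_eq_add.mp h
    obtain ⟨v, hvo, hvTU, hφv⟩ := hexv
    have hvT : v ∉ T := fun h => hvTU (Submodule.mem_sup_left h)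
    obtain ⟨hrankT', hinfT'⟩ := finrank_sup_span T v hvT
    have hisoT' : T ⊔ span (ZMod 2) {v}
        ≤ e.orthogonal (T ⊔ span (ZMod 2) {v}) := by
      intro x hx
      rcases Submodule.mem_sup.mp hx with ⟨s1, hs1, w1, hw1, rfl⟩
      rcases Submodule.mem_span_singleton.mp hw1 with ⟨c1, rfl⟩
      rw [LinearMap.BilinForm.mem_orthogonal_iff]
      intro y hy
      rcases Submodule.mem_sup.mp hy with ⟨s2, hs2, w2, hw2, rfl⟩
      rcases Submodule.mem_span_singleton.mp hw2 with ⟨c2, rfl⟩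
      show e (s2 + c2 • v) (s1 + c1 • v) = 0
      have h1 : e s2 s1 = 0 :=
        LinearMap.BilinForm.mem_orthogonal_iff.mp (hiso hs1) s2 hs2
      have h2 : e s2 v = 0 :=
        LinearMap.BilinForm.mem_orthogonal_iff.mp hvo s2 hs2
      have h3 : e v s1 = 0 := by
        rw [hsym]
        exact LinearMap.BilinForm.mem_orthogonal_iff.mp hvo s1 hs1
      simp [map_add, LinearMap.add_apply, map_smul, LinearMap.smul_apply,
        h1, h2, h3, halt]
    have hT'U : (T ⊔ span (ZMod 2) {v}) ⊓ U = ⊥ := by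
      rw [eq_bot_iff]
      intro x hx
      rw [Submodule.mem_inf] at hx
      obtain ⟨hx1, hx2⟩ := hx
      rcases Submodule.mem_sup.mp hx1 with ⟨s, hs, w1, hw1, rfl⟩
      rcases Submodule.mem_span_singleton.mp hw1 with ⟨c, rfl⟩
      rcases z2cases c with rfl | rfl
      · rw [zero_smul, add_zero] at hx2 ⊢
        have h : s ∈ T ⊓ U := Submodule.mem_inf.mpr ⟨hs, hx2⟩
        rw [hTU] at h
        simpa using h
      · exfalso
        apply hvTU
        rw [one_smul] at hx2
        have h : v = (s + v) - s := by abel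
        rw [h]
        exact Submodule.sub_mem _ (Submodule.mem_sup_right hx2)
          (Submodule.mem_sup_left hs)
    have hφT' : ∀ x ∈ T ⊔ span (ZMod 2) {v}, φ x = 0 := by
      intro x hx
      rcases Submodule.mem_sup.mp hx with ⟨s, hs, w1, hw1, rfl⟩
      rcases Submodule.mem_span_singleton.mp hw1 with ⟨c, rfl⟩
      rcases z2cases c with rfl | rfl
      · rw [zero_smul, add_zero]
        exact hφT s hs
      · rw [one_smul]
        have h := hφ s v
        have hesv : e s v = 0 :=
          LinearMap.BilinForm.mem_orthogonal_iff.mp hvo s hs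
        rw [hesv, hφT s hs, hφv, add_zero, add_zero] at h
        exact h.symm
    have hk' : finrank (ZMod 2) V
        - finrank (ZMod 2) ↥(T ⊔ span (ZMod 2) {v}) ≤ k := by
      rw [hrankT']
      omega
    obtain ⟨K, hK1, hK2, hK3, hK4⟩ := ih (T ⊔ span (ZMod 2) {v}) hk' hisoT' hT'U hφT'
    exact ⟨K, hK1, hK2, le_trans le_sup_left hK3, hK4⟩

end Aux

/-- Swinnerton-Dyer's Lemma 2: existence of a Lagrangian complement `K`
of `U` with `φ(K) = 0` and `W = (U ∩ W) ⊕ (K ∩ W)`. -/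
theorem stmt_2 (V : Type*) [AddCommGroup V] [Module (ZMod 2) V]
    [FiniteDimensional (ZMod 2) V]
    (e : LinearMap.BilinForm (ZMod 2) V)
    (hnd : LinearMap.BilinForm.Nondegenerate e)
    (halt : ∀ x, e x x = 0)
    (U W : Submodule (ZMod 2) V)
    (hU : LinearMap.BilinForm.orthogonal e U = U)
    (hW : LinearMap.BilinForm.orthogonal e W = W)
    (φ : V → ZMod 2)
    (hφ : ∀ x y, e x y = φ (x + y) + φ x + φ y)
    (hφU : ∀ x ∈ U, φ x = 0) (hφW : ∀ x ∈ W, φ x = 0) :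
    ∃ K : Submodule (ZMod 2) V,
      LinearMap.BilinForm.orthogonal e K = K ∧
      IsCompl U K ∧
      (∀ x ∈ K, φ x = 0) ∧
      (U ⊓ W) ⊔ (K ⊓ W) = W := by
  have hrefl := refl_of_alt e halt
  have hN : finrank (ZMod 2) V = 2 * finrank (ZMod 2) U := by
    have h := LinearMap.BilinForm.finrank_orthogonal hnd U
    rw [hU] at h
    have := Submodule.finrank_le U
    omega
  obtain ⟨q, hq⟩ := Submodule.exists_isCompl ((U ⊓ W).comap W.subtype)
  set T := q.map W.subtype with hTdef
  have hTW : T ≤ W := Submodule.map_subtype_le _ _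
  have hmapcomap : ((U ⊓ W).comap W.subtype).map W.subtype = U ⊓ W := by
    rw [Submodule.map_comap_subtype]
    exact inf_eq_right.mpr inf_le_right
  have hsupT : (U ⊓ W) ⊔ T = W := by
    have h := congrArg (Submodule.map W.subtype) hq.codisjoint.eq_top
    rw [Submodule.map_sup, hmapcomap, Submodule.map_top, Submodule.range_subtype] at h
    exact h
  have hinfT : (U ⊓ W) ⊓ T = ⊥ := by
    rw [eq_bot_iff]
    intro x hx
    rw [Submodule.mem_inf] at hx
    obtain ⟨hx1, hx2⟩ := hx
    rcases Submodule.mem_map.mp hx2 with ⟨y, hy, rfl⟩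
    have hy' : y ∈ (U ⊓ W).comap W.subtype := Submodule.mem_comap.mpr hx1
    have h0 : (U ⊓ W).comap W.subtype ⊓ q = ⊥ := hq.disjoint.eq_bot
    have hy0 : y ∈ (⊥ : Submodule (ZMod 2) W) := by
      rw [← h0]
      exact Submodule.mem_inf.mpr ⟨hy', hy⟩
    rw [Submodule.mem_bot] at hy0
    rw [Submodule.mem_bot]
    show W.subtype y = 0
    rw [hy0]
    simp
  have hTU : T ⊓ U = ⊥ := by
    rw [eq_bot_iff]
    intro x hx
    rw [Submodule.mem_inf] at hx
    obtain ⟨hx1, hx2⟩ := hx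
    have h : x ∈ (U ⊓ W) ⊓ T :=
      Submodule.mem_inf.mpr ⟨Submodule.mem_inf.mpr ⟨hx2, hTW hx1⟩, hx1⟩
    rw [hinfT] at h
    exact h
  have hTiso : T ≤ LinearMap.BilinForm.orthogonal e T := by
    calc T ≤ W := hTW
    _ = LinearMap.BilinForm.orthogonal e W := hW.symm
    _ ≤ LinearMap.BilinForm.orthogonal e T := LinearMap.BilinForm.orthogonal_le hTW
  have hφT : ∀ x ∈ T, φ x = 0 := fun x hx => hφW x (hTW hx)
  obtain ⟨K, hK1, hK2, hK3, hK4⟩ :=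
    extend_lemma e hnd halt U hU φ hφ hφU (finrank (ZMod 2) V) T
      (Nat.sub_le _ _) hTiso hTU hφT
  refine ⟨K, hK1, ?_, hK4, ?_⟩
  · have hKrank : finrank (ZMod 2) K = finrank (ZMod 2) U := by
      have h := LinearMap.BilinForm.finrank_orthogonal hnd K
      rw [hK1] at h
      have := Submodule.finrank_le K
      omega
    have hdis : Disjoint U K := by
      rw [disjoint_iff, inf_comm]
      exact hK2
    refine ⟨hdis, ?_⟩
    rw [codisjoint_iff]
    apply Submodule.eq_top_of_finrank_eq
    have h := Submodule.finrank_sup_add_finrank_inf_eq U K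
    rw [inf_comm, hK2, finrank_bot] at h
    omega
  · apply le_antisymm
    · exact sup_le inf_le_right inf_le_right
    · calc W = (U ⊓ W) ⊔ T := hsupT.symm
      _ ≤ (U ⊓ W) ⊔ (K ⊓ W) := sup_le_sup_left (le_inf hK3 hTW) _
end

section
/- Let $(V,e)$ be a symplectic space over $\mathbb{F}_2$ and let $W,U,K$ be three Lagrangian subspaces with $V=U\oplus K$. Define $\theta:W/(W\cap K)\times W/(W\cap K)\to\mathbb{F}_2$ by $\theta(\bar x,\bar y)=e(x_U,y_K)$, where $x=x_U+x_K$ and $y=y_U+y_K$ are the decompositions according to $V=U\oplus K$. Then $\theta$ is well-defined and symmetric, and the natural projection $W\twoheadrightarrow W/(W\cap K)$ induces an isomorphism $W\cap U\cong\ker(\theta)$. -/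
/-- for three Lagrangians `W, U, K` with `V = U ⊕ K`, the pairing
`θ(x̄,ȳ) = e(x_U, y_K)` on `W/(W ∩ K)` is well defined and symmetric, and the
projection identifies `W ∩ U` with the kernel of `θ`: the radical of `θ` on `W` is
`(U ∩ W) + (K ∩ W)`, with `(U ∩ W)` and `(K ∩ W)` disjoint. -/
theorem stmt_3 (V : Type*) [AddCommGroup V] [Module (ZMod 2) V]
    [FiniteDimensional (ZMod 2) V]
    (e : LinearMap.BilinForm (ZMod 2) V)
    (hnd : LinearMap.BilinForm.Nondegenerate e)
    (halt : ∀ x, e x x = 0)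
    (U W K : Submodule (ZMod 2) V)
    (hU : LinearMap.BilinForm.orthogonal e U = U)
    (hW : LinearMap.BilinForm.orthogonal e W = W)
    (hK : LinearMap.BilinForm.orthogonal e K = K)
    (hUK : IsCompl U K)
    (πU πK : V →ₗ[ZMod 2] V)
    (hπU : ∀ x, πU x ∈ U) (hπK : ∀ x, πK x ∈ K)
    (hsum : ∀ x, πU x + πK x = x) :
    (∀ x ∈ W, ∀ y ∈ W, x ∈ K → e (πU x) (πK y) = 0 ∧ e (πU y) (πK x) = 0) ∧
    (∀ x ∈ W, ∀ y ∈ W, e (πU x) (πK y) = e (πU y) (πK x)) ∧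
    Disjoint (U ⊓ W) (K ⊓ W) ∧
    (∀ x ∈ W, (∀ y ∈ W, e (πU x) (πK y) = 0) ↔ x ∈ (U ⊓ W) ⊔ (K ⊓ W)) := by
  -- symmetry of e in characteristic 2
  have hsym : ∀ a b, e a b = e b a := by
    intro a b
    have h := halt (a + b)
    simp only [map_add, LinearMap.add_apply, halt, zero_add, add_zero] at h
    rw [eq_neg_of_add_eq_zero_left h, CharTwo.neg_eq]
  -- Lagrangian vanishing
  have hlag : ∀ (N : Submodule (ZMod 2) V),
      LinearMap.BilinForm.orthogonal e N = N →
      ∀ a ∈ N, ∀ b ∈ N, e a b = 0 := by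
    intro N hN a ha b hb
    rw [← hN] at hb
    exact hb a ha
  have hU0 := hlag U hU
  have hW0 := hlag W hW
  have hK0 := hlag K hK
  have hdisj : ∀ v, v ∈ U → v ∈ K → v = 0 := fun v hvU hvK =>
    (Submodule.disjoint_def.mp hUK.disjoint) v hvU hvK
  have hsub : ∀ x, πU x = x - πK x := by
    intro x; exact eq_sub_of_add_eq (hsum x)
  have hsubK : ∀ x, πK x = x - πU x := by
    intro x
    have := hsum x
    rw [add_comm] at this
    exact eq_sub_of_add_eq this
  -- if x ∈ K then πU x = 0
  have hπUK : ∀ x, x ∈ K → πU x = 0 := by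
    intro x hx
    refine hdisj _ (hπU x) ?_
    rw [hsub x]
    exact sub_mem hx (hπK x)
  -- if x ∈ U then πK x = 0
  have hπKU : ∀ x, x ∈ U → πK x = 0 := by
    intro x hx
    refine hdisj _ ?_ (hπK x)
    rw [hsubK x]
    exact sub_mem hx (hπU x)
  refine ⟨?_, ?_, ?_, ?_⟩
  · -- well-definedness
    intro x hxW y hyW hxK
    constructor
    · rw [hπUK x hxK]; simp
    · have hKx : πK x = x := by rw [hsubK x, hπUK x hxK, sub_zero]
      rw [hKx, hsub y, map_sub, LinearMap.sub_apply,
        hW0 y hyW x hxW, hK0 _ (hπK y) x hxK, sub_zero]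
  · -- symmetry of θ
    intro x hxW y hyW
    have h : e x y = 0 := hW0 x hxW y hyW
    rw [← hsum x, ← hsum y] at h
    simp only [map_add, LinearMap.add_apply] at h
    rw [hU0 _ (hπU x) _ (hπU y), hK0 _ (hπK x) _ (hπK y), zero_add, add_zero] at h
    rw [eq_neg_of_add_eq_zero_right h, CharTwo.neg_eq, hsym]
  · -- disjointness
    rw [Submodule.disjoint_def]
    intro v hv1 hv2
    exact hdisj v hv1.1 hv2.1
  · -- kernel description
    intro x hxW
    constructor
    · intro h
      have hUxW : πU x ∈ W := by
        rw [← hW]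
        intro n hn
        have : e (πU x) n = 0 := by
          rw [← hsum n, map_add, hU0 _ (hπU x) _ (hπU n), zero_add]
          exact h n hn
        show e n (πU x) = 0
        rw [hsym]
        exact this
      have hKxW : πK x ∈ W := by
        rw [hsubK x]; exact sub_mem hxW hUxW
      have : x = πU x + πK x := (hsum x).symm
      rw [this]
      exact Submodule.add_mem_sup ⟨hπU x, hUxW⟩ ⟨hπK x, hKxW⟩
    · intro hx y hyW
      obtain ⟨u, hu, k, hk, rfl⟩ := Submodule.mem_sup.mp hx
      have hπu : πU (u + k) = u := by
        rw [map_add, hπUK k hk.1, add_zero, hsub u, hπKU u hu.1, sub_zero]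
      rw [hπu, hsubK y, map_sub, hW0 u hu.2 y hyW, hU0 u hu.1 _ (hπU y), sub_zero]
end

section
/- Fix integers $m\geq 0$, $k\geq 2$, and matrices $X,Y\in M_{m\times(k-1)}(\mathbb{F}_2)$ with $\mathrm{rank}(X)=r$. Let the entries $a_{ij}$ for $1\leq i\leq j\leq k-1$ be chosen independently and uniformly in $\mathbb{F}_2$, and let $A'$ be the $(k-1)\times(k-1)$ matrix with entries $a_{ij}$ for $i\leq j$ and with $a_{ji}$ for $i>j$ determined by fixed values $a_{ji}=a_{ij}+c_{ij}$ for fixed constants $c_{ij}\in\mathbb{F}_2$. Then $\mathbb{P}(XA'=Y)\leq 2^{-rk+r(r+1)/2}$. -/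
open Finset Matrix



lemma exists_good_J {m n : ℕ} (X : Matrix (Fin m) (Fin n) (ZMod 2)) (r : ℕ) (hr : X.rank = r) :
    ∃ J : Finset (Fin n), J.card = r ∧
      ∀ w : Fin n → ZMod 2, X.mulVec w = 0 → (∀ i ∉ J, w i = 0) → w = 0 := by
  classical
  set col : Fin n → (Fin m → ZMod 2) := fun j i => X i j with hcol
  have hrange : Set.range X.transpose = Set.range col := rfl
  obtain ⟨t, hts, hspan, hli⟩ := exists_linearIndependent (ZMod 2) (Set.range col)
  have htfin : t.Finite := (Set.finite_range col).subset hts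
  haveI : Fintype t := htfin.fintype
  have hcard : t.toFinset.card = r := by
    rw [← finrank_span_set_eq_card hli, hspan, ← hr, Matrix.rank_eq_finrank_span_cols]; rfl
  have hpre : ∀ v ∈ t, ∃ j, col j = v := fun v hv => hts hv
  choose g hg using hpre
  set J : Finset (Fin n) := t.toFinset.attach.image (fun v => g v.1 (Set.mem_toFinset.mp v.2)) with hJ
  have hmemJ : ∀ j, j ∈ J ↔ ∃ v : t.toFinset, g v.1 (Set.mem_toFinset.mp v.2) = j := by
    intro j; simp [hJ]
  refine ⟨J, ?_, ?_⟩
  · rw [hJ, Finset.card_image_of_injective _ ?_, Finset.card_attach, hcard]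
    intro v w hvw
    have h := congrArg col hvw
    dsimp only at h
    rw [hg v.1 _, hg w.1 _] at h
    exact Subtype.ext h
  · intro w hw hsupp
    have hmemt : ∀ j : J, col j ∈ t := by
      intro j
      obtain ⟨v, hv⟩ := (hmemJ j).mp j.2
      rw [← hv, hg]; exact Set.mem_toFinset.mp v.2
    have hinj : Function.Injective (fun j : J => (⟨col j, hmemt j⟩ : t)) := by
      intro a b hab
      obtain ⟨va, hva⟩ := (hmemJ a).mp a.2
      obtain ⟨vb, hvb⟩ := (hmemJ b).mp b.2
      have h1 : col (a : Fin n) = col (b : Fin n) := congrArg Subtype.val hab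
      have h2 : (va : Fin m → ZMod 2) = vb := by
        rw [← hg va.1 (Set.mem_toFinset.mp va.2), ← hg vb.1 (Set.mem_toFinset.mp vb.2), hva, hvb]
        exact h1
      have h3 : va = vb := Subtype.ext h2
      apply Subtype.ext
      rw [← hva, ← hvb, h3]
    have hliJ : LinearIndependent (ZMod 2) (fun j : J => col j) := hli.comp _ hinj
    have hsum : ∑ j : J, w j • col j = 0 := by
      rw [Finset.sum_coe_sort J (fun j => w j • col j)]
      have h4 : ∑ j ∈ J, w j • col j = ∑ j, w j • col j := by
        apply Finset.sum_subset (Finset.subset_univ J)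
        intro x _ hx
        rw [hsupp x hx, zero_smul]
      rw [h4, ← hw]
      funext i
      simp [Matrix.mulVec, dotProduct, Finset.sum_apply, mul_comm]; rfl
    have hz := Fintype.linearIndependent_iff.mp hliJ (fun j : J => w j) hsum
    funext i
    by_cases hi : i ∈ J
    · exact hz ⟨i, hi⟩
    · exact hsupp i hi


lemma pairs_count {n : ℕ} (U : Finset (Fin n)) :
    2 * ((U ×ˢ U).filter (fun p => p.1 ≤ p.2)).card = U.card * U.card + U.card := by
  classical
  have hswap : ((U ×ˢ U).filter (fun p => p.1 < p.2)).card
      = ((U ×ˢ U).filter (fun p => ¬ p.1 ≤ p.2)).card := by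
    refine Finset.card_bij' (fun p _ => p.swap) (fun p _ => p.swap) ?_ ?_
      (fun a ha => rfl) (fun a ha => rfl)
    · intro a ha
      simp only [mem_filter, mem_product] at ha ⊢
      exact ⟨⟨ha.1.2, ha.1.1⟩, not_le.mpr ha.2⟩
    · intro a ha
      simp only [mem_filter, mem_product] at ha ⊢
      exact ⟨⟨ha.1.2, ha.1.1⟩, not_le.mp ha.2⟩
  have hdiag : ((U ×ˢ U).filter (fun p => p.1 = p.2)).card = U.card := by
    rw [show ((U ×ˢ U).filter (fun p => p.1 = p.2)) = U.image (fun i => (i, i)) by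
      ext p; simp only [mem_filter, mem_product, mem_image]
      constructor
      · rintro ⟨⟨h1, _⟩, h3⟩
        exact ⟨p.1, h1, by obtain ⟨a, b⟩ := p; cases h3; rfl⟩
      · rintro ⟨i, hi, rfl⟩; exact ⟨⟨hi, hi⟩, rfl⟩]
    exact Finset.card_image_of_injective _ (fun a b h => (Prod.mk.injEq _ _ _ _).mp h |>.1
      )
  have hsplit : ((U ×ˢ U).filter (fun p => p.1 ≤ p.2)).card
      = ((U ×ˢ U).filter (fun p => p.1 < p.2)).card + U.card := by
    rw [← hdiag, ← Finset.card_union_of_disjoint]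
    · congr 1
      ext p
      simp only [mem_union, mem_filter, mem_product]
      constructor
      · rintro ⟨hm, hle⟩
        rcases lt_or_eq_of_le hle with h | h
        · exact Or.inl ⟨hm, h⟩
        · exact Or.inr ⟨hm, h⟩
      · rintro (⟨hm, h⟩ | ⟨hm, h⟩)
        · exact ⟨hm, le_of_lt h⟩
        · exact ⟨hm, le_of_eq h⟩
    · rw [Finset.disjoint_filter]
      intro p _ hlt heq
      exact absurd heq (ne_of_lt hlt)
  have htot : ((U ×ˢ U).filter (fun p => p.1 ≤ p.2)).card
      + ((U ×ˢ U).filter (fun p => ¬ p.1 ≤ p.2)).card = U.card * U.card := by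
    rw [Finset.card_filter_add_card_filter_not, Finset.card_product]
  omega

lemma pairs_count_lt (n : ℕ) :
    2 * ((Finset.univ : Finset (Fin n × Fin n)).filter (fun p => ¬ p.1 ≤ p.2)).card
      = n * n - n := by
  classical
  have h1 := pairs_count (Finset.univ : Finset (Fin n))
  have h2 : ((Finset.univ ×ˢ Finset.univ : Finset (Fin n × Fin n)).filter (fun p => p.1 ≤ p.2)).card
      + ((Finset.univ ×ˢ Finset.univ : Finset (Fin n × Fin n)).filter (fun p => ¬ p.1 ≤ p.2)).card
      = n * n := by
    rw [Finset.card_filter_add_card_filter_not, Finset.card_product, Finset.card_univ,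
      Fintype.card_fin]
  rw [Finset.card_univ, Fintype.card_fin] at h1
  rw [show (Finset.univ : Finset (Fin n × Fin n)) = Finset.univ ×ˢ Finset.univ from
    (Finset.univ_product_univ).symm]
  omega

def symMat {n : ℕ} (f : Matrix (Fin n) (Fin n) (ZMod 2)) : Matrix (Fin n) (Fin n) (ZMod 2) :=
  Matrix.of fun i j => if (i : ℕ) ≤ (j : ℕ) then f i j else f j i

lemma symMat_sub {n : ℕ} (f g : Matrix (Fin n) (Fin n) (ZMod 2)) :
    symMat (f - g) = symMat f - symMat g := by
  ext i j
  by_cases h : i ≤ j <;> simp [symMat, h]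

lemma sym_zero {m n : ℕ} (X : Matrix (Fin m) (Fin n) (ZMod 2)) (J : Finset (Fin n))
    (hJ : ∀ w : Fin n → ZMod 2, X.mulVec w = 0 → (∀ i ∉ J, w i = 0) → w = 0)
    (h : Matrix (Fin n) (Fin n) (ZMod 2)) (hker : X * symMat h = 0)
    (hlow : ∀ i j : Fin n, ¬ (i : ℕ) ≤ (j : ℕ) → h i j = 0)
    (hup : ∀ i j : Fin n, (i : ℕ) ≤ (j : ℕ) → i ∉ J → j ∉ J → h i j = 0) : h = 0 := by
  set S := symMat h with hS
  have hScols : ∀ j, X.mulVec (fun l => S l j) = 0 := by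
    intro j
    funext i
    have h0 := congrFun (congrFun hker i) j
    simpa [Matrix.mulVec, Matrix.mul_apply, dotProduct] using h0
  have hSsym : ∀ i j, S i j = S j i := by
    intro i j
    by_cases hij : i ≤ j <;> by_cases hji : j ≤ i
    · have : i = j := le_antisymm hij hji; rw [this]
    · simp [hS, symMat, hij, hji]
    · simp [hS, symMat, hij, hji]
    · exact absurd (le_of_not_ge hij) hji
  have hSoffJ : ∀ i j, i ∉ J → j ∉ J → S i j = 0 := by
    intro i j hi hj
    by_cases hij : i ≤ j
    · simpa [hS, symMat, hij] using hup i j hij hi hj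
    · have hji : j ≤ i := le_of_not_ge hij
      simpa [hS, symMat, hij] using hup j i hji hj hi
  have hcol0 : ∀ j ∉ J, (fun l => S l j) = 0 :=
    fun j hj => hJ _ (hScols j) (fun i hi => hSoffJ i j hi hj)
  have hSoff : ∀ i j, i ∉ J → S i j = 0 := by
    intro i j hi
    rw [hSsym]
    exact congrFun (hcol0 i hi) j
  have hS0 : ∀ j, (fun l => S l j) = 0 :=
    fun j => hJ _ (hScols j) (fun i hi => hSoff i j hi)
  funext i j
  by_cases hij : i ≤ j
  · have h1 : S i j = 0 := congrFun (hS0 j) i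
    simpa [hS, symMat, hij] using h1
  · exact hlow i j hij

lemma exp_arith (n r A B : ℕ) (hrn : r ≤ n) (hA : 2 * A = n * n - n)
    (hB : 2 * B = (n - r) * (n - r) + (n - r)) :
    A + B + r * (n + 1) = r * (r + 1) / 2 + n * n := by
  obtain ⟨u, rfl⟩ := Nat.exists_eq_add_of_le hrn
  rw [Nat.add_sub_cancel_left] at hB
  have h2 : 2 * (r * (r + 1) / 2) = r * (r + 1) :=
    Nat.mul_div_cancel' (Nat.even_mul_succ_self r).two_dvd
  have hn : (r + u) ≤ (r + u) * (r + u) := by nlinarith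
  apply Nat.eq_of_mul_eq_mul_left (show 0 < 2 by norm_num)
  rw [Nat.mul_add 2 (r * (r + 1) / 2), h2]
  zify [hn] at hA hB ⊢
  linear_combination hA + hB

/-- for fixed `X, Y` with `rank X = r`, the probability over the
independent uniform upper-triangular entries (the lower entries being determined
by fixed constants `c`) that `X * A' = Y` is at most `2^(r(r+1)/2 - rk)`. -/
theorem stmt_5 (m k : ℕ) (hk : 2 ≤ k)
    (X Y : Matrix (Fin m) (Fin (k - 1)) (ZMod 2))
    (c : Matrix (Fin (k - 1)) (Fin (k - 1)) (ZMod 2))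
    (r : ℕ) (hr : X.rank = r) :
    (Nat.card {f : Matrix (Fin (k - 1)) (Fin (k - 1)) (ZMod 2) //
        X * (Matrix.of fun (i j : Fin (k - 1)) =>
          if (i : ℕ) ≤ (j : ℕ) then f i j else f j i + c i j) = Y} : ℝ)
      / (Nat.card (Matrix (Fin (k - 1)) (Fin (k - 1)) (ZMod 2)) : ℝ)
      ≤ (2 : ℝ) ^ (r * (r + 1) / 2) / (2 : ℝ) ^ (r * k) := by
  classical
  have hk1 : k - 1 + 1 = k := by omega
  have hrn : r ≤ k - 1 := hr ▸ Matrix.rank_le_width X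
  obtain ⟨J, hJcard, hJ⟩ := exists_good_J X r hr
  set C0 : Matrix (Fin (k - 1)) (Fin (k - 1)) (ZMod 2) :=
    Matrix.of fun i j => if (i : ℕ) ≤ (j : ℕ) then 0 else c i j with hC0
  set Y' := Y - X * C0 with hY'
  -- Step 0 : reformulate the condition
  have step0 : ∀ f : Matrix (Fin (k - 1)) (Fin (k - 1)) (ZMod 2),
      (X * (Matrix.of fun (i j : Fin (k - 1)) =>
        if (i : ℕ) ≤ (j : ℕ) then f i j else f j i + c i j) = Y) ↔ (X * symMat f = Y') := by
    intro f
    have hdecomp : (Matrix.of fun (i j : Fin (k - 1)) =>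
        if (i : ℕ) ≤ (j : ℕ) then f i j else f j i + c i j) = symMat f + C0 := by
      ext i j
      by_cases h : i ≤ j <;> simp [symMat, hC0, h]
    rw [hdecomp, Matrix.mul_add, hY']
    exact eq_sub_iff_add_eq.symm
  have hcard1 : Nat.card {f : Matrix (Fin (k - 1)) (Fin (k - 1)) (ZMod 2) //
      X * (Matrix.of fun (i j : Fin (k - 1)) =>
        if (i : ℕ) ≤ (j : ℕ) then f i j else f j i + c i j) = Y}
      = Nat.card {f : Matrix (Fin (k - 1)) (Fin (k - 1)) (ZMod 2) // X * symMat f = Y'} :=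
    Nat.card_congr (Equiv.subtypeEquivRight step0)
  -- Step 1 : reduce to the kernel
  have hcard2 : Nat.card {f : Matrix (Fin (k - 1)) (Fin (k - 1)) (ZMod 2) // X * symMat f = Y'}
      ≤ Nat.card {f : Matrix (Fin (k - 1)) (Fin (k - 1)) (ZMod 2) // X * symMat f = 0} := by
    rcases isEmpty_or_nonempty
      {f : Matrix (Fin (k - 1)) (Fin (k - 1)) (ZMod 2) // X * symMat f = Y'} with he | hne
    · rw [Nat.card_of_isEmpty]; exact Nat.zero_le _
    · obtain ⟨f0, hf0⟩ := hne
      apply Nat.card_le_card_of_injective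
        (fun f : {f : Matrix (Fin (k - 1)) (Fin (k - 1)) (ZMod 2) // X * symMat f = Y'} =>
          (⟨f.1 - f0, by rw [symMat_sub, Matrix.mul_sub, f.2, hf0, sub_self]⟩ :
            {f : Matrix (Fin (k - 1)) (Fin (k - 1)) (ZMod 2) // X * symMat f = 0}))
      intro a b hab
      apply Subtype.ext
      have := congrArg Subtype.val hab
      simpa [sub_left_inj] using this
  -- Step 2 : kernel injects into a product of function spaces
  obtain ⟨A, hA⟩ : ∃ A, Nat.card {p : Fin (k - 1) × Fin (k - 1) //
      ¬ (p.1 : ℕ) ≤ (p.2 : ℕ)} = A := ⟨_, rfl⟩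
  obtain ⟨B, hB⟩ : ∃ B, Nat.card {p : Fin (k - 1) × Fin (k - 1) //
      (p.1 : ℕ) ≤ (p.2 : ℕ) ∧ p.1 ∉ J ∧ p.2 ∉ J} = B := ⟨_, rfl⟩
  have hcard3 : Nat.card {f : Matrix (Fin (k - 1)) (Fin (k - 1)) (ZMod 2) // X * symMat f = 0}
      ≤ 2 ^ A * 2 ^ B := by
    have hinj : Function.Injective
        (fun f : {f : Matrix (Fin (k - 1)) (Fin (k - 1)) (ZMod 2) // X * symMat f = 0} =>
          ((fun p : {p : Fin (k - 1) × Fin (k - 1) // ¬ (p.1 : ℕ) ≤ (p.2 : ℕ)} =>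
              f.1 p.1.1 p.1.2,
            fun p : {p : Fin (k - 1) × Fin (k - 1) //
              (p.1 : ℕ) ≤ (p.2 : ℕ) ∧ p.1 ∉ J ∧ p.2 ∉ J} => f.1 p.1.1 p.1.2) :
            ({p : Fin (k - 1) × Fin (k - 1) // ¬ (p.1 : ℕ) ≤ (p.2 : ℕ)} → ZMod 2) ×
            ({p : Fin (k - 1) × Fin (k - 1) //
              (p.1 : ℕ) ≤ (p.2 : ℕ) ∧ p.1 ∉ J ∧ p.2 ∉ J} → ZMod 2))) := by
      intro f g hfg
      apply Subtype.ext
      have hz : f.1 - g.1 = 0 := by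
        apply sym_zero X J hJ
        · rw [symMat_sub, Matrix.mul_sub, f.2, g.2, sub_self]
        · intro i j hij
          have h1 := congrFun (congrArg Prod.fst hfg) ⟨(i, j), hij⟩
          simpa [Matrix.sub_apply, sub_eq_zero] using h1
        · intro i j hij hi hj
          have h1 := congrFun (congrArg Prod.snd hfg) ⟨(i, j), ⟨hij, hi, hj⟩⟩
          simpa [Matrix.sub_apply, sub_eq_zero] using h1
      exact sub_eq_zero.mp hz
    calc Nat.card {f : Matrix (Fin (k - 1)) (Fin (k - 1)) (ZMod 2) // X * symMat f = 0}
        ≤ Nat.card (({p : Fin (k - 1) × Fin (k - 1) // ¬ (p.1 : ℕ) ≤ (p.2 : ℕ)} → ZMod 2) ×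
            ({p : Fin (k - 1) × Fin (k - 1) //
              (p.1 : ℕ) ≤ (p.2 : ℕ) ∧ p.1 ∉ J ∧ p.2 ∉ J} → ZMod 2)) :=
          Nat.card_le_card_of_injective _ hinj
      _ = 2 ^ A * 2 ^ B := by
          rw [Nat.card_prod, Nat.card_fun, Nat.card_fun, ← hA, ← hB,
            Nat.card_eq_fintype_card (α := ZMod 2), ZMod.card]
  -- Step 3 : compute the exponents
  have hAval : 2 * A = (k - 1) * (k - 1) - (k - 1) := by
    rw [← hA, Nat.card_eq_fintype_card, Fintype.card_subtype]
    have heq : (Finset.univ.filter fun p : Fin (k - 1) × Fin (k - 1) =>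
        ¬ (p.1 : ℕ) ≤ (p.2 : ℕ))
        = (Finset.univ.filter fun p : Fin (k - 1) × Fin (k - 1) => ¬ p.1 ≤ p.2) := by
      apply Finset.filter_congr
      intro x _
      exact Iff.rfl
    rw [heq]
    exact pairs_count_lt (k - 1)
  have hBval : 2 * B = (k - 1 - r) * (k - 1 - r) + (k - 1 - r) := by
    rw [← hB, Nat.card_eq_fintype_card, Fintype.card_subtype]
    have heq : (Finset.univ.filter fun p : Fin (k - 1) × Fin (k - 1) =>
        (p.1 : ℕ) ≤ (p.2 : ℕ) ∧ p.1 ∉ J ∧ p.2 ∉ J)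
        = ((Jᶜ ×ˢ Jᶜ).filter fun p : Fin (k - 1) × Fin (k - 1) => p.1 ≤ p.2) := by
      ext p
      simp only [Finset.mem_filter, Finset.mem_univ, true_and, Finset.mem_product,
        Finset.mem_compl, Fin.le_def]
      tauto
    rw [heq, pairs_count Jᶜ]
    have hcc : Jᶜ.card = k - 1 - r := by
      rw [Finset.card_compl, hJcard, Fintype.card_fin]
    rw [hcc]
  have hexp : A + B + r * k = r * (r + 1) / 2 + (k - 1) * (k - 1) := by
    have := exp_arith (k - 1) r A B hrn hAval hBval
    rw [hk1] at this
    exact this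
  -- Step 4 : total count
  have hTot : Nat.card (Matrix (Fin (k - 1)) (Fin (k - 1)) (ZMod 2))
      = 2 ^ ((k - 1) * (k - 1)) := by
    have h0 : Nat.card (Matrix (Fin (k - 1)) (Fin (k - 1)) (ZMod 2))
        = Nat.card (Fin (k - 1) → Fin (k - 1) → ZMod 2) := rfl
    rw [h0, Nat.card_eq_fintype_card, Fintype.card_fun, Fintype.card_fun, ZMod.card,
      Fintype.card_fin, ← pow_mul, mul_comm]
  -- Step 5 : conclude
  have key : Nat.card {f : Matrix (Fin (k - 1)) (Fin (k - 1)) (ZMod 2) //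
      X * (Matrix.of fun (i j : Fin (k - 1)) =>
        if (i : ℕ) ≤ (j : ℕ) then f i j else f j i + c i j) = Y} * 2 ^ (r * k)
      ≤ 2 ^ (r * (r + 1) / 2) * 2 ^ ((k - 1) * (k - 1)) := by
    calc Nat.card {f : Matrix (Fin (k - 1)) (Fin (k - 1)) (ZMod 2) //
        X * (Matrix.of fun (i j : Fin (k - 1)) =>
          if (i : ℕ) ≤ (j : ℕ) then f i j else f j i + c i j) = Y} * 2 ^ (r * k)
        ≤ (2 ^ A * 2 ^ B) * 2 ^ (r * k) := by
          apply Nat.mul_le_mul_right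
          rw [hcard1]
          exact le_trans hcard2 hcard3
      _ = 2 ^ (A + B + r * k) := by rw [pow_add, pow_add]
      _ = 2 ^ (r * (r + 1) / 2 + (k - 1) * (k - 1)) := by rw [hexp]
      _ = 2 ^ (r * (r + 1) / 2) * 2 ^ ((k - 1) * (k - 1)) := by rw [pow_add]
  have hTotR : (Nat.card (Matrix (Fin (k - 1)) (Fin (k - 1)) (ZMod 2)) : ℝ)
      = 2 ^ ((k - 1) * (k - 1)) := by
    rw [hTot]; push_cast; ring
  rw [hTotR, div_le_div_iff₀ (by positivity) (by positivity)]
  calc (Nat.card {f : Matrix (Fin (k - 1)) (Fin (k - 1)) (ZMod 2) //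
      X * (Matrix.of fun (i j : Fin (k - 1)) =>
        if (i : ℕ) ≤ (j : ℕ) then f i j else f j i + c i j) = Y} : ℝ) * 2 ^ (r * k)
      = ((Nat.card {f : Matrix (Fin (k - 1)) (Fin (k - 1)) (ZMod 2) //
        X * (Matrix.of fun (i j : Fin (k - 1)) =>
          if (i : ℕ) ≤ (j : ℕ) then f i j else f j i + c i j) = Y} * 2 ^ (r * k) : ℕ) : ℝ) := by
        push_cast; ring
    _ ≤ ((2 ^ (r * (r + 1) / 2) * 2 ^ ((k - 1) * (k - 1)) : ℕ) : ℝ) := Nat.cast_le.mpr key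
    _ = 2 ^ (r * (r + 1) / 2) * 2 ^ ((k - 1) * (k - 1)) := by push_cast; ring
end

section
/- Call $\lambda,\lambda'\in\mathbb{F}_2^{c+a}$ linked if $\sum_{\ell=1}^c(\lambda_\ell+\lambda'_\ell)(\lambda_{c+\ell}+\lambda'_{c+\ell})=1$, and call a subset $\Lambda\subset\mathbb{F}_2^{c+a}$ unlinked if every pair of its elements is unlinked. If $\Lambda$ is an unlinked subset of $\mathbb{F}_2^{c+a}$, then the projection of $\Lambda$ to the first $2c$ coordinates is contained in a translate (coset) of a Lagrangian subspace of $\mathbb{F}_2^{2c}$ with respect to the symplectic form given by the block matrix $\begin{pmatrix}0&I\\I&0\end{pmatrix}$. In particular $\#\Lambda\leq 2^a$. -/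
open Module

namespace Stmt10Aux

variable (c : ℕ)

abbrev V (c : ℕ) := (Fin c → ZMod 2) × (Fin c → ZMod 2)

noncomputable def B (c : ℕ) : LinearMap.BilinForm (ZMod 2) (V c) :=
  LinearMap.mk₂ (ZMod 2)
    (fun x y => ∑ ℓ : Fin c, (x.1 ℓ * y.2 ℓ + x.2 ℓ * y.1 ℓ))
    (by
      intro m₁ m₂ n
      rw [← Finset.sum_add_distrib]
      refine Finset.sum_congr rfl fun ℓ _ => ?_
      simp only [Prod.fst_add, Prod.snd_add, Pi.add_apply]
      ring)
    (by
      intro t m n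
      simp only [smul_eq_mul, Prod.smul_fst, Prod.smul_snd, Pi.smul_apply]
      rw [Finset.mul_sum]
      exact Finset.sum_congr rfl fun ℓ _ => by ring)
    (by
      intro m n₁ n₂
      rw [← Finset.sum_add_distrib]
      refine Finset.sum_congr rfl fun ℓ _ => ?_
      simp only [Prod.fst_add, Prod.snd_add, Pi.add_apply]
      ring)
    (by
      intro t m n
      simp only [smul_eq_mul, Prod.smul_fst, Prod.smul_snd, Pi.smul_apply]
      rw [Finset.mul_sum]
      exact Finset.sum_congr rfl fun ℓ _ => by ring)

lemma B_apply (x y : V c) :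
    B c x y = ∑ ℓ : Fin c, (x.1 ℓ * y.2 ℓ + x.2 ℓ * y.1 ℓ) := rfl

lemma B_symm (x y : V c) : B c x y = B c y x := by
  rw [B_apply, B_apply]
  exact Finset.sum_congr rfl fun ℓ _ => by ring

lemma B_refl : (B c).IsRefl := fun x y h => by rw [B_symm]; exact h

lemma B_alt (x : V c) : B c x x = 0 := by
  rw [B_apply]
  refine Finset.sum_eq_zero fun ℓ _ => ?_
  have : ∀ p q : ZMod 2, p * q + q * p = 0 := by decide
  exact this _ _

lemma B_nondeg : (B c).Nondegenerate := by
  refine (LinearMap.IsRefl.nondegenerate_iff_separatingLeft (B_refl c)).mpr ?_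
  intro x h
  have h1 : ∀ ℓ : Fin c, x.1 ℓ = 0 := by
    intro ℓ
    have := h (0, Pi.single ℓ 1)
    rw [B_apply] at this
    simpa [Pi.single_apply, mul_ite, Finset.sum_ite_eq'] using this
  have h2 : ∀ ℓ : Fin c, x.2 ℓ = 0 := by
    intro ℓ
    have := h (Pi.single ℓ 1, 0)
    rw [B_apply] at this
    simpa [Pi.single_apply, mul_ite, Finset.sum_ite_eq'] using this
  exact Prod.ext (funext h1) (funext h2)

lemma finrank_V : finrank (ZMod 2) (V c) = c + c := by
  simp [Module.finrank_prod]

lemma isotropic_finrank_le (W : Submodule (ZMod 2) (V c))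
    (hW : ∀ x ∈ W, ∀ y ∈ W, B c x y = 0) : finrank (ZMod 2) W ≤ c := by
  have hle : W ≤ (B c).orthogonal W := fun x hx y hy => hW y hy x hx
  have h1 : finrank (ZMod 2) W ≤ finrank (ZMod 2) ((B c).orthogonal W) :=
    Submodule.finrank_mono hle
  have h2 := LinearMap.BilinForm.finrank_orthogonal (B_nondeg c) W
  rw [finrank_V] at h2
  have h3 : finrank (ZMod 2) W ≤ finrank (ZMod 2) (V c) := Submodule.finrank_le W
  rw [finrank_V] at h3
  omega

lemma exists_lag (n : ℕ) : ∀ (W : Submodule (ZMod 2) (V c)),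
    (∀ x ∈ W, ∀ y ∈ W, B c x y = 0) → c - finrank (ZMod 2) W ≤ n →
    ∃ L : Submodule (ZMod 2) (V c), W ≤ L ∧
      (∀ x ∈ L, ∀ y ∈ L, B c x y = 0) ∧ finrank (ZMod 2) L = c := by
  induction n with
  | zero =>
    intro W hW hn
    have := isotropic_finrank_le c W hW
    exact ⟨W, le_rfl, hW, by omega⟩
  | succ n ih =>
    intro W hW hn
    have hWc := isotropic_finrank_le c W hW
    by_cases hc : finrank (ZMod 2) W = c
    · exact ⟨W, le_rfl, hW, hc⟩
    · -- pick v in the orthogonal complement, outside W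
      have horth := LinearMap.BilinForm.finrank_orthogonal (B_nondeg c) W
      rw [finrank_V] at horth
      have hnot : ¬((B c).orthogonal W ≤ W) := by
        intro hle
        have := Submodule.finrank_mono hle
        omega
      obtain ⟨v, hv1, hv2⟩ := SetLike.not_le_iff_exists.mp hnot
      set W' := W ⊔ Submodule.span (ZMod 2) {v} with hW'
      have hWle : W ≤ W' := le_sup_left
      have hvW' : v ∈ W' :=
        Submodule.mem_sup_right (Submodule.mem_span_singleton_self v)
      have hiso : ∀ x ∈ W', ∀ y ∈ W', B c x y = 0 := by
        intro x hx y hy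
        obtain ⟨w, hw, z, hz, rfl⟩ := Submodule.mem_sup.mp hx
        obtain ⟨t, rfl⟩ := Submodule.mem_span_singleton.mp hz
        obtain ⟨w', hw', z', hz', rfl⟩ := Submodule.mem_sup.mp hy
        obtain ⟨s, rfl⟩ := Submodule.mem_span_singleton.mp hz'
        have h1 : B c w w' = 0 := hW _ hw _ hw'
        have h2 : B c w v = 0 := hv1 w hw
        have h3 : B c v w' = 0 := by rw [B_symm]; exact hv1 w' hw'
        have h4 : B c v v = 0 := B_alt c v
        simp [map_add, map_smul, LinearMap.add_apply, LinearMap.smul_apply,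
          h1, h2, h3, h4, smul_eq_mul]
      have hlt : W < W' := lt_of_le_of_ne hWle (by
        intro h
        exact hv2 (h ▸ hvW'))
      have hfr : finrank (ZMod 2) W < finrank (ZMod 2) W' :=
        Submodule.finrank_lt_finrank_of_lt hlt
      obtain ⟨L, hL1, hL2, hL3⟩ := ih W' hiso (by omega)
      exact ⟨L, hWle.trans hL1, hL2, hL3⟩

/-- quadratic form -/
def Q (x : V c) : ZMod 2 := ∑ ℓ : Fin c, x.1 ℓ * x.2 ℓ

lemma polar (x y : V c) : B c x y = Q c (x + y) + Q c x + Q c y := by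
  rw [B_apply, Q, Q, Q, ← Finset.sum_add_distrib, ← Finset.sum_add_distrib]
  refine Finset.sum_congr rfl fun ℓ _ => ?_
  simp only [Prod.fst_add, Prod.snd_add, Pi.add_apply]
  have : ∀ p q r s : ZMod 2,
      p * s + q * r = (p + r) * (q + s) + p * q + r * s := by decide
  exact this _ _ _ _

lemma add_self_eq_zero (x : V c) : x + x = 0 := by
  rw [← two_smul (ZMod 2) x, show (2 : ZMod 2) = 0 by decide, zero_smul]

lemma span_isotropic (T : Set (V c))
    (hT : ∀ s ∈ T, ∀ s' ∈ T, B c s s' = 0) :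
    ∀ x ∈ Submodule.span (ZMod 2) T, ∀ y ∈ Submodule.span (ZMod 2) T,
      B c x y = 0 := by
  intro x hx
  induction hx using Submodule.span_induction with
  | mem s hs =>
    intro y hy
    induction hy using Submodule.span_induction with
    | mem s' hs' => exact hT s hs s' hs'
    | zero => simp
    | add y z _ _ hy hz => rw [map_add, hy, hz, add_zero]
    | smul t y _ hy => rw [map_smul, hy, smul_zero]
  | zero => intro y _; simp
  | add x z _ _ hx hz => intro y hy; rw [map_add, LinearMap.add_apply, hx y hy, hz y hy, add_zero]
  | smul t x _ hx => intro y hy; rw [map_smul, LinearMap.smul_apply, hx y hy, smul_zero]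

end Stmt10Aux

open Stmt10Aux in
/-- Heath-Brown, Lemma 7: the projection of an unlinked subset of
`𝔽₂^{c+a}` to the first `2c` coordinates lies in a coset of a Lagrangian subspace of
`𝔽₂^{2c}` (for the hyperbolic symplectic form); in particular an unlinked subset has
at most `2^a` elements. -/
theorem stmt_10 (c a : ℕ) (hca : c ≤ a)
    (Λ : Set (Fin c ⊕ Fin a → ZMod 2))
    (hΛ : ∀ l ∈ Λ, ∀ l' ∈ Λ,
      ∑ ℓ : Fin c, (l (Sum.inl ℓ) + l' (Sum.inl ℓ)) *
        (l (Sum.inr (Fin.castLE hca ℓ)) + l' (Sum.inr (Fin.castLE hca ℓ))) ≠ 1) :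
    (∃ (L : Submodule (ZMod 2) ((Fin c → ZMod 2) × (Fin c → ZMod 2)))
       (v₀ : (Fin c → ZMod 2) × (Fin c → ZMod 2)),
      (∀ x ∈ L, ∀ y ∈ L,
        ∑ ℓ : Fin c, ((x : (Fin c → ZMod 2) × (Fin c → ZMod 2)).1 ℓ * y.2 ℓ
          + x.2 ℓ * y.1 ℓ) = 0) ∧
      Module.finrank (ZMod 2) L = c ∧
      (∀ l ∈ Λ,
        (((fun ℓ => l (Sum.inl ℓ)), (fun ℓ => l (Sum.inr (Fin.castLE hca ℓ)))) :
          (Fin c → ZMod 2) × (Fin c → ZMod 2)) - v₀ ∈ L)) ∧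
    Nat.card Λ ≤ 2 ^ a := by
  classical
  set π : (Fin c ⊕ Fin a → ZMod 2) → V c :=
    fun l => ((fun ℓ => l (Sum.inl ℓ)), (fun ℓ => l (Sum.inr (Fin.castLE hca ℓ))))
    with hπ
  have hzmod : ∀ x : ZMod 2, x ≠ 1 → x = 0 := by decide
  -- Q vanishes on differences of projections of elements of Λ
  have hQ0 : ∀ l ∈ Λ, ∀ l' ∈ Λ, Q c (π l + π l') = 0 := by
    intro l hl l' hl'
    refine hzmod _ ?_
    have := hΛ l hl l' hl'
    simpa [Q, hπ] using this
  rcases Set.eq_empty_or_nonempty Λ with hΛe | ⟨l₀, hl₀⟩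
  · obtain ⟨L, _, hL2, hL3⟩ := exists_lag c c ⊥
      (by intro x hx _ _; rw [Submodule.mem_bot] at hx; simp [hx]) (by simp)
    refine ⟨⟨L, 0, fun x hx y hy => hL2 x hx y hy, hL3,
      fun l hl => by rw [hΛe] at hl; exact absurd hl (Set.notMem_empty l)⟩, ?_⟩
    simp [hΛe]
  · set v₀ : V c := π l₀ with hv₀
    set T : Set (V c) := (fun l => π l - v₀) '' Λ with hT
    have hself := add_self_eq_zero c
    have hsub_add : ∀ x y : V c, x - y = x + y := by
      intro x y
      rw [sub_eq_add_neg, neg_eq_of_add_eq_zero_left (hself y)]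
    have hBT : ∀ s ∈ T, ∀ s' ∈ T, B c s s' = 0 := by
      rintro s ⟨l, hl, rfl⟩ s' ⟨l', hl', rfl⟩
      show B c (π l - v₀) (π l' - v₀) = 0
      rw [polar]
      have hsum : (π l - v₀) + (π l' - v₀) = π l + π l' := by
        rw [hsub_add, hsub_add]
        have : π l + v₀ + (π l' + v₀) = π l + π l' + (v₀ + v₀) := by abel
        rw [this, hself, add_zero]
      rw [hsum, hsub_add, hsub_add, hQ0 l hl l' hl', hQ0 l hl l₀ hl₀,
        hQ0 l' hl' l₀ hl₀]
      simp
    set W := Submodule.span (ZMod 2) T with hW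
    have hWiso : ∀ x ∈ W, ∀ y ∈ W, B c x y = 0 := span_isotropic c T hBT
    obtain ⟨L, hL1, hL2, hL3⟩ := exists_lag c c W hWiso (Nat.sub_le _ _)
    have hmem : ∀ l ∈ Λ, π l - v₀ ∈ L := fun l hl =>
      hL1 (Submodule.subset_span ⟨l, hl, rfl⟩)
    refine ⟨⟨L, v₀, fun x hx y hy => hL2 x hx y hy, hL3, fun l hl => hmem l hl⟩, ?_⟩
    -- cardinality bound
    have : Finite ↥L := Subtype.finite
    have hF : ∃ F : Λ → ↥L × (Fin (a - c) → ZMod 2), Function.Injective F := by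
      refine ⟨fun l => ⟨⟨π l.1 - v₀, hmem l.1 l.2⟩,
        fun j => l.1 (Sum.inr ⟨c + j.1, by omega⟩)⟩, ?_⟩
      intro l₁ l₂ h
      obtain ⟨h1, h2⟩ := Prod.mk.injEq .. ▸ h
      have hπeq : π l₁.1 = π l₂.1 := by
        have := congrArg Subtype.val h1
        simpa using sub_left_injective this
      ext x
      cases x with
      | inl ℓ => exact congrFun (congrArg Prod.fst hπeq) ℓ
      | inr j =>
        by_cases hj : j.1 < c
        · have hcast : Fin.castLE hca ⟨j.1, hj⟩ = j := Fin.ext rfl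
          have := congrFun (congrArg Prod.snd hπeq) ⟨j.1, hj⟩
          simpa [hπ, hcast] using this
        · have hj' : j.1 - c < a - c := by omega
          have := congrFun h2 ⟨j.1 - c, hj'⟩
          have hje : (⟨c + (j.1 - c), by omega⟩ : Fin a) = j := Fin.ext (by simp; omega)
          simpa [hje] using this
    obtain ⟨F, hFinj⟩ := hF
    calc Nat.card Λ ≤ Nat.card (↥L × (Fin (a - c) → ZMod 2)) :=
          Nat.card_le_card_of_injective F hFinj
      _ = Nat.card ↥L * Nat.card (Fin (a - c) → ZMod 2) := Nat.card_prod _ _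
      _ = 2 ^ c * 2 ^ (a - c) := by
          have : Fintype ↥L := Fintype.ofFinite _
          rw [Nat.card_eq_fintype_card, Nat.card_eq_fintype_card]
          rw [card_eq_pow_finrank (K := ZMod 2) (V := ↥L), hL3]
          simp [ZMod.card]
      _ = 2 ^ a := by rw [← pow_add]; congr 1; omega
end

section
/- Let $B$ be an $n\times n$ alternating matrix over $\mathbb{F}_2$ (i.e. $B^T=B$ and all diagonal entries are $0$), and let $B_{\mathrm{new}}$ be the $(n+1)\times(n+1)$ alternating matrix obtained from $B$ by appending a column $v\in\mathbb{F}_2^n$ and the corresponding row $v^T$ (with diagonal entry $0$). Then $\mathrm{corank}(B_{\mathrm{new}})=\mathrm{corank}(B)+1$ if $v$ lies in the column span of $B$, and $\mathrm{corank}(B_{\mathrm{new}})=\mathrm{corank}(B)-1$ otherwise. -/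
/-- The alternating matrix obtained from `B` by bordering with the vector `v`
(appending the column `v`, the row `vᵀ`, and diagonal entry `0`). -/
def borderAlt {n : ℕ} (B : Matrix (Fin n) (Fin n) (ZMod 2)) (v : Fin n → ZMod 2) :
    Matrix (Fin n ⊕ Unit) (Fin n ⊕ Unit) (ZMod 2) :=
  Matrix.of fun i j =>
    match i, j with
    | Sum.inl i, Sum.inl j => B i j
    | Sum.inl i, Sum.inr _ => v i
    | Sum.inr _, Sum.inl j => v j
    | Sum.inr _, Sum.inr _ => 0



open Matrix Finset

abbrev F2 := ZMod 2

section aux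
variable {n : ℕ}

/-- dot product as a linear functional -/
def dotL (v : Fin n → F2) : (Fin n → F2) →ₗ[F2] F2 where
  toFun x := v ⬝ᵥ x
  map_add' a b := dotProduct_add v a b
  map_smul' c a := dotProduct_smul c v a

/-- embedding F^n → F^(n⊕1) with last coordinate given by functional c -/
def embE (c : (Fin n → F2) →ₗ[F2] F2) : (Fin n → F2) →ₗ[F2] (Fin n ⊕ Unit → F2) where
  toFun w := Sum.elim w (fun _ => c w)
  map_add' a b := by funext i; cases i <;> simp
  map_smul' r a := by funext i; cases i <;> simp

lemma embE_inj (c : (Fin n → F2) →ₗ[F2] F2) : Function.Injective (embE c) := by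
  intro a b h
  funext i
  have := congrFun h (Sum.inl i)
  simpa [embE] using this

lemma quad_zero (B : Matrix (Fin n) (Fin n) F2) (hsym : B.transpose = B)
    (hdiag : ∀ i, B i i = 0) (x : Fin n → F2) : x ⬝ᵥ B.mulVec x = 0 := by
  have hBsymm : ∀ i j, B j i = B i j := by
    intro i j
    conv_lhs => rw [← hsym]
    rfl
  have : x ⬝ᵥ B.mulVec x = ∑ p : Fin n × Fin n, x p.1 * (B p.1 p.2 * x p.2) := by
    simp [dotProduct, Matrix.mulVec, Finset.mul_sum, ← Finset.sum_product',
      Finset.sum_product]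
  rw [this]
  refine Finset.sum_ninvolution Prod.swap ?_ ?_ (fun a => Finset.mem_univ _) (fun a => rfl)
  · intro ⟨i, j⟩
    have : B j i = B i j := hBsymm i j
    simp only [Prod.swap]
    rw [this]; ring_nf
    simp [CharTwo.two_eq_zero]
  · intro ⟨i, j⟩ h hswap
    apply h
    have hij : j = i := congrArg Prod.fst hswap
    subst hij
    simp [hdiag]

lemma dot_mulVec_symm (B : Matrix (Fin n) (Fin n) F2) (hsym : B.transpose = B)
    (x y : Fin n → F2) : B.mulVec x ⬝ᵥ y = x ⬝ᵥ B.mulVec y := by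
  rw [dotProduct_mulVec, ← Matrix.vecMul_transpose, hsym]

lemma dual_mem_range (B : Matrix (Fin n) (Fin n) F2) (hsym : B.transpose = B)
    (v : Fin n → F2) (h : ∀ x, B.mulVec x = 0 → v ⬝ᵥ x = 0) :
    v ∈ Set.range B.mulVec := by
  have hφ : dotL v ∈ (LinearMap.ker B.mulVecLin).dualAnnihilator := by
    rw [Submodule.mem_dualAnnihilator]
    intro x hx
    exact h x (by simpa using hx)
  rw [← LinearMap.range_dualMap_eq_dualAnnihilator_ker] at hφ
  obtain ⟨ψ, hψ⟩ := hφ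
  set w : Fin n → F2 := fun i => ψ (fun j => if i = j then 1 else 0) with hw
  have key : ∀ x, v ⬝ᵥ x = w ⬝ᵥ B.mulVec x := by
    intro x
    have h1 : v ⬝ᵥ x = ψ (B.mulVec x) := by
      have := congrFun (congrArg (fun f => f.toFun) hψ) x
      simpa [dotL, LinearMap.dualMap_apply] using this.symm
    rw [h1, LinearMap.pi_apply_eq_sum_univ ψ (B.mulVec x)]
    simp [dotProduct, hw, mul_comm]
  refine ⟨w, ?_⟩
  funext i
  have := key (Pi.single i 1)
  rw [dotProduct_single, ← dot_mulVec_symm B hsym, dotProduct_single] at this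
  simpa using this.symm

lemma borderAlt_mulVec (B : Matrix (Fin n) (Fin n) F2) (v : Fin n → F2)
    (y : Fin n ⊕ Unit → F2) :
    (borderAlt B v).mulVec y =
      Sum.elim (B.mulVec (y ∘ Sum.inl) + y (Sum.inr ()) • v)
        (fun _ => v ⬝ᵥ (y ∘ Sum.inl)) := by
  funext i
  cases i with
  | inl i =>
    simp [Matrix.mulVec, borderAlt, dotProduct, Fintype.sum_sum_type, mul_comm]
  | inr u =>
    cases u
    simp [Matrix.mulVec, borderAlt, dotProduct, Fintype.sum_sum_type]
end aux
section rank
variable {n : ℕ}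

lemma rank_border_mem (B : Matrix (Fin n) (Fin n) F2) (hsym : B.transpose = B)
    (hdiag : ∀ i, B i i = 0) (v : Fin n → F2) (hv : v ∈ Set.range B.mulVec) :
    (borderAlt B v).rank = B.rank := by
  obtain ⟨x0, hx0⟩ := hv
  have hdot : ∀ x : Fin n → F2, v ⬝ᵥ x = x0 ⬝ᵥ B.mulVec x := by
    intro x
    rw [← hx0, dot_mulVec_symm B hsym]
  have hq : x0 ⬝ᵥ B.mulVec x0 = 0 := quad_zero B hsym hdiag x0
  have hrange : LinearMap.range (borderAlt B v).mulVecLin =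
      (LinearMap.range B.mulVecLin).map (embE (dotL x0)) := by
    apply le_antisymm
    · rintro z ⟨y, rfl⟩
      refine ⟨B.mulVec ((y ∘ Sum.inl) + y (Sum.inr ()) • x0), ⟨_, rfl⟩, ?_⟩
      simp only [embE, dotL, LinearMap.coe_mk, AddHom.coe_mk, Matrix.mulVecLin_apply]
      rw [borderAlt_mulVec]
      have h1 : B.mulVec ((y ∘ Sum.inl) + y (Sum.inr ()) • x0)
          = B.mulVec (y ∘ Sum.inl) + y (Sum.inr ()) • v := by
        rw [Matrix.mulVec_add, Matrix.mulVec_smul, hx0]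
      have h2 : x0 ⬝ᵥ (B.mulVec (y ∘ Sum.inl) + y (Sum.inr ()) • v)
          = v ⬝ᵥ (y ∘ Sum.inl) := by
        have hx0v : x0 ⬝ᵥ v = 0 := by rw [← hx0]; exact hq
        rw [dotProduct_add, dotProduct_smul, hdot (y ∘ Sum.inl), hx0v]
        simp
      rw [h1]
      funext i
      cases i with
      | inl i => rfl
      | inr u => exact h2
    · rintro z ⟨w, ⟨x, rfl⟩, rfl⟩
      refine ⟨Sum.elim x 0, ?_⟩
      simp only [Matrix.mulVecLin_apply]
      rw [borderAlt_mulVec]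
      have hcomp : (Sum.elim x (0 : Unit → F2)) ∘ Sum.inl = x := rfl
      simp only [embE, dotL, LinearMap.coe_mk, AddHom.coe_mk, hcomp]
      funext i
      cases i with
      | inl i => simp
      | inr u => simp [hdot x]
  rw [Matrix.rank, hrange, Matrix.rank]
  exact ((LinearMap.range B.mulVecLin).equivMapOfInjective _
    (embE_inj (dotL x0))).finrank_eq.symm

lemma rank_border_not_mem (B : Matrix (Fin n) (Fin n) F2) (hsym : B.transpose = B)
    (hdiag : ∀ i, B i i = 0) (v : Fin n → F2) (hv : v ∉ Set.range B.mulVec) :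
    (borderAlt B v).rank = B.rank + 2 := by
  -- get x1 in kernel with v ⬝ᵥ x1 = 1
  obtain ⟨x1, hker, hdot1⟩ : ∃ x, B.mulVec x = 0 ∧ v ⬝ᵥ x = 1 := by
    by_contra hcon
    push_neg at hcon
    apply hv
    apply dual_mem_range B hsym
    intro x hx
    have := hcon x hx
    revert this
    generalize v ⬝ᵥ x = a
    revert a; decide
  set W : Submodule F2 (Fin n → F2) := LinearMap.range B.mulVecLin with hW
  have hvW : v ∉ W := by
    intro h
    exact hv (by simpa [hW] using h)
  set W' : Submodule F2 (Fin n → F2) := W ⊔ (Submodule.span F2 {v}) with hW'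
  set δ : Fin n ⊕ Unit → F2 := Sum.elim 0 (fun _ => 1) with hδ
  set E0 : (Fin n → F2) →ₗ[F2] (Fin n ⊕ Unit → F2) := embE 0 with hE0
  have hE0w : ∀ w, E0 w = Sum.elim w 0 := by
    intro w; funext i; cases i <;> simp [hE0, embE]
  have hδmem : δ ∈ LinearMap.range (borderAlt B v).mulVecLin := by
    refine ⟨Sum.elim x1 0, ?_⟩
    simp only [Matrix.mulVecLin_apply]
    rw [borderAlt_mulVec]
    have hcomp : (Sum.elim x1 (0 : Unit → F2)) ∘ Sum.inl = x1 := rfl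
    funext i
    cases i <;> simp [hcomp, hker, hdot1, hδ]
  have hrange : LinearMap.range (borderAlt B v).mulVecLin =
      (W'.map E0) ⊔ (Submodule.span F2 {δ}) := by
    apply le_antisymm
    · rintro z ⟨y, rfl⟩
      simp only [Matrix.mulVecLin_apply]
      rw [borderAlt_mulVec]
      have hz : Sum.elim (B.mulVec (y ∘ Sum.inl) + y (Sum.inr ()) • v)
            (fun _ => v ⬝ᵥ (y ∘ Sum.inl))
          = E0 (B.mulVec (y ∘ Sum.inl) + y (Sum.inr ()) • v)
            + (v ⬝ᵥ (y ∘ Sum.inl)) • δ := by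
        funext i
        cases i <;> simp [hE0w, hδ]
      rw [hz]
      apply Submodule.add_mem
      · apply Submodule.mem_sup_left
        refine ⟨_, ?_, rfl⟩
        exact Submodule.add_mem _ (Submodule.mem_sup_left ⟨_, rfl⟩)
          (Submodule.mem_sup_right (Submodule.smul_mem _ _ (Submodule.mem_span_singleton_self v)))
      · exact Submodule.mem_sup_right (Submodule.smul_mem _ _
          (Submodule.mem_span_singleton_self δ))
    · rw [sup_le_iff]
      constructor
      · rw [Submodule.map_le_iff_le_comap]
        rw [hW', sup_le_iff]
        constructor
        · rintro w ⟨x, rfl⟩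
          simp only [Submodule.mem_comap, Matrix.mulVecLin_apply]
          refine ⟨Sum.elim (x + (v ⬝ᵥ x) • x1) 0, ?_⟩
          simp only [Matrix.mulVecLin_apply]
          rw [borderAlt_mulVec]
          have hcomp : (Sum.elim (x + (v ⬝ᵥ x) • x1) (0 : Unit → F2)) ∘ Sum.inl
              = x + (v ⬝ᵥ x) • x1 := rfl
          funext i
          cases i with
          | inl i =>
            simp [hcomp, Matrix.mulVec_add, Matrix.mulVec_smul, hker, hE0w]
          | inr u =>
            simp [hcomp, dotProduct_add, dotProduct_smul, hdot1, hE0w,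
              CharTwo.add_self_eq_zero]
        · rw [Submodule.span_le]
          rintro _ rfl
          simp only [Set.mem_setOf_eq, SetLike.mem_coe, Submodule.mem_comap,
            Matrix.mulVecLin_apply]
          refine ⟨δ, ?_⟩
          simp only [Matrix.mulVecLin_apply]
          rw [borderAlt_mulVec]
          have hcomp : (δ : Fin n ⊕ Unit → F2) ∘ Sum.inl = 0 := rfl
          funext i
          cases i <;> simp [hcomp, hδ, hE0w]
      · rw [Submodule.span_le, Set.singleton_subset_iff]
        exact hδmem
  have hinj : Function.Injective E0 := embE_inj 0
  have hfrW' : Module.finrank F2 W' = Module.finrank F2 W + 1 := by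
    have hdisj : Disjoint W (Submodule.span F2 {v}) := by
      rw [Submodule.disjoint_span_singleton]
      intro h
      exact absurd h hvW
    have hvne : v ≠ 0 := by
      intro h
      exact hvW (h ▸ Submodule.zero_mem W)
    have h0 := Submodule.finrank_sup_add_finrank_inf_eq W (Submodule.span F2 {v})
    rw [disjoint_iff.mp hdisj, finrank_span_singleton hvne, ← hW'] at h0
    simp only [finrank_bot] at h0
    omega
  have hδne : δ ∉ W'.map E0 := by
    rintro ⟨w, _, hw⟩
    have := congrFun hw (Sum.inr ())
    rw [hE0w] at this
    simp [hδ] at this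
  have hfr : Module.finrank F2 (LinearMap.range (borderAlt B v).mulVecLin)
      = Module.finrank F2 W + 2 := by
    rw [hrange]
    have hdisj : Disjoint (W'.map E0) (Submodule.span F2 {δ}) := by
      rw [Submodule.disjoint_span_singleton]
      intro h
      exact absurd h hδne
    have hδne0 : δ ≠ 0 := by
      intro h
      have := congrFun h (Sum.inr ())
      simp [hδ] at this
    have h2 := Submodule.finrank_sup_add_finrank_inf_eq (W'.map E0) (Submodule.span F2 {δ})
    rw [disjoint_iff.mp hdisj, finrank_span_singleton hδne0] at h2
    simp only [finrank_bot] at h2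
    have h3 : Module.finrank F2 (W'.map E0) = Module.finrank F2 W' :=
      (W'.equivMapOfInjective _ hinj).finrank_eq.symm
    rw [add_zero, h3, hfrW'] at h2
    exact h2
  rw [Matrix.rank, hfr, Matrix.rank]

end rank

/-- bordering an alternating matrix `B` over `𝔽₂` by a vector `v`
increases the corank by `1` if `v` lies in the column span of `B`, and decreases it
by `1` otherwise. -/
theorem stmt_13 {n : ℕ} (B : Matrix (Fin n) (Fin n) (ZMod 2))
    (hsym : B.transpose = B) (hdiag : ∀ i, B i i = 0) (v : Fin n → ZMod 2) :
    (v ∈ Set.range B.mulVec →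
      ((n : ℤ) + 1 - (borderAlt B v).rank) = ((n : ℤ) - B.rank) + 1) ∧
    (v ∉ Set.range B.mulVec →
      ((n : ℤ) + 1 - (borderAlt B v).rank) = ((n : ℤ) - B.rank) - 1) := by
  constructor
  · intro hv
    rw [rank_border_mem B hsym hdiag v hv]
    ring
  · intro hv
    rw [rank_border_not_mem B hsym hdiag v hv]
    push_cast
    ring
end

section
/- For a uniformly random alternating matrix $B\in M_n^{\mathrm{Alt}}(\mathbb{F}_2)$, let $X_n=\mathrm{corank}(B)$. Then conditioned on $X_n=m$, the corank of the alternating matrix $B_{\mathrm{new}}$ obtained by adding a uniformly random row and column (keeping alternating) satisfies: $\mathbb{P}(X_{n+1}=m+1\mid X_n=m)=2^{-m}$ and $\mathbb{P}(X_{n+1}=m-1\mid X_n=m)=1-2^{-m}$. -/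
/-- The set of `n × n` alternating matrices over `𝔽₂` of corank `m`. -/
def altOfCorank (n m : ℕ) : Type :=
  {B : Matrix (Fin n) (Fin n) (ZMod 2) //
    B.transpose = B ∧ (∀ i, B i i = 0) ∧ (n : ℤ) - B.rank = m}

namespace Stmt14Aux

open Matrix Module

local notation "𝔽" => ZMod 2

instance instFiniteAlt (n m : ℕ) : Finite (altOfCorank n m) := by
  unfold altOfCorank; infer_instance

lemma borderAlt_eq_fromBlocks {n : ℕ} (B : Matrix (Fin n) (Fin n) 𝔽) (v : Fin n → 𝔽) :
    borderAlt B v = Matrix.fromBlocks B (Matrix.replicateCol Unit v) (Matrix.replicateRow Unit v) 0 := by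
  ext i j
  cases i <;> cases j <;> rfl

lemma range_prodMap {R M₁ M₂ N₁ N₂ : Type*} [CommRing R]
    [AddCommGroup M₁] [AddCommGroup M₂] [AddCommGroup N₁] [AddCommGroup N₂]
    [Module R M₁] [Module R M₂] [Module R N₁] [Module R N₂]
    (f : M₁ →ₗ[R] N₁) (g : M₂ →ₗ[R] N₂) :
    LinearMap.range (f.prodMap g) = (LinearMap.range f).prod (LinearMap.range g) := by
  ext x
  constructor
  · rintro ⟨y, rfl⟩
    exact ⟨⟨y.1, rfl⟩, ⟨y.2, rfl⟩⟩
  · rintro ⟨⟨y1, h1⟩, ⟨y2, h2⟩⟩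
    exact ⟨(y1, y2), Prod.ext h1 h2⟩

lemma rank_fromBlocks_diag {n : ℕ} (A : Matrix (Fin n) (Fin n) 𝔽) (D : Matrix Unit Unit 𝔽) :
    (Matrix.fromBlocks A 0 0 D).rank = A.rank + D.rank := by
  have hmap : (Matrix.fromBlocks A 0 0 D).mulVecLin =
      (LinearEquiv.sumArrowLequivProdArrow (Fin n) Unit 𝔽 𝔽).symm.toLinearMap
        ∘ₗ (A.mulVecLin.prodMap D.mulVecLin)
        ∘ₗ (LinearEquiv.sumArrowLequivProdArrow (Fin n) Unit 𝔽 𝔽).toLinearMap := by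
    apply LinearMap.ext
    intro x
    funext i
    cases i with
    | inl i =>
      simp [Matrix.fromBlocks_mulVec, Matrix.mulVecLin_apply,
        LinearEquiv.sumArrowLequivProdArrow, Equiv.sumArrowEquivProdArrow]
    | inr u =>
      simp [Matrix.fromBlocks_mulVec, Matrix.mulVecLin_apply,
        LinearEquiv.sumArrowLequivProdArrow, Equiv.sumArrowEquivProdArrow]
  have h1 : LinearMap.range (Matrix.fromBlocks A 0 0 D).mulVecLin
      = Submodule.map
          ((LinearEquiv.sumArrowLequivProdArrow (Fin n) Unit 𝔽 𝔽).symm :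
            ((Fin n → 𝔽) × (Unit → 𝔽)) →ₗ[𝔽] (Fin n ⊕ Unit → 𝔽))
          ((LinearMap.range A.mulVecLin).prod (LinearMap.range D.mulVecLin)) := by
    rw [hmap, LinearMap.range_comp, LinearMap.range_comp_of_range_eq_top, range_prodMap]
    exact LinearEquiv.range _
  rw [Matrix.rank, Matrix.rank, Matrix.rank, h1, LinearEquiv.finrank_map_eq]
  have e : ((LinearMap.range A.mulVecLin).prod (LinearMap.range D.mulVecLin)) ≃ₗ[𝔽]
      (LinearMap.range A.mulVecLin) × (LinearMap.range D.mulVecLin) :=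
    { toFun := fun x => (⟨x.1.1, x.2.1⟩, ⟨x.1.2, x.2.2⟩)
      invFun := fun y => ⟨(y.1.1, y.2.1), ⟨y.1.2, y.2.2⟩⟩
      map_add' := fun a b => rfl
      map_smul' := fun c a => rfl
      left_inv := fun a => rfl
      right_inv := fun a => rfl }
  rw [e.finrank_eq, Module.finrank_prod]

lemma dot_mulVec_self_eq_zero {n : ℕ} {B : Matrix (Fin n) (Fin n) 𝔽}
    (hB : Bᵀ = B) (hd : ∀ i, B i i = 0) (c : Fin n → 𝔽) :
    c ⬝ᵥ B.mulVec c = 0 := by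
  classical
  have hself : ∀ x : ZMod 2, x + x = 0 := by decide
  have hexp : c ⬝ᵥ B.mulVec c = ∑ p : Fin n × Fin n, c p.1 * B p.1 p.2 * c p.2 := by
    simp only [dotProduct, Matrix.mulVec, Fintype.sum_prod_type, Finset.mul_sum]
    exact Finset.sum_congr rfl fun i _ => Finset.sum_congr rfl fun j _ => by ring
  rw [hexp]
  apply Finset.sum_ninvolution (fun p => (p.2, p.1))
  · intro p
    have hsymm : B p.2 p.1 = B p.1 p.2 := by
      conv_lhs => rw [← hB]
      rfl
    simp only [hsymm]
    rw [show c p.2 * B p.1 p.2 * c p.1 = c p.1 * B p.1 p.2 * c p.2 by ring]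
    exact hself _
  · intro p hp
    intro h
    apply hp
    have h2 : p.2 = p.1 := congrArg Prod.fst h
    rw [h2, hd p.1]
    ring
  · intro a; exact Finset.mem_univ _
  · intro a; rfl

lemma rank_border_mem {n : ℕ} {B : Matrix (Fin n) (Fin n) 𝔽}
    (hB : Bᵀ = B) (hd : ∀ i, B i i = 0) (c : Fin n → 𝔽) :
    (borderAlt B (B.mulVec c)).rank = B.rank := by
  classical
  set v := B.mulVec c with hv
  have hvec : Matrix.replicateRow Unit c * B = Matrix.replicateRow Unit v := by
    have : (Matrix.replicateRow Unit c * B) = (Bᵀ * Matrix.replicateCol Unit c)ᵀ := by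
      rw [Matrix.transpose_mul, Matrix.transpose_transpose, Matrix.transpose_replicateCol]
    rw [this, hB, ← Matrix.replicateCol_mulVec, Matrix.transpose_replicateCol, hv]
  have hquad : Matrix.replicateRow Unit c * Matrix.replicateCol Unit v = (0 : Matrix Unit Unit 𝔽) := by
    rw [Matrix.replicateRow_mul_replicateCol]
    ext i j
    simp [dot_mulVec_self_eq_zero hB hd c, hv]
  have hfac : borderAlt B v =
      (Matrix.fromBlocks 1 0 (Matrix.replicateRow Unit c) 1 : Matrix (Fin n ⊕ Unit) (Fin n ⊕ Unit) 𝔽) *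
        ((Matrix.fromBlocks B 0 0 0 : Matrix (Fin n ⊕ Unit) (Fin n ⊕ Unit) 𝔽) *
          Matrix.fromBlocks 1 (Matrix.replicateCol Unit c) 0 1) := by
    rw [borderAlt_eq_fromBlocks, Matrix.fromBlocks_multiply, Matrix.fromBlocks_multiply]
    simp only [Matrix.mul_one, Matrix.mul_zero, Matrix.zero_mul, Matrix.one_mul,
      add_zero, zero_add, Matrix.mul_zero, ← Matrix.replicateCol_mulVec, ← hv, hvec, hquad]
    congr 1 <;> simp
  rw [hfac]
  rw [Matrix.rank_mul_eq_right_of_isUnit_det, Matrix.rank_mul_eq_left_of_isUnit_det,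
    rank_fromBlocks_diag, Matrix.rank_zero, add_zero]
  · rw [Matrix.det_fromBlocks_zero₂₁]
    simp
  · rw [Matrix.det_fromBlocks_zero₁₂]
    simp

lemma exists_ker_dot {n : ℕ} {B : Matrix (Fin n) (Fin n) 𝔽} (hB : Bᵀ = B)
    {v : Fin n → 𝔽} (hv : v ∉ LinearMap.range B.mulVecLin) :
    ∃ a, B.mulVec a = 0 ∧ a ⬝ᵥ v = 1 := by
  classical
  obtain ⟨f, hfv, hfp⟩ :=
    (LinearMap.range B.mulVecLin).exists_dual_map_eq_bot_of_notMem hv inferInstance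
  set a : Fin n → 𝔽 := fun i => f (Pi.single i 1) with ha
  have hfa : ∀ x : Fin n → 𝔽, f x = a ⬝ᵥ x := by
    intro x
    have hx : x = ∑ i, x i • Pi.single i (1 : 𝔽) := by
      funext j
      simp [Pi.single_apply, Finset.sum_ite_eq, mul_comm]
    conv_lhs => rw [hx]
    rw [map_sum]
    simp only [_root_.map_smul, smul_eq_mul]
    simp [dotProduct, ha, mul_comm]
  have hker : ∀ y ∈ LinearMap.range B.mulVecLin, f y = 0 := by
    intro y hy
    have : f y ∈ Submodule.map f (LinearMap.range B.mulVecLin) := ⟨y, hy, rfl⟩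
    rw [hfp] at this
    exact (Submodule.mem_bot 𝔽).mp this
  have hBa : B.mulVec a = 0 := by
    have hrow : ∀ j, (Matrix.vecMul a B) j = 0 := by
      intro j
      have h1 : a ⬝ᵥ B.mulVec (Pi.single j 1) = 0 := by
        rw [← hfa]
        exact hker _ ⟨Pi.single j 1, rfl⟩
      rw [Matrix.dotProduct_mulVec] at h1
      have : Matrix.vecMul a B ⬝ᵥ Pi.single j 1 = Matrix.vecMul a B j := by
        simp [dotProduct, Pi.single_apply, Finset.sum_ite_eq]
      rwa [this] at h1
    have : Matrix.vecMul a B = 0 := funext hrow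
    calc B.mulVec a = Bᵀᵀ.mulVec a := by rw [Matrix.transpose_transpose]
    _ = Matrix.vecMul a Bᵀ := Matrix.mulVec_transpose Bᵀ a
    _ = Matrix.vecMul a B := by rw [hB]
    _ = 0 := this
  refine ⟨a, hBa, ?_⟩
  have : a ⬝ᵥ v = f v := (hfa v).symm
  rw [this]
  have hne : f v ≠ 0 := hfv
  revert hne
  generalize f v = x
  revert x
  decide

lemma range_add_vv {n : ℕ} {B : Matrix (Fin n) (Fin n) 𝔽} {v a : Fin n → 𝔽}
    (ha : B.mulVec a = 0) (hav : a ⬝ᵥ v = 1) :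
    LinearMap.range (B + Matrix.of fun i j => v i * v j).mulVecLin
      = LinearMap.range B.mulVecLin ⊔ Submodule.span 𝔽 {v} := by
  classical
  set C := B + Matrix.of fun i j => v i * v j with hC
  have hCv : ∀ x, C.mulVec x = B.mulVec x + (v ⬝ᵥ x) • v := by
    intro x
    funext i
    simp only [hC, Matrix.add_mulVec, Pi.add_apply, Pi.smul_apply, smul_eq_mul]
    congr 1
    simp only [Matrix.mulVec, dotProduct, Matrix.of_apply, Finset.sum_mul, Finset.mul_sum]
    exact Finset.sum_congr rfl fun j _ => by ring
  have hva : v ⬝ᵥ a = 1 := by rw [dotProduct_comm]; exact hav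
  apply le_antisymm
  · rintro y ⟨x, rfl⟩
    rw [Matrix.mulVecLin_apply, hCv]
    exact Submodule.add_mem _ (Submodule.mem_sup_left ⟨x, rfl⟩)
      (Submodule.mem_sup_right (Submodule.smul_mem _ _ (Submodule.subset_span rfl)))
  · apply sup_le
    · rintro y ⟨x, rfl⟩
      refine ⟨x - (v ⬝ᵥ x) • a, ?_⟩
      rw [Matrix.mulVecLin_apply, hCv, Matrix.mulVecLin_apply]
      have h1 : B.mulVec (x - (v ⬝ᵥ x) • a) = B.mulVec x := by
        rw [Matrix.mulVec_sub, Matrix.mulVec_smul, ha]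
        simp
      have h2 : v ⬝ᵥ (x - (v ⬝ᵥ x) • a) = 0 := by
        rw [dotProduct_sub, dotProduct_smul, hva]
        simp
      rw [h1, h2, zero_smul, add_zero]
    · rw [Submodule.span_singleton_le_iff_mem]
      refine ⟨a, ?_⟩
      rw [Matrix.mulVecLin_apply, hCv, ha, hva, zero_add, one_smul]

lemma rank_add_vv {n : ℕ} {B : Matrix (Fin n) (Fin n) 𝔽} {v a : Fin n → 𝔽}
    (ha : B.mulVec a = 0) (hav : a ⬝ᵥ v = 1)
    (hv : v ∉ LinearMap.range B.mulVecLin) :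
    (B + Matrix.of fun i j => v i * v j).rank = B.rank + 1 := by
  classical
  have hrange := range_add_vv ha hav
  rw [Matrix.rank, hrange]
  have hvne : v ≠ 0 := by
    rintro rfl
    exact hv (Submodule.zero_mem _)
  have hinf : LinearMap.range B.mulVecLin ⊓ Submodule.span 𝔽 {v} = ⊥ := by
    rw [Submodule.eq_bot_iff]
    rintro x ⟨hx1, hx2⟩
    obtain ⟨c, rfl⟩ := Submodule.mem_span_singleton.mp hx2
    rcases eq_or_ne c 0 with rfl | hc
    · simp
    · exfalso
      apply hv
      have : c⁻¹ • (c • v) ∈ LinearMap.range B.mulVecLin :=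
        Submodule.smul_mem _ _ hx1
      rwa [smul_smul, inv_mul_cancel₀ hc, one_smul] at this
  have := Submodule.finrank_sup_add_finrank_inf_eq
    (LinearMap.range B.mulVecLin) (Submodule.span 𝔽 {v})
  rw [hinf, finrank_bot, add_zero, finrank_span_singleton hvne] at this
  rw [this]
  rfl

lemma rank_border_not_mem {n : ℕ} {B : Matrix (Fin n) (Fin n) 𝔽} (hB : Bᵀ = B)
    {v : Fin n → 𝔽} (hv : v ∉ LinearMap.range B.mulVecLin) :
    (borderAlt B v).rank = B.rank + 2 := by
  classical
  obtain ⟨a, ha, hav⟩ := exists_ker_dot hB hv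
  have hva : v ⬝ᵥ a = 1 := by rw [dotProduct_comm]; exact hav
  -- step 1 : multiply on the right by an invertible matrix to make the corner 1
  have hstep1 : borderAlt B v *
      (Matrix.fromBlocks 1 (Matrix.replicateCol Unit a) 0 1 : Matrix (Fin n ⊕ Unit) (Fin n ⊕ Unit) 𝔽)
      = Matrix.fromBlocks B (Matrix.replicateCol Unit v) (Matrix.replicateRow Unit v) 1 := by
    rw [borderAlt_eq_fromBlocks, Matrix.fromBlocks_multiply]
    simp only [Matrix.mul_one, Matrix.mul_zero, Matrix.zero_mul, Matrix.one_mul,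
      add_zero, zero_add]
    have h1 : B * Matrix.replicateCol Unit a = 0 := by
      rw [← Matrix.replicateCol_mulVec, ha]
      ext i j; simp
    have h2 : Matrix.replicateRow Unit v * Matrix.replicateCol Unit a = (1 : Matrix Unit Unit 𝔽) := by
      rw [Matrix.replicateRow_mul_replicateCol]
      ext i j
      simp [hva, Matrix.one_apply]
    rw [h1, h2]
    congr 1
    simp
  -- step 2 : factor the new matrix
  set C := B + Matrix.of fun i j => v i * v j with hCdef
  have hstep2 : Matrix.fromBlocks B (Matrix.replicateCol Unit v) (Matrix.replicateRow Unit v) 1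
      = (Matrix.fromBlocks 1 (Matrix.replicateCol Unit v) 0 1 :
          Matrix (Fin n ⊕ Unit) (Fin n ⊕ Unit) 𝔽) *
        ((Matrix.fromBlocks C 0 0 1 : Matrix (Fin n ⊕ Unit) (Fin n ⊕ Unit) 𝔽) *
          Matrix.fromBlocks 1 0 (Matrix.replicateRow Unit v) 1) := by
    rw [Matrix.fromBlocks_multiply, Matrix.fromBlocks_multiply]
    simp only [Matrix.mul_one, Matrix.mul_zero, Matrix.zero_mul, Matrix.one_mul,
      add_zero, zero_add]
    have hcr : Matrix.replicateCol Unit v * Matrix.replicateRow Unit v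
        = (Matrix.of fun i j => v i * v j : Matrix (Fin n) (Fin n) 𝔽) := by
      ext i j
      simp [Matrix.mul_apply]
    have hCC : C + Matrix.replicateCol Unit v * Matrix.replicateRow Unit v = B := by
      rw [hcr, hCdef]
      ext i j
      simp only [Matrix.add_apply, Matrix.of_apply]
      have : ∀ x y : ZMod 2, x + y + y = x := by decide
      exact this _ _
    rw [hCC]
  have hrank1 : (borderAlt B v).rank
      = (Matrix.fromBlocks B (Matrix.replicateCol Unit v) (Matrix.replicateRow Unit v) 1).rank := by
    rw [← hstep1, Matrix.rank_mul_eq_left_of_isUnit_det]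
    rw [Matrix.det_fromBlocks_zero₂₁]
    simp
  have hrank2 : (Matrix.fromBlocks B (Matrix.replicateCol Unit v) (Matrix.replicateRow Unit v) 1).rank
      = (Matrix.fromBlocks C 0 0 1 : Matrix (Fin n ⊕ Unit) (Fin n ⊕ Unit) 𝔽).rank := by
    rw [hstep2, Matrix.rank_mul_eq_right_of_isUnit_det, Matrix.rank_mul_eq_left_of_isUnit_det]
    · rw [Matrix.det_fromBlocks_zero₁₂]; simp
    · rw [Matrix.det_fromBlocks_zero₂₁]; simp
  rw [hrank1, hrank2, rank_fromBlocks_diag, rank_add_vv ha hav hv, Matrix.rank_one]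
  simp

lemma rank_eq {n m : ℕ} (B : altOfCorank n m) : B.1.rank = n - m ∧ m ≤ n := by
  have h := B.2.2.2
  have h2 : B.1.rank ≤ n := (Matrix.rank_le_card_width B.1).trans (by simp)
  constructor <;> omega

lemma border_mem_iff {n m : ℕ} (B : altOfCorank n m) (v : Fin n → 𝔽) :
    ((n : ℤ) + 1 - (borderAlt B.1 v).rank = (m : ℤ) + 1)
      ↔ v ∈ LinearMap.range B.1.mulVecLin := by
  have h := B.2.2.2
  by_cases hv : v ∈ LinearMap.range B.1.mulVecLin
  · obtain ⟨c, hc⟩ := id hv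
    rw [Matrix.mulVecLin_apply] at hc
    have hr : (borderAlt B.1 v).rank = B.1.rank := by
      rw [← hc]; exact rank_border_mem B.2.1 B.2.2.1 c
    rw [hr]
    simp only [hv, iff_true]
    omega
  · have hr : (borderAlt B.1 v).rank = B.1.rank + 2 := rank_border_not_mem B.2.1 hv
    rw [hr]
    simp only [hv, iff_false]
    push_cast
    omega

lemma border_not_mem_iff {n m : ℕ} (B : altOfCorank n m) (v : Fin n → 𝔽) :
    ((n : ℤ) + 1 - (borderAlt B.1 v).rank = (m : ℤ) - 1)
      ↔ v ∉ LinearMap.range B.1.mulVecLin := by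
  have h := B.2.2.2
  by_cases hv : v ∈ LinearMap.range B.1.mulVecLin
  · obtain ⟨c, hc⟩ := id hv
    rw [Matrix.mulVecLin_apply] at hc
    have hr : (borderAlt B.1 v).rank = B.1.rank := by
      rw [← hc]; exact rank_border_mem B.2.1 B.2.2.1 c
    rw [hr]
    simp only [hv, not_true, iff_false]
    omega
  · have hr : (borderAlt B.1 v).rank = B.1.rank + 2 := rank_border_not_mem B.2.1 hv
    rw [hr]
    simp only [hv, not_false_iff, iff_true]
    push_cast
    omega

lemma card_mem_range {n m : ℕ} (B : altOfCorank n m) :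
    Nat.card {v : Fin n → 𝔽 // v ∈ LinearMap.range B.1.mulVecLin} = 2 ^ (n - m) := by
  have hr := (rank_eq B).1
  have : Nat.card {v : Fin n → 𝔽 // v ∈ LinearMap.range B.1.mulVecLin}
      = Fintype.card (LinearMap.range B.1.mulVecLin) := by
    rw [Nat.card_eq_fintype_card]
  rw [this, card_eq_pow_finrank (K := 𝔽), ZMod.card]
  have h2 : finrank 𝔽 (LinearMap.range B.1.mulVecLin) = B.1.rank := rfl
  rw [h2, hr]

lemma card_not_mem_range {n m : ℕ} (B : altOfCorank n m) :
    Nat.card {v : Fin n → 𝔽 // v ∉ LinearMap.range B.1.mulVecLin} = 2 ^ n - 2 ^ (n - m) := by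
  classical
  rw [Nat.card_eq_fintype_card, Fintype.card_subtype_compl]
  have h1 : Fintype.card (Fin n → 𝔽) = 2 ^ n := by
    rw [Fintype.card_fun, ZMod.card, Fintype.card_fin]
  rw [h1]
  congr 1
  rw [← card_mem_range B, Nat.card_eq_fintype_card]

lemma card_pairs {n m : ℕ} (Q : altOfCorank n m → (Fin n → 𝔽) → Prop) (c : ℕ)
    (hc : ∀ B, Nat.card {v : Fin n → 𝔽 // Q B v} = c) :
    Nat.card {p : altOfCorank n m × (Fin n → 𝔽) // Q p.1 p.2}
      = Nat.card (altOfCorank n m) * c := by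
  classical
  have e : {p : altOfCorank n m × (Fin n → 𝔽) // Q p.1 p.2}
      ≃ Σ B : altOfCorank n m, {v : Fin n → 𝔽 // Q B v} :=
    { toFun := fun x => ⟨x.1.1, x.1.2, x.2⟩
      invFun := fun y => ⟨(y.1, y.2.1), y.2.2⟩
      left_inv := fun x => rfl
      right_inv := fun y => rfl }
  rw [Nat.card_congr e]
  haveI : Fintype (altOfCorank n m) := Fintype.ofFinite _
  haveI : ∀ B : altOfCorank n m, Fintype {v : Fin n → 𝔽 // Q B v} :=
    fun B => Fintype.ofFinite _
  rw [Nat.card_eq_fintype_card, Fintype.card_sigma]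
  have : ∀ B : altOfCorank n m, Fintype.card {v : Fin n → 𝔽 // Q B v} = c := by
    intro B
    rw [← Nat.card_eq_fintype_card, hc]
  rw [Finset.sum_congr rfl fun B _ => this B, Finset.sum_const, smul_eq_mul,
    Nat.card_eq_fintype_card]
  rfl

end Stmt14Aux

open Stmt14Aux in
/-- conditioned on `corank(B) = m`, a uniformly random alternating
bordering has corank `m + 1` with probability `2^{-m}` and corank `m - 1` with
probability `1 - 2^{-m}`. -/
theorem stmt_14 (n m : ℕ) (hne : Nonempty (altOfCorank n m)) :
    (Nat.card {p : altOfCorank n m × (Fin n → ZMod 2) //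
          ((n : ℤ) + 1 - (borderAlt p.1.1 p.2).rank) = (m : ℤ) + 1} : ℝ)
        / (Nat.card (altOfCorank n m × (Fin n → ZMod 2)) : ℝ)
      = (2 : ℝ) ^ (-(m : ℤ)) ∧
    (Nat.card {p : altOfCorank n m × (Fin n → ZMod 2) //
          ((n : ℤ) + 1 - (borderAlt p.1.1 p.2).rank) = (m : ℤ) - 1} : ℝ)
        / (Nat.card (altOfCorank n m × (Fin n → ZMod 2)) : ℝ)
      = 1 - (2 : ℝ) ^ (-(m : ℤ)) := by
  classical
  obtain ⟨B₀⟩ := id hne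
  have hmn : m ≤ n := (rank_eq B₀).2
  have hApos : 0 < Nat.card (altOfCorank n m) := Nat.card_pos (α := altOfCorank n m)
  -- cardinalities
  have h1 : Nat.card {p : altOfCorank n m × (Fin n → ZMod 2) //
      ((n : ℤ) + 1 - (borderAlt p.1.1 p.2).rank) = (m : ℤ) + 1}
      = Nat.card (altOfCorank n m) * 2 ^ (n - m) := by
    have := card_pairs
      (fun B v => ((n : ℤ) + 1 - (borderAlt B.1 v).rank) = (m : ℤ) + 1) (2 ^ (n - m))
      (fun B => by
        rw [Nat.card_congr (Equiv.subtypeEquivRight fun v => border_mem_iff B v)]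
        exact card_mem_range B)
    exact this
  have h2 : Nat.card {p : altOfCorank n m × (Fin n → ZMod 2) //
      ((n : ℤ) + 1 - (borderAlt p.1.1 p.2).rank) = (m : ℤ) - 1}
      = Nat.card (altOfCorank n m) * (2 ^ n - 2 ^ (n - m)) := by
    have := card_pairs
      (fun B v => ((n : ℤ) + 1 - (borderAlt B.1 v).rank) = (m : ℤ) - 1) (2 ^ n - 2 ^ (n - m))
      (fun B => by
        rw [Nat.card_congr (Equiv.subtypeEquivRight fun v => border_not_mem_iff B v)]
        exact card_not_mem_range B)
    exact this
  have htot : Nat.card (altOfCorank n m × (Fin n → ZMod 2))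
      = Nat.card (altOfCorank n m) * 2 ^ n := by
    rw [Nat.card_prod]
    congr 1
    rw [Nat.card_eq_fintype_card, Fintype.card_fun, ZMod.card, Fintype.card_fin]
  -- real arithmetic
  have hpowle : (2 : ℕ) ^ (n - m) ≤ 2 ^ n := Nat.pow_le_pow_right (by norm_num) (Nat.sub_le n m)
  have ha : ((Nat.card (altOfCorank n m) : ℝ)) ≠ 0 := by positivity
  have h2n : ((2 : ℝ) ^ n) ≠ 0 := by positivity
  have hkey : ((2 : ℝ) ^ (n - m) : ℝ) = (2 : ℝ) ^ (-(m : ℤ)) * 2 ^ n := by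
    rw [← zpow_natCast (2 : ℝ) (n - m), ← zpow_natCast (2 : ℝ) n, ← zpow_add₀ (by norm_num)]
    congr 1
    push_cast [hmn]
    ring
  constructor
  · rw [h1, htot]
    push_cast
    rw [hkey]
    field_simp
  · rw [h2, htot]
    push_cast [hpowle]
    rw [hkey]
    field_simp
end

section
/- Define $P^{\mathrm{Alt}}_t(m) = \prod_{i=1}^m \frac{2}{2^i-1}\prod_{i=1}^\infty(1+2^{-i})^{-1}$ for $m\equiv t\pmod 2$, $m\geq 0$, and $P^{\mathrm{Alt}}_t(m)=0$ otherwise. Then $(P^{\mathrm{Alt}}_t(m))_m$ is the equilibrium distribution of the Markov chain on $\{m\geq 0 : m\equiv t\pmod 2\}$ with transition probabilities $P_{m\to m+2}=x^2/2$, $P_{m\to m}=x(3-5x/2)$, $P_{m\to m-2}=(1-x)(1-2x)$ where $x=2^{-m}$; i.e. for all $m'$ with $m'\equiv t\pmod 2$, $\sum_{m} P_{m\to m'}\,P^{\mathrm{Alt}}_t(m) = P^{\mathrm{Alt}}_t(m')$, and $\sum_m P^{\mathrm{Alt}}_t(m)=1$. -/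
open Finset Filter Topology

/-- `Qa m = ∏_{i=1}^m 2/(2^i-1)`. -/
noncomputable def Qa (m : ℕ) : ℝ := ∏ i ∈ Finset.range m, 2 / ((2 : ℝ) ^ (i + 1) - 1)

lemma den_pos (i : ℕ) : (0:ℝ) < (2:ℝ)^(i+1) - 1 := by
  have h : (2:ℝ)^1 ≤ (2:ℝ)^(i+1) := pow_le_pow_right₀ (by norm_num) (by omega)
  norm_num at h; linarith

lemma Qa_pos (m : ℕ) : 0 < Qa m :=
  Finset.prod_pos fun i _ => div_pos two_pos (den_pos i)

lemma Qa_succ (m : ℕ) : Qa (m+1) = Qa m * (2 / ((2:ℝ)^(m+1) - 1)) :=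
  Finset.prod_range_succ _ _

lemma Qa_rec (m : ℕ) : Qa (m+1) * (1 - (1/2:ℝ)^(m+1)) = Qa m * (1/2)^m := by
  have h := den_pos m
  have h2 : ((2:ℝ)^(m+1)) ≠ 0 := by positivity
  have h3 : ((2:ℝ)^m) ≠ 0 := by positivity
  have e : ∀ k : ℕ, (1/2:ℝ)^k = ((2:ℝ)^k)⁻¹ := fun k => by rw [one_div, inv_pow]
  rw [Qa_succ, e, e]
  have hp : (2:ℝ)^(m+1) = 2 * (2:ℝ)^m := by rw [pow_succ]; ring
  field_simp
  rw [hp]; ring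

lemma summable_QaZ {z : ℝ} (hz : |z| ≤ 1) : Summable (fun m => Qa m * z^m) := by
  apply summable_of_ratio_norm_eventually_le (r := 1/2) (by norm_num)
  filter_upwards [Filter.eventually_ge_atTop 2] with m hm
  have key : Qa (m+1) * z^(m+1) = (Qa m * z^m) * (2 / ((2:ℝ)^(m+1) - 1) * z) := by
    rw [Qa_succ, pow_succ]; ring
  rw [key, norm_mul]
  have h7 : (7:ℝ) ≤ (2:ℝ)^(m+1) - 1 := by
    have : (2:ℝ)^3 ≤ (2:ℝ)^(m+1) := pow_le_pow_right₀ (by norm_num) (by omega)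
    norm_num at this; linarith
  have hd : (0:ℝ) < (2:ℝ)^(m+1) - 1 := den_pos m
  have hb : ‖2 / ((2:ℝ)^(m+1) - 1) * z‖ ≤ 1/2 := by
    have hz1 : ‖z‖ ≤ 1 := by rwa [Real.norm_eq_abs]
    have h2n : ‖(2:ℝ)^(m+1) - 1‖ = (2:ℝ)^(m+1) - 1 := by
      rw [Real.norm_eq_abs, abs_of_pos hd]
    have ha2 : ‖(2:ℝ)‖ = 2 := by norm_num
    rw [norm_mul, norm_div, ha2, h2n]
    have hq : 2 / ((2:ℝ)^(m+1) - 1) ≤ 2/7 := by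
      rw [div_le_div_iff₀ hd (by norm_num)]; nlinarith
    have := mul_le_mul hq hz1 (norm_nonneg z) (by norm_num)
    linarith
  calc ‖Qa m * z^m‖ * ‖2 / ((2:ℝ)^(m+1) - 1) * z‖
      ≤ ‖Qa m * z^m‖ * (1/2) := mul_le_mul_of_nonneg_left hb (norm_nonneg _)
    _ = 1/2 * ‖Qa m * z^m‖ := by ring

/-- The generating function. -/
noncomputable def Fa (z : ℝ) : ℝ := ∑' m, Qa m * z^m

lemma Fa_funeq {z : ℝ} (hz : |z| ≤ 1) : Fa z = (1+z) * Fa (z/2) := by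
  have hz2 : |z/2| ≤ 1 := by
    rw [abs_div]
    have h2 : |(2:ℝ)| = 2 := by norm_num
    rw [h2]
    linarith [abs_nonneg z]
  have h1 := summable_QaZ hz
  have h2 := summable_QaZ hz2
  have hsub := h1.sub h2
  have hg : ∀ n : ℕ, (Qa (n+1) * z^(n+1) - Qa (n+1) * (z/2)^(n+1))
      = z * (Qa n * (z/2)^n) := by
    intro n
    have hr := Qa_rec n
    have e1 : (z/2)^(n+1) = z^(n+1) * (1/2:ℝ)^(n+1) := by
      rw [← mul_pow]; ring_nf
    have e0 : (z/2)^n = z^n * (1/2:ℝ)^n := by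
      rw [← mul_pow]; ring_nf
    rw [e1, e0]
    have e3 : Qa (n+1) * z^(n+1) - Qa (n+1) * (z^(n+1) * (1/2)^(n+1))
        = (Qa (n+1) * (1 - (1/2)^(n+1))) * z^(n+1) := by ring
    rw [e3, hr, pow_succ]; ring
  have key : Fa z - Fa (z/2) = z * Fa (z/2) := by
    rw [Fa, Fa, ← Summable.tsum_sub h1 h2]
    rw [Summable.tsum_eq_zero_add hsub]
    simp only [pow_zero, mul_one, sub_self, zero_add]
    rw [show (∑' n : ℕ, (Qa (n+1) * z^(n+1) - Qa (n+1) * (z/2)^(n+1)))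
        = ∑' n : ℕ, z * (Qa n * (z/2)^n) from tsum_congr hg]
    rw [tsum_mul_left]
  have : Fa z = Fa (z/2) + z * Fa (z/2) := by linarith
  rw [this]; ring

lemma Fa_prod (n : ℕ) :
    Fa 1 = (∏ i ∈ Finset.range n, (1 + (1/2:ℝ)^i)) * Fa ((1/2)^n) := by
  induction n with
  | zero => simp
  | succ n ih =>
    have habs : |((1/2:ℝ)^n)| ≤ 1 := by
      rw [abs_of_pos (by positivity)]
      exact pow_le_one₀ (by norm_num) (by norm_num)
    rw [ih, Fa_funeq habs, Finset.prod_range_succ]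
    have h12 : (1/2:ℝ)^n / 2 = (1/2)^(n+1) := by rw [pow_succ]; ring
    rw [h12]; ring

lemma summable_Qa_shift : Summable (fun n : ℕ => Qa (n+1)) := by
  have h := summable_QaZ (z := 1) (by norm_num)
  simp only [one_pow, mul_one] at h
  exact (summable_nat_add_iff 1).2 h

lemma Fa_small {w : ℝ} (hw0 : 0 ≤ w) (hw1 : w ≤ 1) :
    Fa w = 1 + ∑' n : ℕ, Qa (n+1) * w^(n+1) ∧
    0 ≤ ∑' n : ℕ, Qa (n+1) * w^(n+1) ∧
    ∑' n : ℕ, Qa (n+1) * w^(n+1) ≤ (∑' n : ℕ, Qa (n+1)) * w := by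
  have habs : |w| ≤ 1 := by rw [abs_of_nonneg hw0]; exact hw1
  have h := summable_QaZ habs
  have hsh : Summable (fun n : ℕ => Qa (n+1) * w^(n+1)) :=
    (summable_nat_add_iff (f := fun m : ℕ => Qa m * w^m) 1).2 h
  refine ⟨?_, ?_, ?_⟩
  · rw [Fa, Summable.tsum_eq_zero_add h]
    simp [Qa]
  · exact tsum_nonneg fun n => mul_nonneg (Qa_pos _).le (by positivity)
  · rw [← tsum_mul_right]
    apply Summable.tsum_le_tsum _ hsh (summable_Qa_shift.mul_right w)
    intro n
    have hle : w^(n+1) ≤ w := by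
      calc w^(n+1) = w^n * w := by rw [pow_succ]
        _ ≤ 1 * w := mul_le_mul_of_nonneg_right (pow_le_one₀ hw0 hw1) hw0
        _ = w := by ring
    exact mul_le_mul_of_nonneg_left hle (Qa_pos _).le

lemma Fa_tendsto : Tendsto (fun n => Fa ((1/2:ℝ)^n)) atTop (𝓝 1) := by
  set C := ∑' n : ℕ, Qa (n+1) with hC
  have hlow : ∀ n : ℕ, 1 ≤ Fa ((1/2:ℝ)^n) := by
    intro n
    obtain ⟨he, hn, _⟩ := Fa_small (w := (1/2:ℝ)^n) (pow_nonneg (by norm_num) n)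
      (pow_le_one₀ (by norm_num) (by norm_num))
    rw [he]; linarith
  have hup : ∀ n : ℕ, Fa ((1/2:ℝ)^n) ≤ 1 + C * (1/2)^n := by
    intro n
    obtain ⟨he, _, hu⟩ := Fa_small (w := (1/2:ℝ)^n) (pow_nonneg (by norm_num) n)
      (pow_le_one₀ (by norm_num) (by norm_num))
    rw [he]; linarith
  have hub : Tendsto (fun n : ℕ => 1 + C * (1/2:ℝ)^n) atTop (𝓝 1) := by
    have h0 : Tendsto (fun n : ℕ => ((1/2:ℝ))^n) atTop (𝓝 0) :=
      tendsto_pow_atTop_nhds_zero_of_lt_one (by norm_num) (by norm_num)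
    have := (h0.const_mul C).const_add 1
    simpa using this
  exact tendsto_of_tendsto_of_tendsto_of_le_of_le tendsto_const_nhds hub hlow hup

/-- The infinite product value. -/
noncomputable def Balt : ℝ := ∏' i : ℕ, (1 + (2 : ℝ) ^ (-((i : ℤ) + 1)))

lemma pfun_eq (i : ℕ) : (1 + (2 : ℝ) ^ (-((i : ℤ) + 1))) = 1 + (1/2:ℝ)^(i+1) := by
  have h : (-((i : ℤ) + 1)) = -(((i+1 : ℕ)) : ℤ) := by push_cast; ring
  rw [h, zpow_neg, zpow_natCast, one_div, inv_pow]

lemma summable_log_p : Summable (fun i : ℕ => Real.log (1 + (1/2:ℝ)^(i+1))) := by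
  apply Summable.of_nonneg_of_le
    (fun i => Real.log_nonneg (le_add_of_nonneg_right (by positivity)))
    (fun i => ?_)
    ((summable_geometric_of_lt_one (by norm_num) (by norm_num : (1/2:ℝ) < 1)).comp_injective
      (add_left_injective 1))
  have h := Real.log_le_sub_one_of_pos (show (0:ℝ) < 1 + (1/2:ℝ)^(i+1) by positivity)
  simpa using h

lemma hasProd_p : HasProd (fun i : ℕ => 1 + (1/2:ℝ)^(i+1))
    (Real.exp (∑' i : ℕ, Real.log (1 + (1/2:ℝ)^(i+1)))) := by
  have hs := summable_log_p.hasSum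
  have h := (Real.continuous_exp.tendsto _).comp hs
  unfold HasProd
  convert h using 1
  funext s
  rw [Function.comp_apply, Real.exp_sum]
  exact Finset.prod_congr rfl fun i _ => (Real.exp_log (by positivity)).symm

lemma Balt_eq : Balt = Real.exp (∑' i : ℕ, Real.log (1 + (1/2:ℝ)^(i+1))) := by
  rw [Balt, show (fun i : ℕ => 1 + (2 : ℝ) ^ (-((i : ℤ) + 1)))
      = fun i : ℕ => 1 + (1/2:ℝ)^(i+1) from funext pfun_eq]
  exact hasProd_p.tprod_eq

lemma Balt_pos : 0 < Balt := by rw [Balt_eq]; exact Real.exp_pos _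

lemma hasProd_g : HasProd (fun i : ℕ => 1 + (1/2:ℝ)^i) (2 * Balt) := by
  have h : HasProd (fun i : ℕ => 1 + (1/2:ℝ)^(i+1)) Balt := by
    rw [Balt_eq]; exact hasProd_p
  have h2 := HasProd.zero_mul (f := fun i : ℕ => 1 + (1/2:ℝ)^i) h
  have h3 : ((1:ℝ) + (1/2:ℝ)^(0:ℕ)) * Balt = 2 * Balt := by norm_num
  exact h3 ▸ h2

lemma Fa_one : Fa 1 = 2 * Balt := by
  have hconst : Tendsto (fun _ : ℕ => Fa 1) atTop (𝓝 (Fa 1)) := tendsto_const_nhds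
  have hlim : Tendsto (fun n : ℕ =>
      (∏ i ∈ Finset.range n, (1 + (1/2:ℝ)^i)) * Fa ((1/2)^n)) atTop (𝓝 (2 * Balt * 1)) :=
    (hasProd_g.tendsto_prod_nat).mul Fa_tendsto
  have heq : (fun n : ℕ => (∏ i ∈ Finset.range n, (1 + (1/2:ℝ)^i)) * Fa ((1/2)^n))
      = fun _ : ℕ => Fa 1 := funext fun n => (Fa_prod n).symm
  rw [heq] at hlim
  have h := tendsto_nhds_unique hconst hlim
  rw [h]; ring

lemma Fa_negone : Fa (-1) = 0 := by
  have h := Fa_funeq (z := -1) (by norm_num)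
  simpa using h

lemma zpow_neg_nat (k : ℕ) : (2:ℝ)^(-(k:ℤ)) = ((2:ℝ)^k)⁻¹ := by
  rw [zpow_neg, zpow_natCast]

/-- the distribution `P^Alt_t` is the equilibrium distribution of the
corank Markov chain of random alternating matrices over `𝔽₂`: it is stationary for
the transition probabilities `P_{m → m+2} = x²/2`, `P_{m → m} = x(3 - 5x/2)`,
`P_{m → m-2} = (1-x)(1-2x)` with `x = 2^{-m}`, and it sums to `1`. -/
theorem stmt_15 (t : ℕ) :
    let c : ℝ := (∏' i : ℕ, (1 + (2 : ℝ) ^ (-((i : ℤ) + 1))))⁻¹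
    let P : ℕ → ℝ := fun m =>
      if m % 2 = t % 2 then
        (∏ i ∈ Finset.range m, 2 / ((2 : ℝ) ^ (i + 1) - 1)) * c
      else 0
    let T : ℕ → ℕ → ℝ := fun m m' =>
      if m' = m + 2 then ((2 : ℝ) ^ (-(m : ℤ))) ^ 2 / 2
      else if m' = m then (2 : ℝ) ^ (-(m : ℤ)) * (3 - 5 * (2 : ℝ) ^ (-(m : ℤ)) / 2)
      else if m' + 2 = m then
        (1 - (2 : ℝ) ^ (-(m : ℤ))) * (1 - 2 * (2 : ℝ) ^ (-(m : ℤ)))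
      else 0
    (∀ m' : ℕ, m' % 2 = t % 2 → ∑' m : ℕ, T m m' * P m = P m') ∧
    ∑' m : ℕ, P m = 1 := by
  intro c P T
  have hc : c = Balt⁻¹ := rfl
  have hP : ∀ m, P m = if m % 2 = t % 2 then Qa m * c else 0 := fun _ => rfl
  have hT : ∀ m m', T m m' =
      if m' = m + 2 then ((2 : ℝ) ^ (-(m : ℤ))) ^ 2 / 2
      else if m' = m then (2 : ℝ) ^ (-(m : ℤ)) * (3 - 5 * (2 : ℝ) ^ (-(m : ℤ)) / 2)
      else if m' + 2 = m then
        (1 - (2 : ℝ) ^ (-(m : ℤ))) * (1 - 2 * (2 : ℝ) ^ (-(m : ℤ)))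
      else 0 := fun _ _ => rfl
  constructor
  · intro m' hm'
    match m', hm' with
    | 0, hm' =>
      rw [tsum_eq_sum (s := ({0, 2} : Finset ℕ)) (by
        intro m hm
        simp only [Finset.mem_insert, Finset.mem_singleton] at hm
        push_neg at hm
        rw [hT, if_neg (by omega), if_neg (by omega), if_neg (by omega)]
        ring)]
      rw [Finset.sum_insert (by norm_num), Finset.sum_singleton]
      have hq2 : Qa 2 = 4/3 := by
        show Qa (0+1+1) = 4/3
        rw [Qa_succ, Qa_succ]
        norm_num [Qa]
      have hq0 : Qa 0 = 1 := by norm_num [Qa]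
      have T00 : T 0 0 = 1/2 := by
        rw [hT]; norm_num
      have T20 : T 2 0 = 3/8 := by
        rw [hT]; norm_num [zpow_neg_nat]
      have P0 : P 0 = c := by rw [hP, if_pos hm', hq0, one_mul]
      have P2 : P 2 = 4/3 * c := by
        rw [hP, if_pos (show 2 % 2 = t % 2 by omega), hq2]
      rw [T00, T20, P0, P2]; ring
    | 1, hm' =>
      rw [tsum_eq_sum (s := ({1, 3} : Finset ℕ)) (by
        intro m hm
        simp only [Finset.mem_insert, Finset.mem_singleton] at hm
        push_neg at hm
        rw [hT, if_neg (by omega), if_neg (by omega), if_neg (by omega)]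
        ring)]
      rw [Finset.sum_insert (by norm_num), Finset.sum_singleton]
      have hq1 : Qa 1 = 2 := by
        show Qa (0+1) = 2
        rw [Qa_succ]
        norm_num [Qa]
      have hq3 : Qa 3 = 8/21 := by
        show Qa (0+1+1+1) = 8/21
        rw [Qa_succ, Qa_succ, Qa_succ]
        norm_num [Qa]
      have T11 : T 1 1 = 7/8 := by
        rw [hT]; norm_num [zpow_neg_nat]
      have T31 : T 3 1 = 21/32 := by
        rw [hT]; norm_num [zpow_neg_nat]
      have P1 : P 1 = 2 * c := by
        rw [hP, if_pos hm', hq1]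
      have P3 : P 3 = 8/21 * c := by
        rw [hP, if_pos (show 3 % 2 = t % 2 by omega), hq3]
      rw [T11, T31, P1, P3]; ring
    | (n+2), hm' =>
      rw [tsum_eq_sum (s := ({n, n+2, n+4} : Finset ℕ)) (by
        intro m hm
        simp only [Finset.mem_insert, Finset.mem_singleton] at hm
        push_neg at hm
        have c1 : ¬(n + 2 = m + 2) := by omega
        have c2 : ¬(n + 2 = m) := by omega
        have c3 : ¬(n + 2 + 2 = m) := by omega
        rw [hT, if_neg c1, if_neg c2, if_neg c3]
        ring)]
      rw [Finset.sum_insert (by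
          intro hmem
          simp only [Finset.mem_insert, Finset.mem_singleton] at hmem
          omega),
        Finset.sum_insert (by
          intro hmem
          simp only [Finset.mem_singleton] at hmem
          omega),
        Finset.sum_singleton]
      have Tn : T n (n+2) = ((2:ℝ)^n)⁻¹^2 / 2 := by
        rw [hT, if_pos rfl, zpow_neg_nat]
      have Tm : T (n+2) (n+2)
          = ((2:ℝ)^(n+2))⁻¹ * (3 - 5 * ((2:ℝ)^(n+2))⁻¹ / 2) := by
        rw [hT, if_neg (by omega), if_pos rfl, zpow_neg_nat]
      have Tp : T (n+4) (n+2)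
          = (1 - ((2:ℝ)^(n+4))⁻¹) * (1 - 2 * ((2:ℝ)^(n+4))⁻¹) := by
        rw [hT, if_neg (by omega), if_neg (by omega), if_pos (by omega), zpow_neg_nat]
      have Pn : P n = Qa n * c := by rw [hP, if_pos (by omega : n % 2 = t % 2)]
      have Pm : P (n+2) = Qa (n+2) * c := by rw [hP, if_pos hm']
      have Pp : P (n+4) = Qa (n+4) * c := by
        rw [hP, if_pos (by omega : (n+4) % 2 = t % 2)]
      rw [Tn, Tm, Tp, Pn, Pm, Pp]
      have e2 : Qa (n+2) = Qa n * (2/((2:ℝ)^(n+1)-1)) * (2/((2:ℝ)^(n+1+1)-1)) := by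
        rw [show n+2 = n+1+1 from rfl, Qa_succ, Qa_succ]
      have e4 : Qa (n+4) = Qa (n+2) * (2/((2:ℝ)^(n+2+1)-1)) * (2/((2:ℝ)^(n+2+1+1)-1)) := by
        rw [show n+4 = n+2+1+1 from rfl, Qa_succ, Qa_succ]
      rw [e4, e2]
      have hy : (0:ℝ) < (2:ℝ)^n := by positivity
      have h1 : ((2:ℝ)^(n+1) - 1) ≠ 0 := ne_of_gt (den_pos n)
      have h2 : ((2:ℝ)^(n+1+1) - 1) ≠ 0 := ne_of_gt (den_pos (n+1))
      have h3 : ((2:ℝ)^(n+2+1) - 1) ≠ 0 := ne_of_gt (den_pos (n+2))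
      have h4 : ((2:ℝ)^(n+2+1+1) - 1) ≠ 0 := ne_of_gt (den_pos (n+2+1))
      have h5 : ((2:ℝ)^n) ≠ 0 := ne_of_gt hy
      have h6 : ((2:ℝ)^(n+2)) ≠ 0 := by positivity
      have h7 : ((2:ℝ)^(n+4)) ≠ 0 := by positivity
      field_simp
      ring
  · have S1 : Summable (fun m => Qa m * (1:ℝ)^m) := summable_QaZ (by norm_num)
    have S2 : Summable (fun m => Qa m * (-1:ℝ)^m) := summable_QaZ (by norm_num)
    have key : ∀ m, P m
        = (c/2) * (Qa m * (1:ℝ)^m) + ((-1:ℝ)^t * (c/2)) * (Qa m * (-1:ℝ)^m) := by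
      intro m
      rw [hP]
      by_cases h : m % 2 = t % 2
      · rw [if_pos h]
        have hpar : ((-1:ℝ))^t * (-1:ℝ)^m = 1 := by
          rw [← pow_add]
          apply Even.neg_one_pow
          rw [Nat.even_add, Nat.even_iff, Nat.even_iff]
          omega
        simp only [one_pow]
        linear_combination (-(Qa m * c / 2)) * hpar
      · rw [if_neg h]
        have hpar : ((-1:ℝ))^t * (-1:ℝ)^m = -1 := by
          rw [← pow_add]
          apply Odd.neg_one_pow
          rw [Nat.odd_add, Nat.odd_iff, Nat.even_iff]
          omega
        simp only [one_pow]
        linear_combination (-(Qa m * c / 2)) * hpar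
    rw [tsum_congr key, Summable.tsum_add (S1.mul_left _) (S2.mul_left _), tsum_mul_left, tsum_mul_left]
    have f1 : (∑' m : ℕ, Qa m * (1:ℝ)^m) = 2 * Balt := Fa_one
    have f2 : (∑' m : ℕ, Qa m * (-1:ℝ)^m) = 0 := Fa_negone
    rw [f1, f2, hc]
    have hB := Balt_pos
    field_simp
    ring
end

section
/- Let $I$ be a countable set and $P$ a transition matrix on $\ell^1(I)$ (a bounded linear operator preserving the set of probability distributions) which is irreducible and aperiodic and has an equilibrium distribution $x_\infty$. Suppose $\{x_n\}_{n\geq 0}$ is a sequence of nonnegative elements of $\ell^1(I)$ such that $\|x_n\|_1\to 1$ and $\sum_{n=0}^\infty\|P(x_n)-x_{n+1}\|_1<\infty$. Then $\|x_n-x_\infty\|_1\to 0$ as $n\to\infty$. -/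
open scoped ENNReal
open Filter

set_option linter.unusedSectionVars false

namespace Stmt17

variable {α : Type*}

/-- Kernel composition: `comp k l y x = ∑ z, k y x` path x →(l)→ z →(k)→ y. -/
noncomputable def comp (k l : α → α → ℝ≥0∞) : α → α → ℝ≥0∞ :=
  fun y x => ∑' z, k y z * l z x

/-- Identity kernel. -/
noncomputable def idk [DecidableEq α] : α → α → ℝ≥0∞ := fun y x => if y = x then 1 else 0

/-- Kernel power. -/
noncomputable def kpow [DecidableEq α] (k : α → α → ℝ≥0∞) : ℕ → α → α → ℝ≥0∞
  | 0 => idk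
  | n + 1 => comp k (kpow k n)

/-- Action of a kernel on a measure. -/
noncomputable def app (k : α → α → ℝ≥0∞) (μ : α → ℝ≥0∞) : α → ℝ≥0∞ :=
  fun y => ∑' x, k y x * μ x

/-- Total mass of a measure. -/
noncomputable def mass (μ : α → ℝ≥0∞) : ℝ≥0∞ := ∑' y, μ y

/-- Column mass of a kernel (mass of the image of a Dirac measure). -/
noncomputable def cm (k : α → α → ℝ≥0∞) (x : α) : ℝ≥0∞ := ∑' y, k y x

variable [DecidableEq α]

lemma comp_apply (k l : α → α → ℝ≥0∞) (y x : α) : comp k l y x = ∑' z, k y z * l z x := rfl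

lemma app_idk (μ : α → ℝ≥0∞) : app idk μ = μ := by
  funext y
  have : ∀ x, idk y x * μ x = if x = y then μ x else 0 := by
    intro x
    simp only [idk]
    by_cases h : y = x <;> simp [h, eq_comm]
  simp only [app, this]
  exact tsum_eq_single y (by intro b hb; simp [hb]) |>.trans (by simp)

lemma comp_idk (k : α → α → ℝ≥0∞) : comp k idk = k := by
  funext y x
  have : ∀ z, k y z * idk z x = if z = x then k y z else 0 := by
    intro z; simp only [idk]; by_cases h : z = x <;> simp [h]
  simp only [comp, this]
  exact tsum_eq_single x (by intro b hb; simp [hb]) |>.trans (by simp)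

lemma idk_comp (k : α → α → ℝ≥0∞) : comp idk k = k := by
  funext y x
  have : ∀ z, idk y z * k z x = if z = y then k z x else 0 := by
    intro z; simp only [idk]; by_cases h : y = z <;> simp [h, eq_comm]
  simp only [comp, this]
  exact tsum_eq_single y (by intro b hb; simp [hb]) |>.trans (by simp)

lemma comp_assoc (k l m : α → α → ℝ≥0∞) : comp (comp k l) m = comp k (comp l m) := by
  funext y x
  simp only [comp]
  calc ∑' z, (∑' w, k y w * l w z) * m z x
      = ∑' z, ∑' w, k y w * l w z * m z x := by
        congr 1; funext z; rw [ENNReal.tsum_mul_right]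
    _ = ∑' w, ∑' z, k y w * l w z * m z x := ENNReal.tsum_comm
    _ = ∑' w, k y w * ∑' z, l w z * m z x := by
        congr 1; funext w
        rw [← ENNReal.tsum_mul_left]
        congr 1; funext z; ring

lemma app_comp (k l : α → α → ℝ≥0∞) (μ : α → ℝ≥0∞) :
    app (comp k l) μ = app k (app l μ) := by
  funext y
  simp only [app, comp]
  calc ∑' x, (∑' z, k y z * l z x) * μ x
      = ∑' x, ∑' z, k y z * l z x * μ x := by
        congr 1; funext x; rw [ENNReal.tsum_mul_right]
    _ = ∑' z, ∑' x, k y z * l z x * μ x := ENNReal.tsum_comm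
    _ = ∑' z, k y z * ∑' x, l z x * μ x := by
        congr 1; funext z
        rw [← ENNReal.tsum_mul_left]
        congr 1; funext x; ring

lemma kpow_zero (k : α → α → ℝ≥0∞) : kpow k 0 = idk := rfl
lemma kpow_succ (k : α → α → ℝ≥0∞) (n : ℕ) : kpow k (n + 1) = comp k (kpow k n) := rfl

lemma kpow_one (k : α → α → ℝ≥0∞) : kpow k 1 = k := by
  rw [kpow_succ, kpow_zero, comp_idk]

lemma kpow_add (k : α → α → ℝ≥0∞) (a b : ℕ) :
    kpow k (a + b) = comp (kpow k a) (kpow k b) := by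
  induction a with
  | zero => simp [kpow_zero, idk_comp]
  | succ a ih =>
      have : a + 1 + b = (a + b) + 1 := by omega
      rw [this, kpow_succ, ih, kpow_succ, comp_assoc]

lemma kpow_succ' (k : α → α → ℝ≥0∞) (n : ℕ) : kpow k (n + 1) = comp (kpow k n) k := by
  have := kpow_add k n 1
  rwa [kpow_one] at this

/-- mass of image = sum of column masses. -/
lemma mass_app (k : α → α → ℝ≥0∞) (μ : α → ℝ≥0∞) :
    mass (app k μ) = ∑' x, cm k x * μ x := by
  simp only [mass, app, cm]
  rw [ENNReal.tsum_comm]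
  congr 1; funext x
  rw [ENNReal.tsum_mul_right]

lemma cm_comp (k l : α → α → ℝ≥0∞) (x : α) :
    cm (comp k l) x = ∑' z, cm k z * l z x := by
  simp only [cm, comp]
  rw [ENNReal.tsum_comm]
  congr 1; funext z
  rw [ENNReal.tsum_mul_right]

lemma cm_idk (x : α) : cm idk x = 1 := by
  simp only [cm, idk]
  exact (tsum_eq_single x (by intro b hb; simp [hb])).trans (by simp)

/-- column of a composition as an app of a column -/
lemma col_comp (k l : α → α → ℝ≥0∞) (x : α) :
    (fun y => comp k l y x) = app k (fun z => l z x) := rfl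

section B
variable {I : Type*} [DecidableEq I]

lemma cm_kpow {p : I → I → ℝ≥0∞} (hcm : ∀ x, cm p x = 1) (n : ℕ) (x : I) :
    cm (kpow p n) x = 1 := by
  induction n generalizing x with
  | zero => exact cm_idk x
  | succ n ih =>
      rw [kpow_succ', cm_comp]
      simp only [ih, one_mul]
      exact hcm x

lemma kpow_le_one {p : I → I → ℝ≥0∞} (hcm : ∀ x, cm p x = 1) (n : ℕ) (y x : I) :
    kpow p n y x ≤ 1 := by
  have := ENNReal.le_tsum (f := fun z => kpow p n z x) y
  rw [← cm, cm_kpow hcm] at this; exact this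

variable (P : I → I → ℝ)

/-- The `ℝ≥0∞`-valued kernel associated to `P`. -/
noncomputable def pk : I → I → ℝ≥0∞ := fun i j => ENNReal.ofReal (P i j)

variable {P}
variable (hP0 : ∀ i j, 0 ≤ P i j) (hP1 : ∀ j, HasSum (fun i => P i j) 1)

include hP0 hP1 in
lemma cm_pk (j : I) : cm (pk P) j = 1 := by
  have : (∑' i, P i j) = 1 := (hP1 j).tsum_eq
  rw [cm]
  simp only [pk]
  rw [← ENNReal.ofReal_tsum_of_nonneg (fun i => hP0 i j) (hP1 j).summable, this,
    ENNReal.ofReal_one]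

include hP0 hP1 in
lemma P_le_one (i j : I) : P i j ≤ 1 := le_hasSum (hP1 j) i (fun k _ => hP0 k j)

variable (op : (I → ℝ) → (I → ℝ)) (hop : ∀ x i, op x i = ∑' j, P i j * x j)

include hP0 hP1 hop in
/-- Master bridge between iterates of `op` and kernel powers of `pk P`. -/
lemma op_bridge (x : I → ℝ) (h0 : ∀ i, 0 ≤ x i) (hs : Summable x) (k : ℕ) :
    (∀ i, 0 ≤ op^[k] x i) ∧ Summable (op^[k] x) ∧
      ∀ i, ENNReal.ofReal (op^[k] x i) =
        app (kpow (pk P) k) (fun j => ENNReal.ofReal (x j)) i := by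
  induction k with
  | zero =>
      refine ⟨h0, hs, fun i => ?_⟩
      rw [Function.iterate_zero_apply, kpow_zero, app_idk]
  | succ k ih =>
      obtain ⟨h0y, hsy, heq⟩ := ih
      set y := op^[k] x with hy
      have hxy : ∀ i, op^[k+1] x i = op y i := by
        intro i; rw [Function.iterate_succ_apply']
      -- summability of the integrand
      have hsummand : ∀ i, Summable (fun j => P i j * y j) := by
        intro i
        refine Summable.of_nonneg_of_le (fun j => mul_nonneg (hP0 i j) (h0y j))
          (fun j => ?_) hsy
        calc P i j * y j ≤ 1 * y j :=
              mul_le_mul_of_nonneg_right (P_le_one hP0 hP1 i j) (h0y j)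
          _ = y j := one_mul _
      have h0' : ∀ i, 0 ≤ op y i := by
        intro i
        rw [hop]
        exact tsum_nonneg (fun j => mul_nonneg (hP0 i j) (h0y j))
      have hkey : ∀ i, ENNReal.ofReal (op y i) =
          app (pk P) (fun j => ENNReal.ofReal (y j)) i := by
        intro i
        rw [hop, ENNReal.ofReal_tsum_of_nonneg
          (fun j => mul_nonneg (hP0 i j) (h0y j)) (hsummand i)]
        simp only [app, pk]
        congr 1; funext j
        exact ENNReal.ofReal_mul (hP0 i j)
      have hrw : (fun j => ENNReal.ofReal (y j)) =
          app (kpow (pk P) k) (fun j => ENNReal.ofReal (x j)) := funext heq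
      have hkey2 : ∀ i, ENNReal.ofReal (op y i) =
          app (kpow (pk P) (k+1)) (fun j => ENNReal.ofReal (x j)) i := by
        intro i
        rw [hkey, hrw, kpow_succ, app_comp]
      -- summability
      have hmass : (∑' i, app (pk P) (fun j => ENNReal.ofReal (y j)) i) ≠ ⊤ := by
        have h1 : (∑' i, app (pk P) (fun j => ENNReal.ofReal (y j)) i) =
            mass (fun j => ENNReal.ofReal (y j)) := by
          rw [← mass, mass_app]
          simp only [cm_pk hP0 hP1, one_mul, mass]
        rw [h1, mass, ← ENNReal.ofReal_tsum_of_nonneg h0y hsy]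
        exact ENNReal.ofReal_ne_top
      have hsum' : Summable (op y) := by
        have := ENNReal.summable_toReal hmass
        have hfun : op y = fun i =>
            (app (pk P) (fun j => ENNReal.ofReal (y j)) i).toReal := by
          funext i
          rw [← hkey i, ENNReal.toReal_ofReal (h0' i)]
        rw [hfun]; exact this
      refine ⟨fun i => by rw [hxy]; exact h0' i,
        by rw [show op^[k+1] x = op y from funext hxy]; exact hsum', fun i => ?_⟩
      rw [hxy, hkey2]

include hP0 hP1 hop in
lemma single_bridge (j : I) (k : ℕ) (i : I) :
    ENNReal.ofReal (op^[k] (Pi.single j 1) i) = kpow (pk P) k i j := by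
  have h0 : ∀ a, 0 ≤ (Pi.single j 1 : I → ℝ) a := by
    intro a
    by_cases h : a = j <;> simp [Pi.single_apply, h]
  have hs : Summable (Pi.single j 1 : I → ℝ) := by
    apply summable_of_ne_finset_zero (s := {j})
    intro b hb
    simp only [Finset.mem_singleton] at hb
    simp [Pi.single_apply, hb]
  obtain ⟨-, -, heq⟩ := op_bridge hP0 hP1 op hop (Pi.single j 1) h0 hs k
  rw [heq i]
  have hfn : (fun a => ENNReal.ofReal ((Pi.single j 1 : I → ℝ) a)) = fun a => idk a j := by
    funext a
    rcases eq_or_ne a j with h | h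
    · subst h; simp [idk]
    · simp [Pi.single_apply, h, idk]
  rw [hfn]
  have : app (kpow (pk P) k) (fun a => idk a j) i = comp (kpow (pk P) k) idk i j := rfl
  rw [this, comp_idk]

include hP0 hP1 hop in
lemma pos_bridge (hirr : ∀ i j, ∃ k, 0 < op^[k] (Pi.single j 1) i) (i j : I) :
    ∃ k, 0 < kpow (pk P) k i j := by
  obtain ⟨k, hk⟩ := hirr i j
  exact ⟨k, by rw [← single_bridge hP0 hP1 op hop]; exact ENNReal.ofReal_pos.2 hk⟩

include hP0 hP1 hop in
lemma aper_bridge (haper : ∀ i, ∃ N, ∀ k ≥ N, 0 < op^[k] (Pi.single i 1) i) (i : I) :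
    ∃ N, ∀ k ≥ N, 0 < kpow (pk P) k i i := by
  obtain ⟨N, hN⟩ := haper i
  exact ⟨N, fun k hk => by
    rw [← single_bridge hP0 hP1 op hop]; exact ENNReal.ofReal_pos.2 (hN k hk)⟩

/-- eventual positivity of kernel powers -/
lemma kpow_event_pos {p : I → I → ℝ≥0∞}
    (hirr : ∀ i j, ∃ k, 0 < kpow p k i j)
    (haper : ∀ i, ∃ N, ∀ k ≥ N, 0 < kpow p k i i) (i j : I) :
    ∃ M, ∀ k ≥ M, 0 < kpow p k i j := by
  obtain ⟨k₀, hk₀⟩ := hirr i j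
  obtain ⟨N, hN⟩ := haper i
  refine ⟨N + k₀, fun k hk => ?_⟩
  have hsplit : k = (k - k₀) + k₀ := by omega
  have h1 : 0 < kpow p (k - k₀) i i := hN _ (by omega)
  calc (0:ℝ≥0∞) < kpow p (k - k₀) i i * kpow p k₀ i j := by
        exact ENNReal.mul_pos (ne_of_gt h1) (ne_of_gt hk₀)
    _ ≤ ∑' z, kpow p (k - k₀) i z * kpow p k₀ z j := ENNReal.le_tsum i
    _ = kpow p k i j := by
        conv_rhs => rw [hsplit, kpow_add]
        rfl

variable (xinf : I → ℝ)
variable (hxinf0 : ∀ i, 0 ≤ xinf i) (hxinf1 : HasSum xinf 1) (hxinfeq : op xinf = xinf)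

/-- the equilibrium in `ℝ≥0∞` -/
noncomputable def pihat : I → ℝ≥0∞ := fun i => ENNReal.ofReal (xinf i)

include hxinf0 hxinf1 in
lemma mass_pihat : mass (pihat xinf) = 1 := by
  rw [mass]
  simp only [pihat]
  rw [← ENNReal.ofReal_tsum_of_nonneg hxinf0 hxinf1.summable,
    hxinf1.tsum_eq, ENNReal.ofReal_one]

include hP0 hP1 hop hxinf0 hxinf1 hxinfeq in
lemma app_pihat (n : ℕ) : app (kpow (pk P) n) (pihat xinf) = pihat xinf := by
  induction n with
  | zero => rw [kpow_zero, app_idk]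
  | succ n ih =>
      rw [kpow_succ, app_comp, ih]
      obtain ⟨-, -, heq⟩ :=
        op_bridge hP0 hP1 op hop xinf hxinf0 hxinf1.summable 1
      funext i
      have := heq i
      rw [Function.iterate_one, hxinfeq, kpow_one] at this
      exact this.symm

include hP0 hP1 hop hxinf0 hxinf1 hxinfeq in
lemma pihat_pos (hirr : ∀ i j, ∃ k, 0 < op^[k] (Pi.single j 1) i) (i : I) :
    0 < pihat xinf i := by
  have hmass := mass_pihat xinf hxinf0 hxinf1
  have hex : ∃ j, 0 < pihat xinf j := by
    by_contra h
    push_neg at h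
    have : ∀ j, pihat xinf j = 0 := fun j => le_antisymm (h j) zero_le
    rw [mass] at hmass
    simp only [this, tsum_zero] at hmass
    exact zero_ne_one hmass
  obtain ⟨j, hj⟩ := hex
  obtain ⟨k, hk⟩ := pos_bridge hP0 hP1 op hop hirr i j
  have := app_pihat hP0 hP1 op hop xinf hxinf0 hxinf1 hxinfeq k
  have hge : kpow (pk P) k i j * pihat xinf j ≤ pihat xinf i := by
    conv_rhs => rw [← this]
    exact ENNReal.le_tsum j
  calc (0:ℝ≥0∞) < kpow (pk P) k i j * pihat xinf j :=
        ENNReal.mul_pos (ne_of_gt hk) (ne_of_gt hj)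
    _ ≤ _ := hge

end B
section C
variable {I : Type*} [DecidableEq I]

/-- product tsum in ℝ≥0∞ -/
lemma tsum_prod_mul (f g : I → ℝ≥0∞) :
    ∑' z : I × I, f z.1 * g z.2 = (∑' a, f a) * (∑' b, g b) := by
  rw [ENNReal.tsum_prod']
  calc ∑' a, ∑' b, f a * g b = ∑' a, f a * ∑' b, g b := by
        congr 1; funext a; exact ENNReal.tsum_mul_left
    _ = _ := ENNReal.tsum_mul_right

variable (p : I → I → ℝ≥0∞)

/-- the product (coupled) chain -/
noncomputable def qk : I × I → I × I → ℝ≥0∞ := fun y x => p y.1 x.1 * p y.2 x.2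
/-- the product chain killed on the diagonal -/
noncomputable def sk : I × I → I × I → ℝ≥0∞ := fun y x => if y.1 = y.2 then 0 else qk p y x
/-- the jump-to-diagonal part -/
noncomputable def jkk : I × I → I × I → ℝ≥0∞ := fun y x => if y.1 = y.2 then qk p y x else 0

variable {p}

lemma sk_add_jkk (y x : I × I) : sk p y x + jkk p y x = qk p y x := by
  simp only [sk, jkk]
  by_cases h : y.1 = y.2 <;> simp [h]

lemma sk_le_qk (y x : I × I) : sk p y x ≤ qk p y x := by
  simp only [sk]; split <;> simp

lemma kpow_qk (n : ℕ) (y x : I × I) :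
    kpow (qk p) n y x = kpow p n y.1 x.1 * kpow p n y.2 x.2 := by
  induction n generalizing y x with
  | zero =>
      simp only [kpow_zero, idk, Prod.ext_iff]
      by_cases h1 : y.1 = x.1 <;> by_cases h2 : y.2 = x.2 <;>
        simp [h1, h2, Prod.ext_iff]
  | succ n ih =>
      simp only [kpow_succ, comp]
      calc ∑' z : I × I, qk p y z * kpow (qk p) n z x
          = ∑' z : I × I, (p y.1 z.1 * kpow p n z.1 x.1) * (p y.2 z.2 * kpow p n z.2 x.2) := by
            congr 1; funext z; rw [ih]; simp only [qk]; ring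
        _ = (∑' a, p y.1 a * kpow p n a x.1) * (∑' b, p y.2 b * kpow p n b x.2) :=
            tsum_prod_mul (fun a => p y.1 a * kpow p n a x.1) (fun b => p y.2 b * kpow p n b x.2)
        _ = _ := by simp only [kpow_succ, comp]

lemma cm_qk (hcm : ∀ x, cm p x = 1) (x : I × I) : cm (qk p) x = 1 := by
  rw [cm]
  calc ∑' y : I × I, qk p y x
      = (∑' a, p a x.1) * (∑' b, p b x.2) := tsum_prod_mul (fun a => p a x.1) (fun b => p b x.2)
    _ = 1 := by rw [← cm, ← cm, hcm, hcm, one_mul]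

lemma kpow_sk_le (n : ℕ) (y x : I × I) : kpow (sk p) n y x ≤ kpow (qk p) n y x := by
  induction n generalizing y x with
  | zero => exact le_rfl
  | succ n ih =>
      simp only [kpow_succ, comp]
      exact ENNReal.tsum_le_tsum fun z =>
        mul_le_mul' (sk_le_qk y z) (ih z x)

/-- survival function of the killed chain -/
noncomputable def H (n : ℕ) (x : I × I) : ℝ≥0∞ := cm (kpow (sk p) n) x

variable (hcm : ∀ x, cm p x = 1)

include hcm in
lemma H_le_one (n : ℕ) (x : I × I) : H (p := p) n x ≤ 1 := by
  rw [H, cm]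
  calc ∑' y, kpow (sk p) n y x ≤ ∑' y, kpow (qk p) n y x :=
        ENNReal.tsum_le_tsum fun y => kpow_sk_le n y x
    _ = 1 := cm_kpow (cm_qk hcm) n x

lemma H_zero (x : I × I) : H (p := p) 0 x = 1 := cm_idk x

lemma H_succ (n : ℕ) (x : I × I) :
    H (p := p) (n + 1) x = ∑' z, H (p := p) n z * sk p z x := by
  rw [H, kpow_succ', cm_comp]; rfl

include hcm in
lemma H_antitone_succ (n : ℕ) (x : I × I) : H (p := p) (n+1) x ≤ H (p := p) n x := by
  induction n generalizing x with
  | zero =>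
      rw [H_zero]; exact H_le_one hcm 1 x
  | succ n ih =>
      rw [H_succ, H_succ]
      exact ENNReal.tsum_le_tsum fun z => mul_le_mul_left (ih z) _
include hcm in
lemma H_antitone (x : I × I) : Antitone (fun n => H (p := p) n x) :=
  antitone_nat_of_succ_le fun n => H_antitone_succ hcm n x

lemma H_add (a b : ℕ) (x : I × I) :
    H (p := p) (a + b) x = ∑' z, H (p := p) a z * kpow (sk p) b z x := by
  rw [H, kpow_add, cm_comp]; rfl

variable (ν : I → ℝ≥0∞) (hν1 : mass ν = 1) (hνeq : app p ν = ν) (hνpos : ∀ i, 0 < ν i)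

/-- product equilibrium -/
noncomputable def nu2 : I × I → ℝ≥0∞ := fun y => ν y.1 * ν y.2

include hν1 in
lemma mass_nu2 : mass (nu2 ν) = 1 := by
  rw [mass]
  calc ∑' y : I × I, nu2 ν y = (∑' a, ν a) * (∑' b, ν b) := tsum_prod_mul ν ν
    _ = 1 := by
        have h := hν1
        rw [mass] at h
        rw [h, one_mul]

include hνeq in
lemma app_qk_nu2 : app (qk p) (nu2 ν) = nu2 ν := by
  funext y
  calc app (qk p) (nu2 ν) y
      = ∑' x : I × I, (p y.1 x.1 * ν x.1) * (p y.2 x.2 * ν x.2) := by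
        simp only [app, qk, nu2]; congr 1; funext x; ring
    _ = (∑' a, p y.1 a * ν a) * (∑' b, p y.2 b * ν b) :=
        tsum_prod_mul (fun a => p y.1 a * ν a) (fun b => p y.2 b * ν b)
    _ = ν y.1 * ν y.2 := by
        have h1 : app p ν y.1 = ν y.1 := by rw [hνeq]
        have h2 : app p ν y.2 = ν y.2 := by rw [hνeq]
        rw [← h1, ← h2]; rfl
    _ = nu2 ν y := rfl

include hνeq in
lemma app_sk_nu2 :
    app (sk p) (nu2 ν) = fun y => if y.1 = y.2 then 0 else nu2 ν y := by
  funext y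
  by_cases h : y.1 = y.2
  · simp only [app, sk, h, if_true, zero_mul, tsum_zero]
  · have : ∀ x, sk p y x * nu2 ν x = qk p y x * nu2 ν x := by
      intro x; simp only [sk, h, if_false]
    simp only [app, this, h, if_false]
    have := congrFun (app_qk_nu2 ν hνeq) y
    exact this
/-- mass remaining after `n` steps of the killed chain, started from the equilibrium -/
noncomputable def Aseq (n : ℕ) : ℝ≥0∞ := ∑' x : I × I, H (p := p) n x * nu2 ν x
/-- mass absorbed into the diagonal at step `n+1` -/
noncomputable def Dseq (n : ℕ) : ℝ≥0∞ :=
  ∑' x : I × I, (if x.1 = x.2 then H (p := p) n x * nu2 ν x else 0)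

include hcm hν1 in
lemma Aseq_le_one (n : ℕ) : Aseq (p := p) ν n ≤ 1 := by
  calc Aseq (p := p) ν n ≤ ∑' x : I × I, 1 * nu2 ν x :=
        ENNReal.tsum_le_tsum fun x => mul_le_mul_left (H_le_one hcm n x) _
    _ = 1 := by
        simp only [one_mul]
        exact mass_nu2 ν hν1

include hνeq in
lemma Aseq_succ (n : ℕ) :
    Aseq (p := p) ν (n + 1) + Dseq (p := p) ν n = Aseq (p := p) ν n := by
  have key : Aseq (p := p) ν (n + 1) =
      ∑' x : I × I, (if x.1 = x.2 then 0 else H (p := p) n x * nu2 ν x) := by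
    have h1 : Aseq (p := p) ν (n+1) = mass (app (kpow (sk p) (n+1)) (nu2 ν)) := by
      rw [mass_app]; rfl
    rw [h1, kpow_succ', app_comp, app_sk_nu2 ν hνeq, mass_app]
    congr 1; funext x
    by_cases h : x.1 = x.2 <;> simp [h, H]
  rw [key, Dseq, ← ENNReal.tsum_add]
  congr 1; funext x
  by_cases h : x.1 = x.2 <;> simp [h]

include hcm hν1 hνeq in
lemma Dseq_partial (N : ℕ) :
    (∑ n ∈ Finset.range N, Dseq (p := p) ν n) + Aseq (p := p) ν N = Aseq (p := p) ν 0 := by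
  induction N with
  | zero => simp
  | succ N ih =>
      rw [Finset.sum_range_succ, ← ih]
      have := Aseq_succ (p := p) ν hνeq N
      calc (∑ n ∈ Finset.range N, Dseq (p := p) ν n) + Dseq (p := p) ν N
            + Aseq (p := p) ν (N + 1)
          = (∑ n ∈ Finset.range N, Dseq (p := p) ν n)
            + (Aseq (p := p) ν (N + 1) + Dseq (p := p) ν N) := by ring
        _ = _ := by rw [this]

include hcm hν1 hνeq in
lemma Dseq_tsum_le_one : ∑' n, Dseq (p := p) ν n ≤ 1 := by
  rw [ENNReal.tsum_eq_iSup_nat]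
  refine iSup_le fun N => ?_
  calc ∑ n ∈ Finset.range N, Dseq (p := p) ν n
      ≤ (∑ n ∈ Finset.range N, Dseq (p := p) ν n) + Aseq (p := p) ν N := le_self_add
    _ = Aseq (p := p) ν 0 := Dseq_partial hcm ν hν1 hνeq N
    _ ≤ 1 := Aseq_le_one hcm ν hν1 0

include hcm hν1 hνeq hνpos in
lemma iInf_H_diag (d : I × I) (hd : d.1 = d.2) : ⨅ n, H (p := p) n d = 0 := by
  by_contra hc
  have hpos : 0 < ⨅ n, H (p := p) n d := pos_iff_ne_zero.2 hc
  have hub : ∀ n, Dseq (p := p) ν n ≥ H (p := p) n d * nu2 ν d := by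
    intro n
    have := ENNReal.le_tsum
      (f := fun x : I × I => if x.1 = x.2 then H (p := p) n x * nu2 ν x else 0) d
    simpa [hd, Dseq] using this
  have h1 : ∑' n, H (p := p) n d * nu2 ν d ≤ 1 :=
    le_trans (ENNReal.tsum_le_tsum hub) (Dseq_tsum_le_one hcm ν hν1 hνeq)
  rw [ENNReal.tsum_mul_right] at h1
  have hnu : nu2 ν d ≠ 0 := by
    have := ENNReal.mul_pos (ne_of_gt (hνpos d.1)) (ne_of_gt (hνpos d.2))
    exact ne_of_gt this
  have htop : (∑' n, H (p := p) n d) = ⊤ := by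
    refine top_unique ?_
    calc (⊤ : ℝ≥0∞) = ∑' _ : ℕ, ⨅ m, H (p := p) m d :=
          (ENNReal.tsum_const_eq_top_of_ne_zero hc).symm
      _ ≤ ∑' n, H (p := p) n d := ENNReal.tsum_le_tsum fun n => iInf_le _ n
  rw [htop, ENNReal.top_mul hnu] at h1
  exact absurd h1 (by simp)

/-- loop erasure: a positive path of `qk` from the diagonal to an off-diagonal point
yields a positive killed-chain path from some diagonal point. -/
lemma loop_erase (k : ℕ) :
    ∀ x d : I × I, x.1 ≠ x.2 → d.1 = d.2 → 0 < kpow (qk p) k x d →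
    ∃ b, ∃ d' : I × I, d'.1 = d'.2 ∧ 0 < kpow (sk p) b x d' := by
  induction k with
  | zero =>
      intro x d hx hd hpos
      rw [kpow_zero, idk] at hpos
      split at hpos
      · rename_i h; rw [h] at hx; exact absurd hd hx
      · exact absurd hpos (by simp)
  | succ k ih =>
      intro x d hx hd hpos
      rw [kpow_succ, comp] at hpos
      have hex : ∃ z, 0 < qk p x z * kpow (qk p) k z d := by
        by_contra hco
        push_neg at hco
        have : ∀ z, qk p x z * kpow (qk p) k z d = 0 := fun z =>
          le_antisymm (hco z) zero_le
        simp only [this, tsum_zero] at hpos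
        exact absurd hpos (by simp)
      obtain ⟨z, hz⟩ := hex
      have hq : 0 < qk p x z := pos_iff_ne_zero.2 fun h => by simp [h] at hz
      have hk : 0 < kpow (qk p) k z d := pos_iff_ne_zero.2 fun h => by simp [h] at hz
      by_cases hzd : z.1 = z.2
      · refine ⟨1, z, hzd, ?_⟩
        rw [kpow_one]
        simp only [sk, hx, if_false]
        exact hq
      · obtain ⟨b, d', hd', hb⟩ := ih z d hzd hd hk
        refine ⟨b + 1, d', hd', ?_⟩
        rw [kpow_succ, comp]
        calc (0:ℝ≥0∞) < sk p x z * kpow (sk p) b z d' := by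
              refine ENNReal.mul_pos ?_ (ne_of_gt hb)
              simp only [sk, hx, if_false]
              exact ne_of_gt hq
          _ ≤ _ := ENNReal.le_tsum z

include hcm hν1 hνeq hνpos in
lemma iInf_H_eq_zero
    (hev : ∀ i j : I, ∃ M, ∀ k ≥ M, 0 < kpow p k i j) (x : I × I) :
    ⨅ n, H (p := p) n x = 0 := by
  by_cases hx : x.1 = x.2
  · exact iInf_H_diag hcm ν hν1 hνeq hνpos x hx
  · -- irreducibility of the product chain towards x from the diagonal point (x.1, x.1)
    set d : I × I := (x.1, x.1) with hdd
    obtain ⟨M1, hM1⟩ := hev x.1 x.1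
    obtain ⟨M2, hM2⟩ := hev x.2 x.1
    set k := max M1 M2 with hk
    have hqpos : 0 < kpow (qk p) k x d := by
      rw [kpow_qk]
      exact ENNReal.mul_pos (ne_of_gt (hM1 k (le_max_left _ _)))
        (ne_of_gt (hM2 k (le_max_right _ _)))
    obtain ⟨b, d', hd', hb⟩ := loop_erase k x d hx rfl hqpos
    have hdiag := iInf_H_diag hcm ν hν1 hνeq hνpos d' hd'
    -- propagation
    have hfin : kpow (sk p) b x d' ≠ ⊤ := by
      refine ne_top_of_le_ne_top (by simp : (1:ℝ≥0∞) ≠ ⊤) ?_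
      calc kpow (sk p) b x d' ≤ kpow (qk p) b x d' := kpow_sk_le b x d'
        _ ≤ 1 := kpow_le_one (cm_qk hcm) b x d'
    have hkey : ∀ m, (⨅ n, H (p := p) n x) * kpow (sk p) b x d' ≤ H (p := p) (m + b) d' := by
      intro m
      calc (⨅ n, H (p := p) n x) * kpow (sk p) b x d'
          ≤ H (p := p) m x * kpow (sk p) b x d' := mul_le_mul_left (iInf_le _ m) _
        _ ≤ ∑' z, H (p := p) m z * kpow (sk p) b z d' := ENNReal.le_tsum x
        _ = H (p := p) (m + b) d' := (H_add m b d').symm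
    have hle : (⨅ n, H (p := p) n x) * kpow (sk p) b x d' ≤ 0 := by
      rw [← hdiag]
      refine le_iInf fun m => ?_
      calc (⨅ n, H (p := p) n x) * kpow (sk p) b x d' ≤ H (p := p) (m + b) d' := hkey m
        _ ≤ H (p := p) m d' := H_antitone hcm d' (by omega)
    have := le_antisymm hle zero_le
    rcases mul_eq_zero.1 this with h | h
    · exact h
    · exact absurd h (ne_of_gt hb)

/-! coupling decomposition -/

/-- path decomposition kernel -/
noncomputable def Tk (a k : ℕ) : I × I → I × I → ℝ≥0∞ :=
  comp (kpow (qk p) a) (comp (jkk p) (kpow (sk p) k))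

lemma comp_add_left (k l1 l2 : I × I → I × I → ℝ≥0∞) (y x : I × I) :
    comp k (fun y x => l1 y x + l2 y x) y x = comp k l1 y x + comp k l2 y x := by
  simp only [comp, mul_add]
  exact ENNReal.tsum_add

lemma comp_sum_right {n : ℕ} (f : ℕ → I × I → I × I → ℝ≥0∞) (m : I × I → I × I → ℝ≥0∞)
    (y x : I × I) :
    comp (fun y x => ∑ k ∈ Finset.range n, f k y x) m y x =
      ∑ k ∈ Finset.range n, comp (f k) m y x := by
  simp only [comp, Finset.sum_mul]
  exact Summable.tsum_finsetSum (fun i _ => ENNReal.summable)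

lemma comp_add_right (k l m : I × I → I × I → ℝ≥0∞) (y x : I × I) :
    comp (fun y x => k y x + l y x) m y x = comp k m y x + comp l m y x := by
  simp only [comp, add_mul]
  exact ENNReal.tsum_add

/-- first-hitting decomposition of the product chain. -/
lemma qdecomp (n : ℕ) (y x : I × I) :
    kpow (qk p) n y x =
      kpow (sk p) n y x + ∑ k ∈ Finset.range n, Tk (p := p) (n - 1 - k) k y x := by
  induction n generalizing y x with
  | zero =>
      simp only [Finset.range_zero, Finset.sum_empty, add_zero]
      rfl
  | succ n ih =>
      have hq : kpow (qk p) (n+1) y x =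
          comp (kpow (qk p) n) (sk p) y x + comp (kpow (qk p) n) (jkk p) y x := by
        rw [kpow_succ']
        have hsplit : comp (kpow (qk p) n) (qk p) y x =
            comp (kpow (qk p) n) (fun y x => sk p y x + jkk p y x) y x := by
          simp only [comp]
          congr 1; funext z
          rw [← sk_add_jkk]
        rw [hsplit]
        exact comp_add_left _ _ _ y x
      have hqn : kpow (qk p) n = fun y x =>
          kpow (sk p) n y x + ∑ k ∈ Finset.range n, Tk (p := p) (n - 1 - k) k y x := by
        funext y x; exact ih y x
      have hterm1 : comp (kpow (qk p) n) (sk p) y x =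
          kpow (sk p) (n+1) y x + ∑ k ∈ Finset.range n, Tk (p := p) (n - 1 - k) (k+1) y x := by
        conv_lhs => rw [hqn]
        rw [comp_add_right]
        congr 1
        · rw [← kpow_succ']
        · rw [comp_sum_right]
          refine Finset.sum_congr rfl fun k _ => ?_
          simp only [Tk]
          rw [comp_assoc, comp_assoc, ← kpow_succ']
      have hterm2 : comp (kpow (qk p) n) (jkk p) y x = Tk (p := p) n 0 y x := by
        simp only [Tk, kpow_zero, comp_idk]
      rw [hq, hterm1, hterm2]
      rw [Finset.sum_range_succ' (fun k => Tk (p := p) (n + 1 - 1 - k) k y x) n]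
      have e0 : n + 1 - 1 - 0 = n := by omega
      have ek : ∀ k, n + 1 - 1 - (k + 1) = n - 1 - k := by intro k; omega
      simp only [e0, ek]
      ring

/-! marginals -/

noncomputable def m1 (ρ : I × I → ℝ≥0∞) : I → ℝ≥0∞ := fun a => ∑' b, ρ (a, b)
noncomputable def m2 (ρ : I × I → ℝ≥0∞) : I → ℝ≥0∞ := fun b => ∑' a, ρ (a, b)

include hcm in
lemma m1_app_qk (ρ : I × I → ℝ≥0∞) : m1 (app (qk p) ρ) = app p (m1 ρ) := by
  funext a
  simp only [m1, app]
  calc ∑' b, ∑' x : I × I, qk p (a, b) x * ρ x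
      = ∑' x : I × I, ∑' b, qk p (a, b) x * ρ x := ENNReal.tsum_comm
    _ = ∑' x : I × I, p a x.1 * ρ x := by
        congr 1; funext x
        have h1 : ∀ b, qk p (a, b) x * ρ x = p b x.2 * (p a x.1 * ρ x) := by
          intro b; simp only [qk]; ring
        rw [tsum_congr h1, ENNReal.tsum_mul_right, ← cm, hcm, one_mul]
    _ = ∑' a', p a a' * ∑' b', ρ (a', b') := by
        rw [ENNReal.tsum_prod']
        congr 1; funext a'
        show ∑' (b : I), p a a' * ρ (a', b) = p a a' * ∑' (b' : I), ρ (a', b')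
        exact ENNReal.tsum_mul_left

include hcm in
lemma m2_app_qk (ρ : I × I → ℝ≥0∞) : m2 (app (qk p) ρ) = app p (m2 ρ) := by
  funext b
  simp only [m2, app]
  calc ∑' a, ∑' x : I × I, qk p (a, b) x * ρ x
      = ∑' x : I × I, ∑' a, qk p (a, b) x * ρ x := ENNReal.tsum_comm
    _ = ∑' x : I × I, p b x.2 * ρ x := by
        congr 1; funext x
        have h1 : ∀ a, qk p (a, b) x * ρ x = p a x.1 * (p b x.2 * ρ x) := by
          intro a; simp only [qk]; ring
        rw [tsum_congr h1, ENNReal.tsum_mul_right, ← cm, hcm, one_mul]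
    _ = ∑' b', p b b' * ∑' a', ρ (a', b') := by
        rw [ENNReal.tsum_prod', ENNReal.tsum_comm]
        congr 1; funext b'
        show ∑' (a : I), p b b' * ρ (a, b') = p b b' * ∑' (a' : I), ρ (a', b')
        exact ENNReal.tsum_mul_left

include hcm in
lemma m1_app_qpow (n : ℕ) (ρ : I × I → ℝ≥0∞) :
    m1 (app (kpow (qk p) n) ρ) = app (kpow p n) (m1 ρ) := by
  induction n generalizing ρ with
  | zero => rw [kpow_zero, kpow_zero, app_idk, app_idk]
  | succ n ih =>
      rw [kpow_succ, kpow_succ, app_comp, app_comp, m1_app_qk hcm, ih]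

include hcm in
lemma m2_app_qpow (n : ℕ) (ρ : I × I → ℝ≥0∞) :
    m2 (app (kpow (qk p) n) ρ) = app (kpow p n) (m2 ρ) := by
  induction n generalizing ρ with
  | zero => rw [kpow_zero, kpow_zero, app_idk, app_idk]
  | succ n ih =>
      rw [kpow_succ, kpow_succ, app_comp, app_comp, m2_app_qk hcm, ih]

lemma m1_eq_m2_of_diag (ρ : I × I → ℝ≥0∞) (hρ : ∀ y : I × I, y.1 ≠ y.2 → ρ y = 0) :
    m1 ρ = m2 ρ := by
  funext c
  have h1 : m1 ρ c = ρ (c, c) := by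
    simp only [m1]
    refine tsum_eq_single c fun b hb => hρ (c, b) (by simpa using (Ne.symm hb))
  have h2 : m2 ρ c = ρ (c, c) := by
    simp only [m2]
    refine tsum_eq_single c fun a ha => hρ (a, c) (by simpa using ha)
  rw [h1, h2]

include hcm in
/-- the coupled marginal identity -/
lemma couple_eq (n : ℕ) (i j : I) (a : I) :
    kpow p n a i + m2 (fun y => kpow (sk p) n y (i, j)) a =
      kpow p n a j + m1 (fun y => kpow (sk p) n y (i, j)) a := by
  set sncol : I × I → ℝ≥0∞ := fun y => kpow (sk p) n y (i, j) with hsncol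
  set Tcol : ℕ → I × I → ℝ≥0∞ := fun k y => Tk (p := p) (n - 1 - k) k y (i, j) with hTcol
  -- marginals of the free product chain column
  have hm1colq : m1 (fun y => kpow (qk p) n y (i, j)) a = kpow p n a i := by
    simp only [m1, kpow_qk]
    rw [ENNReal.tsum_mul_left, ← cm, cm_kpow hcm, mul_one]
  have hm2colq : m2 (fun y => kpow (qk p) n y (i, j)) a = kpow p n a j := by
    simp only [m2, kpow_qk]
    have : ∀ a', kpow p n a' i * kpow p n a j = kpow p n a j * kpow p n a' i := fun _ => mul_comm _ _
    rw [tsum_congr this, ENNReal.tsum_mul_left, ← cm, cm_kpow hcm, mul_one]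
  -- each Tcol has equal marginals
  have hTeq : ∀ k, m1 (Tcol k) = m2 (Tcol k) := by
    intro k
    have hcol : Tcol k = app (kpow (qk p) (n - 1 - k))
        (fun z => comp (jkk p) (kpow (sk p) k) z (i, j)) := by
      funext y; rfl
    have hdiag : ∀ z : I × I, z.1 ≠ z.2 →
        comp (jkk p) (kpow (sk p) k) z (i, j) = 0 := by
      intro z hz
      simp only [comp, jkk, hz, if_false, zero_mul, tsum_zero]
    rw [hcol, m1_app_qpow hcm, m2_app_qpow hcm,
      m1_eq_m2_of_diag _ hdiag]
  -- decompose marginals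
  have hdec1 : m1 (fun y => kpow (qk p) n y (i, j)) a =
      m1 sncol a + ∑ k ∈ Finset.range n, m1 (Tcol k) a := by
    simp only [m1]
    have : ∀ b, kpow (qk p) n (a, b) (i, j) =
        sncol (a, b) + ∑ k ∈ Finset.range n, Tcol k (a, b) := fun b => qdecomp n (a, b) (i, j)
    rw [tsum_congr this, ENNReal.tsum_add]
    congr 1
    exact Summable.tsum_finsetSum (fun i _ => ENNReal.summable)
  have hdec2 : m2 (fun y => kpow (qk p) n y (i, j)) a =
      m2 sncol a + ∑ k ∈ Finset.range n, m2 (Tcol k) a := by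
    simp only [m2]
    have : ∀ a', kpow (qk p) n (a', a) (i, j) =
        sncol (a', a) + ∑ k ∈ Finset.range n, Tcol k (a', a) := fun a' => qdecomp n (a', a) (i, j)
    rw [tsum_congr this, ENNReal.tsum_add]
    congr 1
    exact Summable.tsum_finsetSum (fun i _ => ENNReal.summable)
  have hsum_eq : ∑ k ∈ Finset.range n, m1 (Tcol k) a = ∑ k ∈ Finset.range n, m2 (Tcol k) a :=
    Finset.sum_congr rfl fun k _ => by rw [hTeq k]
  rw [← hm1colq, ← hm2colq, hdec1, hdec2, hsum_eq]
  ring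

include hcm in
lemma mass_m1_sncol (n : ℕ) (i j : I) :
    ∑' a, m1 (fun y => kpow (sk p) n y (i, j)) a = H (p := p) n (i, j) := by
  simp only [m1]
  rw [← ENNReal.tsum_prod' (f := fun y : I × I => kpow (sk p) n y (i, j))]
  rfl

include hcm in
lemma mass_m2_sncol (n : ℕ) (i j : I) :
    ∑' b, m2 (fun y => kpow (sk p) n y (i, j)) b = H (p := p) n (i, j) := by
  simp only [m2]
  rw [ENNReal.tsum_comm, ← ENNReal.tsum_prod' (f := fun y : I × I => kpow (sk p) n y (i, j))]
  rfl

include hcm in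
lemma coupling_bound (n : ℕ) (i j : I) :
    Summable (fun a => |(kpow p n a i).toReal - (kpow p n a j).toReal|) ∧
    ∑' a, |(kpow p n a i).toReal - (kpow p n a j).toReal| ≤
      2 * (H (p := p) n (i, j)).toReal := by
  set sncol : I × I → ℝ≥0∞ := fun y => kpow (sk p) n y (i, j) with hsncol
  have hH1 : H (p := p) n (i, j) ≤ 1 := H_le_one hcm n (i, j)
  have hHne : H (p := p) n (i, j) ≠ ⊤ := ne_top_of_le_ne_top (by simp) hH1
  have hmass1 : ∑' a, m1 sncol a = H (p := p) n (i, j) := mass_m1_sncol hcm n i j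
  have hmass2 : ∑' b, m2 sncol b = H (p := p) n (i, j) := mass_m2_sncol hcm n i j
  have hfin1 : ∀ a, m1 sncol a ≠ ⊤ := fun a =>
    ne_top_of_le_ne_top (hmass1 ▸ hHne) (ENNReal.le_tsum a)
  have hfin2 : ∀ b, m2 sncol b ≠ ⊤ := fun b =>
    ne_top_of_le_ne_top (hmass2 ▸ hHne) (ENNReal.le_tsum b)
  have hkfin : ∀ (a c : I), kpow p n a c ≠ ⊤ := fun a c =>
    ne_top_of_le_ne_top (by simp) (kpow_le_one hcm n a c)
  set u : I → ℝ := fun a => (kpow p n a i).toReal with hu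
  set v : I → ℝ := fun a => (kpow p n a j).toReal with hv
  set e1 : I → ℝ := fun a => (m1 sncol a).toReal with he1
  set e2 : I → ℝ := fun a => (m2 sncol a).toReal with he2
  have hpt : ∀ a, u a + e2 a = v a + e1 a := by
    intro a
    have h := couple_eq hcm n i j a
    have h1 := congrArg ENNReal.toReal h
    rwa [ENNReal.toReal_add (hkfin a i) (hfin2 a),
      ENNReal.toReal_add (hkfin a j) (hfin1 a)] at h1
  have habs : ∀ a, |u a - v a| ≤ e1 a + e2 a := by
    intro a
    have h := hpt a
    have h1 : (0:ℝ) ≤ e1 a := ENNReal.toReal_nonneg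
    have h2 : (0:ℝ) ≤ e2 a := ENNReal.toReal_nonneg
    rw [abs_le]
    constructor <;> linarith
  have hsum1 : Summable e1 := ENNReal.summable_toReal (hmass1 ▸ hHne)
  have hsum2 : Summable e2 := ENNReal.summable_toReal (hmass2 ▸ hHne)
  have htsum1 : ∑' a, e1 a = (H (p := p) n (i, j)).toReal := by
    rw [he1, ← ENNReal.tsum_toReal_eq hfin1, hmass1]
  have htsum2 : ∑' b, e2 b = (H (p := p) n (i, j)).toReal := by
    rw [he2, ← ENNReal.tsum_toReal_eq hfin2, hmass2]
  have hsummable : Summable (fun a => |u a - v a|) :=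
    Summable.of_nonneg_of_le (fun a => abs_nonneg _) habs (hsum1.add hsum2)
  refine ⟨hsummable, ?_⟩
  calc ∑' a, |u a - v a| ≤ ∑' a, (e1 a + e2 a) :=
        Summable.tsum_le_tsum habs hsummable (hsum1.add hsum2)
    _ = (∑' a, e1 a) + ∑' a, e2 a := Summable.tsum_add hsum1 hsum2
    _ = 2 * (H (p := p) n (i, j)).toReal := by rw [htsum1, htsum2]; ring

include hcm hν1 hνeq hνpos in
lemma dTV_tendsto (hev : ∀ i j : I, ∃ M, ∀ k ≥ M, 0 < kpow p k i j) (i j : I) :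
    Filter.Tendsto (fun n => ∑' a, |(kpow p n a i).toReal - (kpow p n a j).toReal|)
      Filter.atTop (nhds 0) := by
  have hH0 : Filter.Tendsto (fun n => H (p := p) n (i, j)) Filter.atTop (nhds 0) := by
    have h := tendsto_atTop_iInf (H_antitone hcm (i, j))
    rwa [iInf_H_eq_zero hcm ν hν1 hνeq hνpos hev (i, j)] at h
  have hHreal : Filter.Tendsto (fun n => (H (p := p) n (i, j)).toReal)
      Filter.atTop (nhds 0) := by
    have h := (ENNReal.tendsto_toReal (a := 0) (by simp)).comp hH0
    simpa [Function.comp_def] using h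
  refine squeeze_zero (fun n => tsum_nonneg fun a => abs_nonneg _)
    (fun n => (coupling_bound hcm n i j).2) ?_
  have h2 := hHreal.const_mul (2:ℝ)
  simpa using h2

end C

section Swap
variable {α β : Type*}

/-- swap of iterated tsums for nonnegative real functions -/
lemma swap_helper {f : α → β → ℝ} (h0 : ∀ a b, 0 ≤ f a b)
    (hcol : ∀ b, Summable (fun a => f a b))
    (hrow : Summable (fun b => ∑' a, f a b)) :
    Summable (fun a => ∑' b, f a b) ∧
      (∑' a, ∑' b, f a b) = ∑' b, ∑' a, f a b := by
  have hg : Summable (fun z : β × α => f z.2 z.1) :=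
    (summable_prod_of_nonneg (fun z => h0 z.2 z.1)).2 ⟨fun b => hcol b, hrow⟩
  have hf : Summable (Function.uncurry f) := by
    have h := hg.prod_symm
    exact h
  have hmarg : Summable (fun a => ∑' b, f a b) :=
    ((summable_prod_of_nonneg (fun z => h0 z.1 z.2)).1 hf).2
  exact ⟨hmarg, (Summable.tsum_comm hf).symm⟩
end Swap

section E
variable {I : Type*} [DecidableEq I]
variable {P : I → I → ℝ}
variable (hP0 : ∀ i j, 0 ≤ P i j) (hP1 : ∀ j, HasSum (fun i => P i j) 1)
variable (op : (I → ℝ) → (I → ℝ)) (hop : ∀ x i, op x i = ∑' j, P i j * x j)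
variable (xinf : I → ℝ)
variable (hxinf0 : ∀ i, 0 ≤ xinf i) (hxinf1 : HasSum xinf 1) (hxinfeq : op xinf = xinf)

/-- real n-step transition probabilities -/
noncomputable def u (n : ℕ) (a i : I) : ℝ := (kpow (pk P) n a i).toReal

include hP0 hP1 in
lemma u_nonneg (n : ℕ) (a i : I) : 0 ≤ u (P := P) n a i := ENNReal.toReal_nonneg

include hP0 hP1 in
lemma kpow_pk_ne_top (n : ℕ) (a i : I) : kpow (pk P) n a i ≠ ⊤ :=
  ne_top_of_le_ne_top (by simp) (kpow_le_one (cm_pk hP0 hP1) n a i)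

include hP0 hP1 in
lemma u_col_summable (n : ℕ) (i : I) :
    Summable (fun a => u (P := P) n a i) ∧ (∑' a, u (P := P) n a i) = 1 := by
  have hcm : (∑' a, kpow (pk P) n a i) = 1 := cm_kpow (cm_pk hP0 hP1) n i
  have hne : (∑' a, kpow (pk P) n a i) ≠ ⊤ := by rw [hcm]; simp
  refine ⟨ENNReal.summable_toReal hne, ?_⟩
  have h := ENNReal.tsum_toReal_eq (fun a => kpow_pk_ne_top hP0 hP1 n a i)
  simp only [u]
  rw [← h, hcm, ENNReal.toReal_one]

include hP0 hP1 hop hxinf0 hxinf1 hxinfeq in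
lemma stationary_real (n : ℕ) (a : I) :
    Summable (fun j => u (P := P) n a j * xinf j) ∧
      xinf a = ∑' j, u (P := P) n a j * xinf j := by
  have happ := app_pihat hP0 hP1 op hop xinf hxinf0 hxinf1 hxinfeq n
  have ha : (∑' j, kpow (pk P) n a j * ENNReal.ofReal (xinf j)) = pihat xinf a :=
    congrFun happ a
  have hne : (∑' j, kpow (pk P) n a j * ENNReal.ofReal (xinf j)) ≠ ⊤ := by
    rw [ha]; exact ENNReal.ofReal_ne_top
  have hterm : ∀ j, kpow (pk P) n a j * ENNReal.ofReal (xinf j) ≠ ⊤ :=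
    fun j => ENNReal.mul_ne_top (kpow_pk_ne_top hP0 hP1 n a j) ENNReal.ofReal_ne_top
  have heq : ∀ j, (kpow (pk P) n a j * ENNReal.ofReal (xinf j)).toReal =
      u (P := P) n a j * xinf j := by
    intro j
    rw [ENNReal.toReal_mul, ENNReal.toReal_ofReal (hxinf0 j)]
    rfl
  constructor
  · have hs := ENNReal.summable_toReal hne
    exact hs.congr heq
  · have h1 := ENNReal.tsum_toReal_eq hterm
    have h2 : (∑' j, kpow (pk P) n a j * ENNReal.ofReal (xinf j)).toReal = xinf a := by
      rw [ha, pihat, ENNReal.toReal_ofReal (hxinf0 a)]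
    rw [← h2, h1]
    exact tsum_congr heq

/-- total variation distance between two rows -/
noncomputable def dtv (n : ℕ) (i j : I) : ℝ := ∑' a, |u (P := P) n a i - u (P := P) n a j|

include hP0 hP1 in
lemma dtv_summable (n : ℕ) (i j : I) :
    Summable (fun a => |u (P := P) n a i - u (P := P) n a j|) :=
  (coupling_bound (cm_pk hP0 hP1) n i j).1

include hP0 hP1 in
lemma dtv_nonneg (n : ℕ) (i j : I) : 0 ≤ dtv (P := P) n i j :=
  tsum_nonneg fun a => abs_nonneg _

include hP0 hP1 in
lemma dtv_le_two (n : ℕ) (i j : I) : dtv (P := P) n i j ≤ 2 := by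
  obtain ⟨hsi, hti⟩ := u_col_summable hP0 hP1 n i
  obtain ⟨hsj, htj⟩ := u_col_summable hP0 hP1 n j
  calc dtv (P := P) n i j
      ≤ ∑' a, (u (P := P) n a i + u (P := P) n a j) := by
        refine Summable.tsum_le_tsum (fun a => ?_) (dtv_summable hP0 hP1 n i j) (hsi.add hsj)
        have h1 := u_nonneg hP0 hP1 n a i
        have h2 := u_nonneg hP0 hP1 n a j
        rw [abs_le]; constructor <;> linarith
    _ = 2 := by rw [Summable.tsum_add hsi hsj, hti, htj]; norm_num

include hP0 hP1 hop hxinf0 hxinf1 hxinfeq in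
lemma dtv_tendsto_zero
    (hirr : ∀ i j, ∃ k, 0 < op^[k] (Pi.single j 1) i)
    (haper : ∀ i, ∃ N, ∀ k ≥ N, 0 < op^[k] (Pi.single i 1) i) (i j : I) :
    Filter.Tendsto (fun n => dtv (P := P) n i j) Filter.atTop (nhds 0) := by
  have hcm := cm_pk hP0 hP1
  have hev := kpow_event_pos (pos_bridge hP0 hP1 op hop hirr)
    (fun i => aper_bridge hP0 hP1 op hop haper i)
  have hν1 : mass (pihat xinf) = 1 := mass_pihat xinf hxinf0 hxinf1
  have hνeq : app (pk P) (pihat xinf) = pihat xinf := by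
    have h := app_pihat hP0 hP1 op hop xinf hxinf0 hxinf1 hxinfeq 1
    rwa [kpow_one] at h
  have hνpos : ∀ i, 0 < pihat xinf i :=
    pihat_pos hP0 hP1 op hop xinf hxinf0 hxinf1 hxinfeq hirr
  exact dTV_tendsto hcm (pihat xinf) hν1 hνeq hνpos hev i j

/-- distance of a row to the equilibrium -/
noncomputable def dpi (xinf : I → ℝ) (n : ℕ) (i : I) : ℝ :=
  ∑' a, |u (P := P) n a i - xinf a|

include hP0 hP1 hxinf0 hxinf1 in
lemma dpi_summable (n : ℕ) (i : I) :
    Summable (fun a => |u (P := P) n a i - xinf a|) := by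
  obtain ⟨hsi, -⟩ := u_col_summable hP0 hP1 n i
  refine Summable.of_nonneg_of_le (fun a => abs_nonneg _) (fun a => ?_)
    (hsi.add hxinf1.summable)
  have h1 := u_nonneg hP0 hP1 n a i
  have h2 := hxinf0 a
  rw [abs_le]; constructor <;> linarith

include hP0 hP1 hxinf0 hxinf1 in
lemma dpi_nonneg (n : ℕ) (i : I) : 0 ≤ dpi (P := P) xinf n i :=
  tsum_nonneg fun a => abs_nonneg _

include hP0 hP1 hxinf0 hxinf1 in
lemma dpi_le_two (n : ℕ) (i : I) : dpi (P := P) xinf n i ≤ 2 := by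
  obtain ⟨hsi, hti⟩ := u_col_summable hP0 hP1 n i
  calc dpi (P := P) xinf n i
      ≤ ∑' a, (u (P := P) n a i + xinf a) := by
        refine Summable.tsum_le_tsum (fun a => ?_) (dpi_summable hP0 hP1 xinf hxinf0 hxinf1 n i)
          (hsi.add hxinf1.summable)
        have h1 := u_nonneg hP0 hP1 n a i
        have h2 := hxinf0 a
        rw [abs_le]; constructor <;> linarith
    _ = 2 := by rw [Summable.tsum_add hsi hxinf1.summable, hti, hxinf1.tsum_eq]; norm_num

include hP0 hP1 hop hxinf0 hxinf1 hxinfeq in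
lemma dpi_le_mix (n : ℕ) (i : I) :
    dpi (P := P) xinf n i ≤ ∑' j, xinf j * dtv (P := P) n i j := by
  have hS : (∑' j, xinf j) = 1 := hxinf1.tsum_eq
  have habs_s : ∀ a, Summable (fun j => xinf j * |u (P := P) n a i - u (P := P) n a j|) := by
    intro a
    refine Summable.of_nonneg_of_le
      (fun j => mul_nonneg (hxinf0 j) (abs_nonneg _)) (fun j => ?_)
      (hxinf1.summable.mul_left 2)
    have h1 := u_nonneg hP0 hP1 n a i
    have h2 := u_nonneg hP0 hP1 n a j
    have h3 : u (P := P) n a i ≤ 1 := by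
      have := kpow_le_one (cm_pk hP0 hP1) n a i
      exact ENNReal.toReal_le_of_le_ofReal (by norm_num) (by simpa using this)
    have h4 : u (P := P) n a j ≤ 1 := by
      have := kpow_le_one (cm_pk hP0 hP1) n a j
      exact ENNReal.toReal_le_of_le_ofReal (by norm_num) (by simpa using this)
    have h5 : |u (P := P) n a i - u (P := P) n a j| ≤ 2 := by
      rw [abs_le]; constructor <;> linarith
    calc xinf j * |u (P := P) n a i - u (P := P) n a j| ≤ xinf j * 2 :=
          mul_le_mul_of_nonneg_left h5 (hxinf0 j)
      _ = 2 * xinf j := by ring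
  have hpt : ∀ a, |u (P := P) n a i - xinf a| ≤
      ∑' j, xinf j * |u (P := P) n a i - u (P := P) n a j| := by
    intro a
    obtain ⟨hstat_s, hstat⟩ :=
      stationary_real hP0 hP1 op hop xinf hxinf0 hxinf1 hxinfeq n a
    have h1 : Summable (fun j => xinf j * u (P := P) n a i) :=
      hxinf1.summable.mul_right _
    have hconst : u (P := P) n a i = ∑' j, xinf j * u (P := P) n a i := by
      rw [tsum_mul_right, hS, one_mul]
    have hdiff : u (P := P) n a i - xinf a =
        ∑' j, (xinf j * u (P := P) n a i - u (P := P) n a j * xinf j) := by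
      rw [Summable.tsum_sub h1 hstat_s, ← hconst, ← hstat]
    rw [hdiff]
    have hsummand : Summable
        (fun j => ‖xinf j * u (P := P) n a i - u (P := P) n a j * xinf j‖) := by
      refine (habs_s a).congr fun j => ?_
      rw [Real.norm_eq_abs]
      have : xinf j * u (P := P) n a i - u (P := P) n a j * xinf j =
          xinf j * (u (P := P) n a i - u (P := P) n a j) := by ring
      rw [this, abs_mul, abs_of_nonneg (hxinf0 j)]
    calc |∑' j, (xinf j * u (P := P) n a i - u (P := P) n a j * xinf j)|
        ≤ ∑' j, ‖xinf j * u (P := P) n a i - u (P := P) n a j * xinf j‖ :=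
          norm_tsum_le_tsum_norm hsummand
      _ = ∑' j, xinf j * |u (P := P) n a i - u (P := P) n a j| := by
          refine tsum_congr fun j => ?_
          rw [Real.norm_eq_abs]
          have : xinf j * u (P := P) n a i - u (P := P) n a j * xinf j =
              xinf j * (u (P := P) n a i - u (P := P) n a j) := by ring
          rw [this, abs_mul, abs_of_nonneg (hxinf0 j)]
  set f : I → I → ℝ := fun a j => xinf j * |u (P := P) n a i - u (P := P) n a j| with hf
  have hcolf : ∀ j, Summable (fun a => f a j) := fun j =>
    (dtv_summable hP0 hP1 n i j).mul_left (xinf j)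
  have hcoltsum : ∀ j, (∑' a, f a j) = xinf j * dtv (P := P) n i j := fun j =>
    tsum_mul_left
  have hrowf : Summable (fun j => ∑' a, f a j) := by
    refine Summable.of_nonneg_of_le
      (fun j => tsum_nonneg fun a => mul_nonneg (hxinf0 j) (abs_nonneg _))
      (fun j => ?_) (hxinf1.summable.mul_left 2)
    rw [hcoltsum j]
    calc xinf j * dtv (P := P) n i j ≤ xinf j * 2 :=
          mul_le_mul_of_nonneg_left (dtv_le_two hP0 hP1 n i j) (hxinf0 j)
      _ = 2 * xinf j := by ring
  obtain ⟨hmarg, hswap⟩ := swap_helper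
    (f := f) (fun a j => mul_nonneg (hxinf0 j) (abs_nonneg _)) hcolf hrowf
  calc dpi (P := P) xinf n i
      ≤ ∑' a, ∑' j, f a j :=
        Summable.tsum_le_tsum hpt (dpi_summable hP0 hP1 xinf hxinf0 hxinf1 n i) hmarg
    _ = ∑' j, ∑' a, f a j := hswap
    _ = ∑' j, xinf j * dtv (P := P) n i j := tsum_congr hcoltsum

include hP0 hP1 hop hxinf0 hxinf1 hxinfeq in
lemma dpi_tendsto_zero
    (hirr : ∀ i j, ∃ k, 0 < op^[k] (Pi.single j 1) i)
    (haper : ∀ i, ∃ N, ∀ k ≥ N, 0 < op^[k] (Pi.single i 1) i) (i : I) :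
    Filter.Tendsto (fun n => dpi (P := P) xinf n i) Filter.atTop (nhds 0) := by
  have hB : Filter.Tendsto (fun n => ∑' j, xinf j * dtv (P := P) n i j)
      Filter.atTop (nhds 0) := by
    have hlim : ∀ j, Filter.Tendsto (fun n => xinf j * dtv (P := P) n i j)
        Filter.atTop (nhds 0) := by
      intro j
      have := (dtv_tendsto_zero hP0 hP1 op hop xinf hxinf0 hxinf1 hxinfeq
        hirr haper i j).const_mul (xinf j)
      simpa using this
    have hbd : ∀ᶠ n in Filter.atTop, ∀ j,
        ‖xinf j * dtv (P := P) n i j‖ ≤ 2 * xinf j := by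
      refine Filter.Eventually.of_forall fun n j => ?_
      rw [Real.norm_eq_abs, abs_of_nonneg
        (mul_nonneg (hxinf0 j) (dtv_nonneg hP0 hP1 n i j))]
      calc xinf j * dtv (P := P) n i j ≤ xinf j * 2 :=
            mul_le_mul_of_nonneg_left (dtv_le_two hP0 hP1 n i j) (hxinf0 j)
        _ = 2 * xinf j := by ring
    have := tendsto_tsum_of_dominated_convergence
      (f := fun n j => xinf j * dtv (P := P) n i j) (g := fun _ => (0:ℝ))
      (bound := fun j => 2 * xinf j) (hxinf1.summable.mul_left 2) hlim hbd
    simpa [tsum_zero] using this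
  exact squeeze_zero (fun n => dpi_nonneg hP0 hP1 xinf hxinf0 hxinf1 n i)
    (fun n => dpi_le_mix hP0 hP1 op hop xinf hxinf0 hxinf1 hxinfeq n i) hB
end E

section F
variable {I : Type*} [DecidableEq I]
variable {P : I → I → ℝ}
variable (hP0 : ∀ i j, 0 ≤ P i j) (hP1 : ∀ j, HasSum (fun i => P i j) 1)
variable (op : (I → ℝ) → (I → ℝ)) (hop : ∀ x i, op x i = ∑' j, P i j * x j)

include hP0 hP1 in
lemma summand_summable (y : I → ℝ) (hy : Summable y) (i : I) :
    Summable (fun j => P i j * y j) := by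
  refine Summable.of_abs ?_
  refine Summable.of_nonneg_of_le (fun j => abs_nonneg _) (fun j => ?_) hy.abs
  rw [abs_mul, abs_of_nonneg (hP0 i j)]
  calc P i j * |y j| ≤ 1 * |y j| :=
        mul_le_mul_of_nonneg_right (P_le_one hP0 hP1 i j) (abs_nonneg _)
    _ = |y j| := one_mul _

include hP0 hP1 hop in
lemma op_l1 (y : I → ℝ) (hy : Summable y) :
    Summable (op y) ∧ Summable (fun i => |op y i|) ∧
      ∑' i, |op y i| ≤ ∑' i, |y i| := by
  obtain ⟨hz0, hzs, hzeq⟩ := op_bridge hP0 hP1 op hop (fun j => |y j|)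
    (fun j => abs_nonneg _) hy.abs 1
  rw [Function.iterate_one] at hz0 hzs hzeq
  have habs : ∀ i, |op y i| ≤ op (fun j => |y j|) i := by
    intro i
    rw [hop, hop]
    have hsummand : Summable (fun j => ‖P i j * y j‖) := by
      refine Summable.of_nonneg_of_le (fun j => norm_nonneg _) (fun j => ?_) hy.abs
      rw [Real.norm_eq_abs, abs_mul, abs_of_nonneg (hP0 i j)]
      calc P i j * |y j| ≤ 1 * |y j| :=
            mul_le_mul_of_nonneg_right (P_le_one hP0 hP1 i j) (abs_nonneg _)
        _ = |y j| := one_mul _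
    have hnorm := norm_tsum_le_tsum_norm hsummand
    rw [Real.norm_eq_abs] at hnorm
    calc |∑' j, P i j * y j| ≤ ∑' j, ‖P i j * y j‖ := hnorm
      _ = ∑' j, P i j * |y j| := by
          refine tsum_congr fun j => ?_
          rw [Real.norm_eq_abs, abs_mul, abs_of_nonneg (hP0 i j)]
  have hops : Summable (fun i => |op y i|) :=
    Summable.of_nonneg_of_le (fun i => abs_nonneg _) habs hzs
  -- mass of op |y| equals mass of |y|
  have hmass : ∑' i, op (fun j => |y j|) i = ∑' i, |y i| := by
    have h1 : ENNReal.ofReal (∑' i, op (fun j => |y j|) i) =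
        ENNReal.ofReal (∑' i, |y i|) := by
      rw [ENNReal.ofReal_tsum_of_nonneg hz0 hzs,
        ENNReal.ofReal_tsum_of_nonneg (fun i => abs_nonneg _) hy.abs]
      calc ∑' i, ENNReal.ofReal (op (fun j => |y j|) i)
          = ∑' i, app (kpow (pk P) 1) (fun j => ENNReal.ofReal (|y j|)) i :=
            tsum_congr fun i => hzeq i
        _ = ∑' x, cm (kpow (pk P) 1) x * ENNReal.ofReal (|y x|) := by
            rw [← mass_app]; rfl
        _ = ∑' i, ENNReal.ofReal (|y i|) := by
            refine tsum_congr fun i => ?_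
            rw [cm_kpow (cm_pk hP0 hP1), one_mul]
    rwa [ENNReal.ofReal_eq_ofReal_iff (tsum_nonneg hz0)
      (tsum_nonneg fun i => abs_nonneg _)] at h1
  refine ⟨hops.of_abs, hops, ?_⟩
  calc ∑' i, |op y i| ≤ ∑' i, op (fun j => |y j|) i := Summable.tsum_le_tsum habs hops hzs
    _ = ∑' i, |y i| := hmass

include hP0 hP1 hop in
lemma op_sub (y z : I → ℝ) (hy : Summable y) (hz : Summable z) (i : I) :
    op y i - op z i = op (fun j => y j - z j) i := by
  rw [hop, hop, hop, ← Summable.tsum_sub (summand_summable hP0 hP1 y hy i)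
    (summand_summable hP0 hP1 z hz i)]
  exact tsum_congr fun j => by ring

include hP0 hP1 hop in
lemma drift (x : ℕ → I → ℝ) (hx0 : ∀ n i, 0 ≤ x n i) (hxs : ∀ n, Summable (x n))
    (N t : ℕ) :
    Summable (fun i => |x (N + t) i - op^[t] (x N) i|) ∧
      ∑' i, |x (N + t) i - op^[t] (x N) i| ≤
        ∑ n ∈ Finset.range t, ∑' i, |op (x (N + n)) i - x (N + n + 1) i| := by
  induction t with
  | zero =>
      have h : (fun i => |x (N + 0) i - op^[0] (x N) i|) = fun _ => (0:ℝ) := by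
        funext i; simp
      rw [h]
      simp [summable_zero]
  | succ t ih =>
      obtain ⟨ihs, ihle⟩ := ih
      have hxiter : Summable (op^[t] (x N)) :=
        (op_bridge hP0 hP1 op hop (x N) (hx0 N) (hxs N) t).2.1
      have hΔs : Summable (fun j => x (N + t) j - op^[t] (x N) j) :=
        (hxs (N + t)).sub hxiter
      obtain ⟨hopΔ, hopΔa, hopΔle⟩ := op_l1 hP0 hP1 op hop _ hΔs
      have herr_s : Summable (fun i => |op (x (N + t)) i - x (N + t + 1) i|) := by
        have h1 : Summable (op (x (N + t))) := (op_l1 hP0 hP1 op hop _ (hxs (N + t))).1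
        exact (h1.sub (hxs (N + t + 1))).abs
      have hpt : ∀ i, |x (N + t + 1) i - op^[t+1] (x N) i| ≤
          |op (x (N + t)) i - x (N + t + 1) i| +
            |op (fun j => x (N + t) j - op^[t] (x N) j) i| := by
        intro i
        have hiter : op^[t+1] (x N) i = op (op^[t] (x N)) i := by
          rw [Function.iterate_succ_apply']
        have hlin : op (x (N + t)) i - op (op^[t] (x N)) i =
            op (fun j => x (N + t) j - op^[t] (x N) j) i :=
          op_sub hP0 hP1 op hop _ _ (hxs (N + t)) hxiter i
        calc |x (N + t + 1) i - op^[t+1] (x N) i|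
            ≤ |x (N + t + 1) i - op (x (N + t)) i|
              + |op (x (N + t)) i - op^[t+1] (x N) i| :=
              abs_sub_le _ _ _
          _ = |op (x (N + t)) i - x (N + t + 1) i|
              + |op (fun j => x (N + t) j - op^[t] (x N) j) i| := by
              rw [abs_sub_comm, hiter, hlin]
      have hsum : Summable (fun i => |x (N + t + 1) i - op^[t+1] (x N) i|) :=
        Summable.of_nonneg_of_le (fun i => abs_nonneg _) hpt (herr_s.add hopΔa)
      have hle : ∑' i, |x (N + t + 1) i - op^[t+1] (x N) i| ≤
          ∑ n ∈ Finset.range (t+1), ∑' i, |op (x (N + n)) i - x (N + n + 1) i| := by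
        calc ∑' i, |x (N + t + 1) i - op^[t+1] (x N) i|
            ≤ ∑' i, (|op (x (N + t)) i - x (N + t + 1) i|
              + |op (fun j => x (N + t) j - op^[t] (x N) j) i|) :=
              Summable.tsum_le_tsum hpt hsum (herr_s.add hopΔa)
          _ = (∑' i, |op (x (N + t)) i - x (N + t + 1) i|)
              + ∑' i, |op (fun j => x (N + t) j - op^[t] (x N) j) i| :=
              Summable.tsum_add herr_s hopΔa
          _ ≤ (∑' i, |op (x (N + t)) i - x (N + t + 1) i|)
              + ∑' i, |x (N + t) i - op^[t] (x N) i| := by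
              exact add_le_add_right hopΔle _
          _ ≤ (∑' i, |op (x (N + t)) i - x (N + t + 1) i|)
              + ∑ n ∈ Finset.range t, ∑' i, |op (x (N + n)) i - x (N + n + 1) i| :=
              add_le_add_right ihle _
          _ = ∑ n ∈ Finset.range (t+1), ∑' i, |op (x (N + n)) i - x (N + n + 1) i| := by
              rw [Finset.sum_range_succ]
              ring
      exact ⟨hsum, hle⟩
variable (xinf : I → ℝ)
variable (hxinf0 : ∀ i, 0 ≤ xinf i) (hxinf1 : HasSum xinf 1) (hxinfeq : op xinf = xinf)

include hP0 hP1 hop hxinf0 hxinf1 in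
lemma equil_dist (y : I → ℝ) (hy0 : ∀ i, 0 ≤ y i) (hys : Summable y) (t : ℕ) :
    Summable (fun a => |op^[t] y a - xinf a|) ∧
      ∑' a, |op^[t] y a - xinf a| ≤
        (∑' j, y j * dpi (P := P) xinf t j) + |(∑' j, y j) - 1| := by
  obtain ⟨hit0, hits, hiteq⟩ := op_bridge hP0 hP1 op hop y hy0 hys t
  set S : ℝ := ∑' j, y j with hSdef
  have hxinf_le_one : ∀ a, xinf a ≤ 1 := fun a => le_hasSum hxinf1 a fun b _ => hxinf0 b
  have hu_le_one : ∀ a j, u (P := P) t a j ≤ 1 := by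
    intro a j
    have := kpow_le_one (cm_pk hP0 hP1) t a j
    exact ENNReal.toReal_le_of_le_ofReal (by norm_num) (by simpa using this)
  have hrow : ∀ a, Summable (fun j => u (P := P) t a j * y j) ∧
      op^[t] y a = ∑' j, u (P := P) t a j * y j := by
    intro a
    have hne : app (kpow (pk P) t) (fun j => ENNReal.ofReal (y j)) a ≠ ⊤ := by
      rw [← hiteq a]; exact ENNReal.ofReal_ne_top
    have hterm : ∀ j, kpow (pk P) t a j * ENNReal.ofReal (y j) ≠ ⊤ := fun j =>
      ENNReal.mul_ne_top (kpow_pk_ne_top hP0 hP1 t a j) ENNReal.ofReal_ne_top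
    have hconv : ∀ j, (kpow (pk P) t a j * ENNReal.ofReal (y j)).toReal =
        u (P := P) t a j * y j := by
      intro j
      rw [ENNReal.toReal_mul, ENNReal.toReal_ofReal (hy0 j)]
      rfl
    constructor
    · exact (ENNReal.summable_toReal hne).congr hconv
    · have h1 : op^[t] y a = (app (kpow (pk P) t)
          (fun j => ENNReal.ofReal (y j)) a).toReal := by
        rw [← hiteq a, ENNReal.toReal_ofReal (hit0 a)]
      rw [h1]
      have h2 := ENNReal.tsum_toReal_eq hterm
      calc (app (kpow (pk P) t) (fun j => ENNReal.ofReal (y j)) a).toReal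
          = ∑' j, (kpow (pk P) t a j * ENNReal.ofReal (y j)).toReal := h2
        _ = ∑' j, u (P := P) t a j * y j := tsum_congr hconv
  have hpt : ∀ a, |op^[t] y a - xinf a| ≤
      (∑' j, y j * |u (P := P) t a j - xinf a|) + xinf a * |S - 1| := by
    intro a
    obtain ⟨hsum1, hrepr⟩ := hrow a
    have hsum2 : Summable (fun j => xinf a * y j) := hys.mul_left _
    have habs_s : Summable (fun j => ‖(u (P := P) t a j - xinf a) * y j‖) := by
      refine Summable.of_nonneg_of_le (fun j => norm_nonneg _) (fun j => ?_)
        (hys.mul_left 2)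
      rw [Real.norm_eq_abs, abs_mul, abs_of_nonneg (hy0 j)]
      have h1 := u_nonneg hP0 hP1 t a j
      have h2 := hxinf0 a
      have h3 := hu_le_one a j
      have h4 := hxinf_le_one a
      have h5 : |u (P := P) t a j - xinf a| ≤ 2 := by
        rw [abs_le]; constructor <;> linarith
      calc |u (P := P) t a j - xinf a| * y j ≤ 2 * y j :=
            mul_le_mul_of_nonneg_right h5 (hy0 j)
        _ = 2 * y j := rfl
    have hA_s : Summable (fun j => (u (P := P) t a j - xinf a) * y j) := by
      refine (hsum1.sub hsum2).congr fun j => ?_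
      ring
    have hAeq : op^[t] y a - xinf a * S = ∑' j, (u (P := P) t a j - xinf a) * y j := by
      have h1 : (∑' j, (u (P := P) t a j - xinf a) * y j) =
          (∑' j, u (P := P) t a j * y j) - ∑' j, xinf a * y j := by
        rw [← Summable.tsum_sub hsum1 hsum2]
        exact tsum_congr fun j => by ring
      rw [h1, ← hrepr, tsum_mul_left]
    have hdec : op^[t] y a - xinf a =
        (op^[t] y a - xinf a * S) + xinf a * (S - 1) := by ring
    have hAbound : |op^[t] y a - xinf a * S| ≤ ∑' j, y j * |u (P := P) t a j - xinf a| := by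
      rw [hAeq]
      have hnorm := norm_tsum_le_tsum_norm habs_s
      rw [Real.norm_eq_abs] at hnorm
      calc |∑' j, (u (P := P) t a j - xinf a) * y j|
          ≤ ∑' j, ‖(u (P := P) t a j - xinf a) * y j‖ := hnorm
        _ = ∑' j, y j * |u (P := P) t a j - xinf a| := by
            refine tsum_congr fun j => ?_
            rw [Real.norm_eq_abs, abs_mul, abs_of_nonneg (hy0 j)]
            ring
    calc |op^[t] y a - xinf a|
        = |(op^[t] y a - xinf a * S) + xinf a * (S - 1)| := by rw [← hdec]
      _ ≤ |op^[t] y a - xinf a * S| + |xinf a * (S - 1)| := abs_add_le _ _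
      _ ≤ (∑' j, y j * |u (P := P) t a j - xinf a|) + xinf a * |S - 1| := by
          refine add_le_add hAbound ?_
          rw [abs_mul, abs_of_nonneg (hxinf0 a)]
  set f : I → I → ℝ := fun a j => y j * |u (P := P) t a j - xinf a| with hfdef
  have hcolf : ∀ j, Summable (fun a => f a j) := fun j =>
    (dpi_summable hP0 hP1 xinf hxinf0 hxinf1 t j).mul_left (y j)
  have hcoltsum : ∀ j, (∑' a, f a j) = y j * dpi (P := P) xinf t j := fun j =>
    tsum_mul_left
  have hrowf : Summable (fun j => ∑' a, f a j) := by
    refine Summable.of_nonneg_of_le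
      (fun j => tsum_nonneg fun a => mul_nonneg (hy0 j) (abs_nonneg _))
      (fun j => ?_) (hys.mul_left 2)
    rw [hcoltsum j]
    calc y j * dpi (P := P) xinf t j ≤ y j * 2 :=
          mul_le_mul_of_nonneg_left (dpi_le_two hP0 hP1 xinf hxinf0 hxinf1 t j) (hy0 j)
      _ = 2 * y j := by ring
  obtain ⟨hmarg, hswap⟩ := swap_helper (f := f)
    (fun a j => mul_nonneg (hy0 j) (abs_nonneg _)) hcolf hrowf
  have hconst_s : Summable (fun a => xinf a * |S - 1|) := hxinf1.summable.mul_right _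
  have hconst_t : (∑' a, xinf a * |S - 1|) = |S - 1| := by
    rw [tsum_mul_right, hxinf1.tsum_eq, one_mul]
  have hlhs_s : Summable (fun a => |op^[t] y a - xinf a|) :=
    Summable.of_nonneg_of_le (fun a => abs_nonneg _) hpt (hmarg.add hconst_s)
  refine ⟨hlhs_s, ?_⟩
  calc ∑' a, |op^[t] y a - xinf a|
      ≤ ∑' a, ((∑' j, f a j) + xinf a * |S - 1|) :=
        Summable.tsum_le_tsum hpt hlhs_s (hmarg.add hconst_s)
    _ = (∑' a, ∑' j, f a j) + ∑' a, xinf a * |S - 1| := Summable.tsum_add hmarg hconst_s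
    _ = (∑' j, ∑' a, f a j) + |S - 1| := by rw [hswap, hconst_t]
    _ = (∑' j, y j * dpi (P := P) xinf t j) + |S - 1| := by
        rw [tsum_congr hcoltsum]

end F

end Stmt17

open Stmt17

/-- ergodicity for almost-Markov sequences.  If `P` is an irreducible,
aperiodic transition matrix on a countable state space with an equilibrium
distribution `xinf`, and `(x n)` is a sequence of nonnegative summable vectors with
`‖x n‖₁ → 1` and `∑ₙ ‖P(x n) - x (n+1)‖₁ < ∞`, then `‖x n - xinf‖₁ → 0`. -/
theorem stmt_17 {I : Type*} [Countable I] [DecidableEq I]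
    (P : I → I → ℝ) (hP0 : ∀ i j, 0 ≤ P i j)
    (hP1 : ∀ j, HasSum (fun i => P i j) 1)
    (op : (I → ℝ) → (I → ℝ))
    (hop : ∀ x i, op x i = ∑' j, P i j * x j)
    (hirr : ∀ i j, ∃ k, 0 < op^[k] (Pi.single j 1) i)
    (haper : ∀ i, ∃ N, ∀ k ≥ N, 0 < op^[k] (Pi.single i 1) i)
    (xinf : I → ℝ) (hxinf0 : ∀ i, 0 ≤ xinf i) (hxinf1 : HasSum xinf 1)
    (hxinfeq : op xinf = xinf)
    (x : ℕ → I → ℝ) (hx0 : ∀ n i, 0 ≤ x n i) (hxs : ∀ n, Summable (x n))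
    (hxnorm : Filter.Tendsto (fun n => ∑' i, x n i) Filter.atTop (nhds 1))
    (herr : Summable (fun n => ∑' i, |op (x n) i - x (n + 1) i|)) :
    Filter.Tendsto (fun n => ∑' i, |x n i - xinf i|) Filter.atTop (nhds 0) := by
  rw [Metric.tendsto_atTop]
  intro ε hε
  have hε4 : 0 < ε / 4 := by linarith
  -- tail of the error sums
  have htail := tendsto_sum_nat_add (fun n => ∑' i, |op (x n) i - x (n + 1) i|)
  rw [Metric.tendsto_atTop] at htail hxnorm
  obtain ⟨N₁, hN₁⟩ := htail (ε / 4) hε4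
  obtain ⟨N₂, hN₂⟩ := hxnorm (ε / 4) hε4
  set N := max N₁ N₂ with hN
  have hxnormN : |(∑' j, x N j) - 1| < ε / 4 := by
    have := hN₂ N (le_max_right _ _)
    rwa [Real.dist_eq] at this
  have htailN : (∑' n, ∑' i, |op (x (n + N)) i - x (n + N + 1) i|) < ε / 4 := by
    have h := hN₁ N (le_max_left _ _)
    rw [Real.dist_eq, sub_zero] at h
    exact lt_of_le_of_lt (le_abs_self _) h
  -- the mixing term
  have hmix : Filter.Tendsto (fun t => ∑' j, x N j * dpi (P := P) xinf t j)
      Filter.atTop (nhds 0) := by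
    have hlim : ∀ j, Filter.Tendsto (fun t => x N j * dpi (P := P) xinf t j)
        Filter.atTop (nhds 0) := by
      intro j
      have := (dpi_tendsto_zero hP0 hP1 op hop xinf hxinf0 hxinf1 hxinfeq
        hirr haper j).const_mul (x N j)
      simpa using this
    have hbd : ∀ᶠ t in Filter.atTop, ∀ j,
        ‖x N j * dpi (P := P) xinf t j‖ ≤ 2 * x N j := by
      refine Filter.Eventually.of_forall fun t j => ?_
      rw [Real.norm_eq_abs, abs_of_nonneg
        (mul_nonneg (hx0 N j) (dpi_nonneg hP0 hP1 xinf hxinf0 hxinf1 t j))]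
      calc x N j * dpi (P := P) xinf t j ≤ x N j * 2 :=
            mul_le_mul_of_nonneg_left (dpi_le_two hP0 hP1 xinf hxinf0 hxinf1 t j) (hx0 N j)
        _ = 2 * x N j := by ring
    have h := tendsto_tsum_of_dominated_convergence
      (f := fun t j => x N j * dpi (P := P) xinf t j) (g := fun _ => (0:ℝ))
      (bound := fun j => 2 * x N j) ((hxs N).mul_left 2) hlim hbd
    simpa [tsum_zero] using h
  obtain ⟨M₀, hM₀⟩ := Metric.tendsto_atTop.1 hmix (ε / 4) hε4
  refine ⟨N + M₀, fun m hm => ?_⟩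
  set t := m - N with ht
  have hmt : m = N + t := by omega
  have htM : t ≥ M₀ := by omega
  obtain ⟨hd_s, hd_le⟩ := drift hP0 hP1 op hop x hx0 hxs N t
  obtain ⟨he_s, he_le⟩ := equil_dist hP0 hP1 op hop xinf hxinf0 hxinf1
    (x N) (hx0 N) (hxs N) t
  have hpt : ∀ i, |x m i - xinf i| ≤
      |x (N + t) i - op^[t] (x N) i| + |op^[t] (x N) i - xinf i| := by
    intro i
    rw [hmt]
    exact abs_sub_le _ _ _
  have hsum : Summable (fun i => |x m i - xinf i|) :=
    Summable.of_nonneg_of_le (fun i => abs_nonneg _) hpt (hd_s.add he_s)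
  -- bound the partial error sum by the tail
  have hgs : Summable (fun n => ∑' i, |op (x (n + N)) i - x (n + N + 1) i|) :=
    (summable_nat_add_iff N).2 herr
  have hpartial : (∑ n ∈ Finset.range t, ∑' i, |op (x (N + n)) i - x (N + n + 1) i|) ≤
      ∑' n, ∑' i, |op (x (n + N)) i - x (n + N + 1) i| := by
    have hco : ∀ n, (∑' i, |op (x (N + n)) i - x (N + n + 1) i|) =
        (fun n => ∑' i, |op (x (n + N)) i - x (n + N + 1) i|) n := by
      intro n
      simp only [add_comm N n]
    calc (∑ n ∈ Finset.range t, ∑' i, |op (x (N + n)) i - x (N + n + 1) i|)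
        = ∑ n ∈ Finset.range t, (fun n => ∑' i, |op (x (n + N)) i - x (n + N + 1) i|) n :=
          Finset.sum_congr rfl fun n _ => hco n
      _ ≤ _ := Summable.sum_le_tsum _ (fun n _ => tsum_nonneg fun i => abs_nonneg _) hgs
  have hmixbound : (∑' j, x N j * dpi (P := P) xinf t j) < ε / 4 := by
    have h := hM₀ t htM
    rw [Real.dist_eq, sub_zero] at h
    exact lt_of_le_of_lt (le_abs_self _) h
  have hfinal : (∑' i, |x m i - xinf i|) < ε := by
    calc ∑' i, |x m i - xinf i|
        ≤ ∑' i, (|x (N + t) i - op^[t] (x N) i| + |op^[t] (x N) i - xinf i|) :=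
          Summable.tsum_le_tsum hpt hsum (hd_s.add he_s)
      _ = (∑' i, |x (N + t) i - op^[t] (x N) i|) + ∑' i, |op^[t] (x N) i - xinf i| :=
          Summable.tsum_add hd_s he_s
      _ ≤ (∑ n ∈ Finset.range t, ∑' i, |op (x (N + n)) i - x (N + n + 1) i|)
          + ((∑' j, x N j * dpi (P := P) xinf t j) + |(∑' j, x N j) - 1|) :=
          add_le_add hd_le he_le
      _ < ε / 4 + (ε / 4 + ε / 4) := by
          refine add_lt_add_of_le_of_lt (le_trans hpartial (le_of_lt htailN)) ?_
          exact add_lt_add hmixbound hxnormN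
      _ < ε := by linarith
  rw [Real.dist_eq, sub_zero,
    abs_of_nonneg (tsum_nonneg fun i => abs_nonneg (α := ℝ) _)]
  exact hfinal
end

section
/- Let $\Sigma$ be a finite set of size $s$ and for each $k\geq 1$ let $Z'_\Sigma(\omega)=(z'_p(\omega))_{p\in\Sigma}$ be a tuple of $s$ independent uniformly random vectors in $\mathbb{F}_2^{k-1}$. Let $B$ be an $\mathbb{F}_2$-matrix-valued function of $\omega$ of bounded size whose entries are fixed $\mathbb{F}_2$-linear combinations of $0$, $1$, the coordinates-sums $z_d'$, $(z_d')^T$, and products $z_c'(z_d')^T$ for $c,d$ in a fixed index set (a 'low-rank Rédei matrix'), and let $\rho$ be the maximum of $\mathrm{rank}(B(\omega))$ over all $k$ and $\omega$. If $\omega$ is such that the vectors $(z'_p(\omega))_{p\in\Sigma}$ are linearly independent in $\mathbb{F}_2^{k-1}$, then $\mathrm{rank}(B(\omega))=\rho$. -/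
open Matrix

/-- A low-rank Rédei matrix: the block matrix `[[P(v), Q(v)], [R(v), S]]` attached to a
tuple `v = (v₁, …, v_s)` of vectors in `𝔽₂^n`, where `S` is a fixed matrix, the
columns of `Q(v)` are fixed linear combinations of the `vᵢ`, the rows of `R(v)` are
transposes of such linear combinations, and the entries of `P(v)` are fixed linear
combinations of the products `vᵢ vⱼᵀ`. -/
def redeiLow {s t₁ t₂ : ℕ} (p : Fin s → Fin s → ZMod 2)
    (q : Fin t₂ → Fin s → ZMod 2) (r : Fin t₁ → Fin s → ZMod 2)
    (S : Matrix (Fin t₁) (Fin t₂) (ZMod 2))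
    {n : ℕ} (v : Fin s → Fin n → ZMod 2) :
    Matrix (Fin n ⊕ Fin t₁) (Fin n ⊕ Fin t₂) (ZMod 2) :=
  Matrix.of fun x y =>
    match x, y with
    | Sum.inl i, Sum.inl j => ∑ a : Fin s, ∑ b : Fin s, p a b * v a i * v b j
    | Sum.inl i, Sum.inr j => ∑ b : Fin s, q j b * v b i
    | Sum.inr i, Sum.inl j => ∑ b : Fin s, r i b * v b j
    | Sum.inr i, Sum.inr j => S i j

def redeiCore {s t₁ t₂ : ℕ} (p : Fin s → Fin s → ZMod 2)
    (q : Fin t₂ → Fin s → ZMod 2) (r : Fin t₁ → Fin s → ZMod 2)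
    (S : Matrix (Fin t₁) (Fin t₂) (ZMod 2)) :
    Matrix (Fin s ⊕ Fin t₁) (Fin s ⊕ Fin t₂) (ZMod 2) :=
  Matrix.fromBlocks (Matrix.of p) (Matrix.of fun a j => q j a) (Matrix.of r) S

lemma redeiLow_factor {s t₁ t₂ : ℕ} (p : Fin s → Fin s → ZMod 2)
    (q : Fin t₂ → Fin s → ZMod 2) (r : Fin t₁ → Fin s → ZMod 2)
    (S : Matrix (Fin t₁) (Fin t₂) (ZMod 2))
    {n : ℕ} (v : Fin s → Fin n → ZMod 2) :
    redeiLow p q r S v =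
      (Matrix.fromBlocks (Matrix.of v)ᵀ 0 0 1 :
          Matrix (Fin n ⊕ Fin t₁) (Fin s ⊕ Fin t₁) (ZMod 2)) * redeiCore p q r S *
        (Matrix.fromBlocks (Matrix.of v) 0 0 1 :
          Matrix (Fin s ⊕ Fin t₂) (Fin n ⊕ Fin t₂) (ZMod 2)) := by
  rw [redeiCore, Matrix.fromBlocks_multiply, Matrix.fromBlocks_multiply]
  ext x y
  cases x with
  | inl i =>
      cases y with
      | inl j =>
          simp only [redeiLow, Matrix.of_apply, Matrix.fromBlocks_apply₁₁,
            Matrix.add_apply, Matrix.mul_apply, Matrix.zero_apply,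
            Matrix.transpose_apply, Finset.sum_mul, Finset.mul_sum,
            mul_zero, zero_mul, Finset.sum_const_zero, add_zero, zero_add]
          rw [Finset.sum_comm]
          refine Finset.sum_congr rfl fun a _ => Finset.sum_congr rfl fun b _ => ?_
          ring
      | inr j =>
          simp only [redeiLow, Matrix.of_apply, Matrix.fromBlocks_apply₁₂,
            Matrix.add_apply, Matrix.mul_apply, Matrix.one_apply,
            Matrix.zero_apply, Matrix.transpose_apply,
            mul_zero, zero_mul, Finset.sum_const_zero, add_zero, zero_add]
          simp [Finset.mul_sum, Finset.sum_mul, mul_comm]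
  | inr i =>
      cases y with
      | inl j =>
          simp only [redeiLow, Matrix.of_apply, Matrix.fromBlocks_apply₂₁,
            Matrix.add_apply, Matrix.mul_apply, Matrix.one_apply,
            Matrix.zero_apply, mul_zero, zero_mul, Finset.sum_const_zero,
            add_zero, zero_add]
          simp [Finset.mul_sum, Finset.sum_mul, mul_comm]
      | inr j =>
          simp [redeiLow, Matrix.mul_apply]

lemma redeiLow_delta {s t₁ t₂ : ℕ} (p : Fin s → Fin s → ZMod 2)
    (q : Fin t₂ → Fin s → ZMod 2) (r : Fin t₁ → Fin s → ZMod 2)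
    (S : Matrix (Fin t₁) (Fin t₂) (ZMod 2)) :
    redeiLow p q r S (fun a b => if a = b then (1 : ZMod 2) else 0) =
      redeiCore p q r S := by
  ext x y
  cases x with
  | inl i =>
      cases y with
      | inl j => simp [redeiLow, redeiCore, Finset.mul_sum, mul_ite, ite_and]
      | inr j => simp [redeiLow, redeiCore]
  | inr i =>
      cases y with
      | inl j => simp [redeiLow, redeiCore]
      | inr j => simp [redeiLow, redeiCore]

/-- A right inverse for a matrix with linearly independent rows. -/
lemma exists_right_inverse {s n : ℕ} (v : Fin s → Fin n → ZMod 2)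
    (hv : LinearIndependent (ZMod 2) v) :
    ∃ W : Matrix (Fin n) (Fin s) (ZMod 2), Matrix.of v * W = 1 := by
  set V : Matrix (Fin s) (Fin n) (ZMod 2) := Matrix.of v
  have hker : LinearMap.ker (Vᵀ.mulVecLin) = ⊥ := by
    rw [Matrix.ker_mulVecLin_eq_bot_iff]
    intro x hx
    have hz : ∀ a, x a = 0 := by
      refine Fintype.linearIndependent_iff.mp hv x ?_
      funext i
      have hxi := congrFun hx i
      simp only [Matrix.mulVec, dotProduct, Matrix.transpose_apply,
        Matrix.of_apply, Pi.zero_apply] at hxi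
      simp only [Finset.sum_apply, Pi.smul_apply, smul_eq_mul, Pi.zero_apply]
      rw [← hxi]
      exact Finset.sum_congr rfl fun a _ => mul_comm _ _
    funext a; exact hz a
  obtain ⟨g, hg⟩ := (Vᵀ.mulVecLin).exists_leftInverse_of_injective hker
  refine ⟨(LinearMap.toMatrix' g)ᵀ, ?_⟩
  have h1 : LinearMap.toMatrix' g * Vᵀ = 1 := by
    have := congrArg LinearMap.toMatrix' hg
    rwa [LinearMap.toMatrix'_comp, ← Matrix.toLin'_apply', LinearMap.toMatrix'_toLin',
      LinearMap.toMatrix'_id] at this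
  calc V * (LinearMap.toMatrix' g)ᵀ = (LinearMap.toMatrix' g * Vᵀ)ᵀ := by
        rw [Matrix.transpose_mul, Matrix.transpose_transpose]
    _ = 1 := by rw [h1, Matrix.transpose_one]

/-- a low-rank Rédei matrix attains its maximal possible rank `ρ`
(the maximum over all dimensions `n` and all tuples `v`) at every tuple of linearly
independent vectors. -/
theorem stmt_18 (s t₁ t₂ : ℕ) (p : Fin s → Fin s → ZMod 2)
    (q : Fin t₂ → Fin s → ZMod 2) (r : Fin t₁ → Fin s → ZMod 2)
    (S : Matrix (Fin t₁) (Fin t₂) (ZMod 2)) (ρ : ℕ)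
    (hub : ∀ (n : ℕ) (v : Fin s → Fin n → ZMod 2), (redeiLow p q r S v).rank ≤ ρ)
    (hatt : ∃ (n : ℕ) (v : Fin s → Fin n → ZMod 2), (redeiLow p q r S v).rank = ρ)
    {n : ℕ} (v : Fin s → Fin n → ZMod 2) (hv : LinearIndependent (ZMod 2) v) :
    (redeiLow p q r S v).rank = ρ := by
  have hcore : (redeiCore p q r S).rank = ρ := by
    refine le_antisymm ?_ ?_
    · rw [← redeiLow_delta p q r S]
      exact hub s _
    · obtain ⟨m, w, hw⟩ := hatt
      rw [← hw, redeiLow_factor]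
      exact le_trans (Matrix.rank_mul_le_left _ _)
        (Matrix.rank_mul_le_right _ _)
  refine le_antisymm (hub n v) ?_
  obtain ⟨W, hW⟩ := exists_right_inverse v hv
  have hL : Wᵀ * (Matrix.of v)ᵀ = 1 := by
    rw [← Matrix.transpose_mul, hW, Matrix.transpose_one]
  have hEC : Matrix.fromBlocks Wᵀ (0 : Matrix (Fin s) (Fin t₁) (ZMod 2))
      (0 : Matrix (Fin t₁) (Fin n) (ZMod 2)) (1 : Matrix (Fin t₁) (Fin t₁) (ZMod 2)) *
      Matrix.fromBlocks (Matrix.of v)ᵀ (0 : Matrix (Fin n) (Fin t₁) (ZMod 2))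
      (0 : Matrix (Fin t₁) (Fin s) (ZMod 2)) 1 = 1 := by
    rw [Matrix.fromBlocks_multiply]
    simp [hL, Matrix.fromBlocks_one]
  have hDF : Matrix.fromBlocks (Matrix.of v) (0 : Matrix (Fin s) (Fin t₂) (ZMod 2))
      (0 : Matrix (Fin t₂) (Fin n) (ZMod 2)) (1 : Matrix (Fin t₂) (Fin t₂) (ZMod 2)) *
      Matrix.fromBlocks W (0 : Matrix (Fin n) (Fin t₂) (ZMod 2))
      (0 : Matrix (Fin t₂) (Fin s) (ZMod 2)) 1 = 1 := by
    rw [Matrix.fromBlocks_multiply]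
    simp [hW, Matrix.fromBlocks_one]
  have key : Matrix.fromBlocks Wᵀ (0 : Matrix (Fin s) (Fin t₁) (ZMod 2))
      (0 : Matrix (Fin t₁) (Fin n) (ZMod 2)) 1 * redeiLow p q r S v *
      Matrix.fromBlocks W (0 : Matrix (Fin n) (Fin t₂) (ZMod 2))
      (0 : Matrix (Fin t₂) (Fin s) (ZMod 2)) 1 = redeiCore p q r S := by
    rw [redeiLow_factor]
    simp only [← Matrix.mul_assoc]
    rw [hEC, Matrix.one_mul, Matrix.mul_assoc, hDF, Matrix.mul_one]
  calc ρ = (redeiCore p q r S).rank := hcore.symm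
    _ = (Matrix.fromBlocks Wᵀ (0 : Matrix (Fin s) (Fin t₁) (ZMod 2))
          (0 : Matrix (Fin t₁) (Fin n) (ZMod 2)) 1 * redeiLow p q r S v *
          Matrix.fromBlocks W (0 : Matrix (Fin n) (Fin t₂) (ZMod 2))
          (0 : Matrix (Fin t₂) (Fin s) (ZMod 2)) 1).rank := by
        rw [key]
    _ ≤ (redeiLow p q r S v).rank :=
        le_trans (Matrix.rank_mul_le_left _ _) (Matrix.rank_mul_le_right _ _)
end
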